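/- arXiv:1910.12474 — 9 statements merged into one kernel-verified Lean document; each statement's English description precedes it below -/
import Mathlib

section
/- If G is a graph of size m with λ₁² ≥ m, then G contains a triangle, unless G is a blow-up of P₂ ∪ K₁ (i.e., a complete bipartite graph plus isolated vertices). -/
open Matrix Finset

/-- The adjacency matrix of a finite simple graph is Hermitian (over `ℝ`). -/
theorem adjMatrix_isHermitian {V : Type*} [Fintype V] [DecidableEq V]
    (G : SimpleGraph V) [DecidableRel G.Adj] : (G.adjMatrix ℝ).IsHermitian := by
  unfold Matrix.IsHermitian
  rw [Matrix.conjTranspose_eq_transpose_of_trivial]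
  exact G.isSymm_adjMatrix

/-- The eigenvalues of the adjacency matrix of `G`, as a tuple indexed by `Fin (card V)`. -/
noncomputable def adjEig {V : Type*} [Fintype V] [DecidableEq V]
    (G : SimpleGraph V) [DecidableRel G.Adj] : Fin (Fintype.card V) → ℝ :=
  fun i => (adjMatrix_isHermitian G).eigenvalues ((Fintype.equivFin V).symm i)

/-- `kthEig G k` is the `(k+1)`-st largest adjacency eigenvalue of `G`
(so `kthEig G 0 = λ₁`, `kthEig G 1 = λ₂`, ...); it is `0` if `k` is out of range. -/
noncomputable def kthEig {V : Type*} [Fintype V] [DecidableEq V]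
    (G : SimpleGraph V) [DecidableRel G.Adj] (k : ℕ) : ℝ :=
  if h : k < Fintype.card V then
    adjEig G (Tuple.sort (adjEig G) (Fin.rev ⟨k, h⟩))
  else 0


section Aux
variable {V : Type*} [Fintype V] [DecidableEq V] (G : SimpleGraph V) [DecidableRel G.Adj]

lemma sum_adjEigenvalues_eq_zero :
    ∑ i, (adjMatrix_isHermitian G).eigenvalues i = 0 := by
  have hA := adjMatrix_isHermitian G
  have htr : Matrix.trace (G.adjMatrix ℝ) = 0 := by
    simp [Matrix.trace, Matrix.diag]
  have h2 : Matrix.trace (G.adjMatrix ℝ) = ∑ i, hA.eigenvalues i := by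
    conv_lhs => rw [hA.spectral_theorem]
    rw [Unitary.conjStarAlgAut_apply, Matrix.trace_mul_cycle]
    rw [(Matrix.mem_unitaryGroup_iff'.mp (hA.eigenvectorUnitary).2)]
    rw [one_mul, Matrix.trace_diagonal]
    simp
  rw [h2] at htr
  exact htr

lemma eigenvalue_le_kthEig0 (h : 0 < Fintype.card V) (i : V) :
    (adjMatrix_isHermitian G).eigenvalues i ≤ kthEig G 0 := by
  have hmono := Tuple.monotone_sort (adjEig G)
  set σ := Tuple.sort (adjEig G) with hσ
  have h1 : (adjMatrix_isHermitian G).eigenvalues i = adjEig G (Fintype.equivFin V i) := by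
    simp [adjEig]
  rw [h1, kthEig, dif_pos h]
  have h2 : adjEig G (Fintype.equivFin V i)
      = (adjEig G ∘ σ) (σ.symm (Fintype.equivFin V i)) := by simp
  rw [h2]
  apply hmono
  have := (σ.symm (Fintype.equivFin V i)).isLt
  rw [Fin.le_def, Fin.val_rev]
  have h0 : (⟨0, h⟩ : Fin (Fintype.card V)).val = 0 := rfl
  rw [h0]
  omega

lemma kthEig0_nonneg (h : 0 < Fintype.card V) : 0 ≤ kthEig G 0 := by
  have hsum := sum_adjEigenvalues_eq_zero G
  have hle : ∀ i : V, (adjMatrix_isHermitian G).eigenvalues i ≤ kthEig G 0 :=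
    eigenvalue_le_kthEig0 G h
  by_contra hneg
  push_neg at hneg
  have : ∑ i, (adjMatrix_isHermitian G).eigenvalues i < 0 := by
    have hne : (Finset.univ : Finset V).Nonempty := by
      rwa [← Finset.card_pos, Finset.card_univ]
    calc ∑ i, (adjMatrix_isHermitian G).eigenvalues i ≤ ∑ _i : V, kthEig G 0 :=
          Finset.sum_le_sum fun i _ => hle i
      _ = (Fintype.card V : ℝ) * kthEig G 0 := by
          rw [Finset.sum_const, Finset.card_univ, nsmul_eq_mul]
      _ < 0 := by
          apply mul_neg_of_pos_of_neg _ hneg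
          exact_mod_cast h
  rw [hsum] at this
  exact lt_irrefl _ this

lemma kthEig0_is_eigenvalue (h : 0 < Fintype.card V) :
    ∃ j : V, (adjMatrix_isHermitian G).eigenvalues j = kthEig G 0 := by
  refine ⟨(Fintype.equivFin V).symm (Tuple.sort (adjEig G) (Fin.rev ⟨0, h⟩)), ?_⟩
  rw [kthEig, dif_pos h]
  simp [adjEig]

end Aux

/-- If `G` has `m` edges and `λ₁² ≥ m`, then `G` contains a triangle, unless `G`
is a complete bipartite graph together with isolated vertices (a blow-up of
`P₂ ∪ K₁`). -/
theorem stmt_4 {V : Type*} [Fintype V] [DecidableEq V] (G : SimpleGraph V)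
    [DecidableRel G.Adj] (hl : (G.edgeFinset.card : ℝ) ≤ (kthEig G 0) ^ 2) :
    ¬ G.CliqueFree 3 ∨
      ∃ A B : Set V, Disjoint A B ∧
        ∀ u v, G.Adj u v ↔ ((u ∈ A ∧ v ∈ B) ∨ (u ∈ B ∧ v ∈ A)) := by
  classical
  by_cases hcf : G.CliqueFree 3
  case neg => exact Or.inl hcf
  right
  -- dispose of triangles quickly
  have htri : ∀ a b c : V, G.Adj a b → G.Adj a c → G.Adj b c → False := by
    intro a b c h1 h2 h3
    exact hcf _ (SimpleGraph.is3Clique_triple_iff.mpr ⟨h1, h2, h3⟩)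
  by_cases hE : G.edgeFinset = ∅
  · refine ⟨∅, ∅, Set.disjoint_empty _, fun a b => ?_⟩
    simp only [Set.mem_empty_iff_false, and_false, false_and, or_self, iff_false]
    intro hab
    have : s(a, b) ∈ G.edgeFinset := SimpleGraph.mem_edgeFinset.mpr hab
    rw [hE] at this
    exact absurd this (Finset.notMem_empty _)
  -- main case : there is an edge
  obtain ⟨e, he⟩ := Finset.nonempty_iff_ne_empty.mpr hE
  obtain ⟨a0, b0⟩ := e
  have hab0 : G.Adj a0 b0 := SimpleGraph.mem_edgeFinset.mp he
  have hVne : Nonempty V := ⟨a0⟩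
  have hn : 0 < Fintype.card V := Fintype.card_pos
  have hm1 : 1 ≤ G.edgeFinset.card := Finset.card_pos.mpr ⟨_, he⟩
  set lam := kthEig G 0 with hlamdef
  have hA := adjMatrix_isHermitian G
  have hlam0 : 0 ≤ lam := kthEig0_nonneg G hn
  obtain ⟨j₀, hj₀⟩ := kthEig0_is_eigenvalue G hn
  set x : V → ℝ := ⇑(hA.eigenvectorBasis j₀) with hxdef
  have hx0 : x ≠ 0 := by
    intro h
    apply hA.eigenvectorBasis.orthonormal.ne_zero j₀
    ext v
    exact congrFun h v
  have hAx : G.adjMatrix ℝ *ᵥ x = lam • x := by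
    rw [hxdef, hA.mulVec_eigenvectorBasis j₀, hj₀]
  set y : V → ℝ := fun v => |x v| with hydef
  obtain ⟨u, -, hu⟩ := Finset.exists_max_image Finset.univ y Finset.univ_nonempty
  set M := y u with hMdef
  have hM : ∀ v, y v ≤ M := fun v => hu v (Finset.mem_univ v)
  have hM0 : 0 ≤ M := (abs_nonneg _)
  have hMpos : 0 < M := by
    obtain ⟨v, hv⟩ := Function.ne_iff.mp hx0
    exact lt_of_lt_of_le (abs_pos.mpr hv) (hM v)
  -- A y ≥ lam y pointwise
  have hstep : ∀ v, lam * y v ≤ ∑ z ∈ G.neighborFinset v, y z := by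
    intro v
    have h1 : lam * y v = |lam * x v| := by
      rw [abs_mul, abs_of_nonneg hlam0]
    have h2 : lam * x v = (G.adjMatrix ℝ *ᵥ x) v := by
      rw [hAx]; simp
    rw [h1, h2, SimpleGraph.adjMatrix_mulVec_apply]
    exact (Finset.abs_sum_le_sum_abs _ _)
  -- the sigma set of paths of length 2 from w
  set S : V → Finset ((_ : V) × V) :=
    fun w => (G.neighborFinset w).sigma (fun v => G.neighborFinset v) with hSdef
  have hSmem : ∀ w (p : (_ : V) × V), p ∈ S w ↔ G.Adj w p.1 ∧ G.Adj p.1 p.2 := by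
    intro w p
    rw [hSdef, Finset.mem_sigma, SimpleGraph.mem_neighborFinset, SimpleGraph.mem_neighborFinset]
  -- lower bound
  have keylow : ∀ w, lam ^ 2 * y w ≤ ∑ p ∈ S w, y p.2 := by
    intro w
    have e1 : ∑ p ∈ S w, y p.2 = ∑ v ∈ G.neighborFinset w, ∑ z ∈ G.neighborFinset v, y z :=
      Finset.sum_sigma _ _ _
    calc lam ^ 2 * y w = lam * (lam * y w) := by ring
      _ ≤ lam * ∑ v ∈ G.neighborFinset w, y v :=
          mul_le_mul_of_nonneg_left (hstep w) hlam0
      _ = ∑ v ∈ G.neighborFinset w, lam * y v := Finset.mul_sum _ _ _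
      _ ≤ ∑ v ∈ G.neighborFinset w, ∑ z ∈ G.neighborFinset v, y z :=
          Finset.sum_le_sum fun v _ => hstep v
      _ = ∑ p ∈ S w, y p.2 := e1.symm
  -- upper bounds
  have keyhigh : ∀ w, ∑ p ∈ S w, y p.2 ≤ ((S w).card : ℝ) * M := by
    intro w
    calc ∑ p ∈ S w, y p.2 ≤ ∑ _p ∈ S w, M := Finset.sum_le_sum fun p _ => hM p.2
      _ = ((S w).card : ℝ) * M := by rw [Finset.sum_const, nsmul_eq_mul]
  have keyinj : ∀ w, Set.InjOn (fun p : (_ : V) × V => s(p.1, p.2)) (S w) := by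
    intro w p hp q hq hpq
    rw [Finset.mem_coe, hSmem] at hp hq
    simp only [Sym2.eq_iff] at hpq
    rcases hpq with ⟨h1, h2⟩ | ⟨h1, h2⟩
    · cases p; cases q
      simp only at h1 h2
      subst h1; subst h2; rfl
    · exfalso
      by_cases hee : p.1 = q.1
      · -- then p.2 = q.1 = p.1 and Adj p.1 p.2 is a loop
        have hpp := hp.2
        rw [h2, ← hee] at hpp
        exact G.irrefl hpp
      · exact htri w p.1 q.1 hp.1 hq.1 (h2 ▸ hp.2)
  have keycard : ∀ w, (S w).card ≤ G.edgeFinset.card := by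
    intro w
    apply Finset.card_le_card_of_injOn (fun p => s(p.1, p.2)) _ (keyinj w)
    intro p hp
    rw [Finset.mem_coe, hSmem] at hp
    exact SimpleGraph.mem_edgeFinset.mpr hp.2
  -- the equality analysis at any vertex of maximal weight
  have key : ∀ w, y w = M →
      (∀ a b, G.Adj a b → G.Adj w a ∨ G.Adj w b) ∧
      (∀ v z, G.Adj w v → G.Adj v z → y z = M) := by
    intro w hw
    have h1 : lam ^ 2 * M ≤ ∑ p ∈ S w, y p.2 := hw ▸ keylow w
    have h2 : ∑ p ∈ S w, y p.2 ≤ ((S w).card : ℝ) * M := keyhigh w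
    have h3 : ((S w).card : ℝ) * M ≤ (G.edgeFinset.card : ℝ) * M :=
      mul_le_mul_of_nonneg_right (by exact_mod_cast keycard w) hM0
    have h4 : (G.edgeFinset.card : ℝ) * M ≤ lam ^ 2 * M :=
      mul_le_mul_of_nonneg_right hl hM0
    have hsum_eq : ∑ p ∈ S w, y p.2 = ((S w).card : ℝ) * M :=
      le_antisymm h2 (((h3.trans h4).trans h1))
    have hcardR : ((S w).card : ℝ) * M = (G.edgeFinset.card : ℝ) * M :=
      le_antisymm h3 (((h4.trans h1).trans h2))
    have hcard : (S w).card = G.edgeFinset.card := by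
      have := mul_right_cancel₀ (ne_of_gt hMpos) hcardR
      exact_mod_cast this
    constructor
    · -- every edge meets the neighborhood of w
      intro a b hab
      have himg : Finset.image (fun p : (_ : V) × V => s(p.1, p.2)) (S w) = G.edgeFinset := by
        apply Finset.eq_of_subset_of_card_le
        · intro e' he'
          obtain ⟨p, hp, rfl⟩ := Finset.mem_image.mp he'
          rw [hSmem] at hp
          exact SimpleGraph.mem_edgeFinset.mpr hp.2
        · rw [Finset.card_image_of_injOn (keyinj w), hcard]
      have : s(a, b) ∈ Finset.image (fun p : (_ : V) × V => s(p.1, p.2)) (S w) := by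
        rw [himg]; exact SimpleGraph.mem_edgeFinset.mpr hab
      obtain ⟨p, hp, hpe⟩ := Finset.mem_image.mp this
      rw [hSmem] at hp
      simp only [Sym2.eq_iff] at hpe
      rcases hpe with ⟨h1', -⟩ | ⟨h1', -⟩
      · exact Or.inl (h1' ▸ hp.1)
      · exact Or.inr (h1' ▸ hp.1)
    · -- all endpoints of 2-paths from w have maximal weight
      intro v z hwv hvz
      have hzero : ∑ p ∈ S w, (M - y p.2) = 0 := by
        rw [Finset.sum_sub_distrib, Finset.sum_const, hsum_eq, nsmul_eq_mul, sub_self]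
      rw [Finset.sum_eq_zero_iff_of_nonneg (fun p _ => sub_nonneg.mpr (hM p.2))] at hzero
      have hp : (⟨v, z⟩ : (_ : V) × V) ∈ S w := (hSmem w ⟨v, z⟩).mpr ⟨hwv, hvz⟩
      have := hzero _ hp
      simp only at this
      linarith [this]
  -- construct the bipartition
  refine ⟨{w | ∃ v, G.Adj u v ∧ G.Adj v w}, {v | G.Adj u v}, ?_, ?_⟩
  · rw [Set.disjoint_left]
    rintro w ⟨v, huv, hvw⟩ hwB
    by_cases hvw' : v = w
    · exact G.irrefl (hvw' ▸ hvw)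
    · exact htri u v w huv hwB hvw
  · have hAmax : ∀ w, (∃ v, G.Adj u v ∧ G.Adj v w) → y w = M := by
      rintro w ⟨v, h1, h2⟩
      exact (key u rfl).2 v w h1 h2
    have hdisj : ∀ w, (∃ v, G.Adj u v ∧ G.Adj v w) → ¬ G.Adj u w := by
      rintro w ⟨v, huv, hvw⟩ hwB
      by_cases hvw' : v = w
      · exact G.irrefl (hvw' ▸ hvw)
      · exact htri u v w huv hwB hvw
    have main : ∀ a b, (∃ v, G.Adj u v ∧ G.Adj v a) → G.Adj u b → G.Adj a b := by
      rintro a b ⟨v, huv, hva⟩ hb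
      have hya : y a = M := hAmax a ⟨v, huv, hva⟩
      have hka := (key a hya).1
      have hNa : ∀ z, G.Adj a z → G.Adj u z := by
        intro z haz
        rcases (key u rfl).1 a z haz with h | h
        · exact absurd h (hdisj a ⟨v, huv, hva⟩)
        · exact h
      rcases hka u b hb with h | h
      · exact absurd (hNa u h) G.irrefl
      · exact h
    intro a b
    constructor
    · intro hab
      rcases (key u rfl).1 a b hab with h | h
      · exact Or.inr ⟨h, ⟨a, h, hab⟩⟩
      · exact Or.inl ⟨⟨b, h, hab.symm⟩, h⟩
    · rintro (⟨ha, hb⟩ | ⟨ha, hb⟩)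
      · exact main a b ha hb
      · exact (main b a hb ha).symm
end

section
/- Let x, y ∈ ℝⁿ have nonnegative entries arranged in non-increasing order, and suppose y is weakly majorized by x (i.e., for each k, the sum of the k largest entries of y is at most that of x). Then for every real p > 1, the ℓᵖ norm of y is at most the ℓᵖ norm of x, with equality if and only if x = y. -/
open Finset

lemma abel_nonneg : ∀ (n : ℕ) (c d : ℕ → ℝ),
    (∀ i j, i ≤ j → j < n → c j ≤ c i) → (∀ i, i < n → 0 ≤ c i) →
    (∀ k, k ≤ n → 0 ≤ ∑ i ∈ range k, d i) →
    0 ≤ ∑ i ∈ range n, c i * d i := by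
  intro n
  induction n with
  | zero => simp
  | succ n ih =>
    intro c d hmono hpos hD
    have h1 : ∑ i ∈ range (n+1), c i * d i
        = ∑ i ∈ range n, (c i - c n) * d i + c n * ∑ i ∈ range (n+1), d i := by
      rw [Finset.sum_range_succ (f := fun i => c i * d i), Finset.sum_range_succ d,
        mul_add, Finset.mul_sum]
      simp only [sub_mul, Finset.sum_sub_distrib]
      ring
    have hA : 0 ≤ ∑ i ∈ range n, (c i - c n) * d i := by
      apply ih
      · intro i j hij hjn
        have := hmono i j hij (hjn.trans (Nat.lt_succ_self n))
        linarith
      · intro i hi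
        have := hmono i n (le_of_lt hi) (Nat.lt_succ_self n)
        linarith
      · intro k hk; exact hD k (hk.trans (Nat.le_succ n))
    have hB : 0 ≤ c n * ∑ i ∈ range (n+1), d i :=
      mul_nonneg (hpos n (Nat.lt_succ_self n)) (hD (n+1) le_rfl)
    linarith

lemma tangent {a b p : ℝ} (ha : 0 ≤ a) (hb : 0 ≤ b) (hp : 1 < p) (hab : a ≠ b) :
    b ^ p + p * b ^ (p-1) * (a - b) < a ^ p := by
  have hp0 : 0 < p := lt_trans one_pos hp
  rcases eq_or_lt_of_le hb with rfl | hb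
  · rw [Real.zero_rpow hp0.ne', Real.zero_rpow (by linarith : p - 1 ≠ 0)]
    simp only [mul_zero, zero_mul, add_zero, zero_add]
    exact Real.rpow_pos_of_pos (lt_of_le_of_ne ha (Ne.symm hab)) p
  · have hs : -1 ≤ a / b - 1 := by
      have : 0 ≤ a / b := div_nonneg ha hb.le
      linarith
    have hs' : a / b - 1 ≠ 0 := by
      intro h
      apply hab
      have : a / b = 1 := by linarith
      field_simp at this
      linarith
    have key := one_add_mul_self_lt_rpow_one_add hs hs' hp
    have h1 : (1 + (a / b - 1)) = a / b := by ring
    rw [h1] at key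
    have hbp : 0 < b ^ p := Real.rpow_pos_of_pos hb p
    have h2 : (a / b) ^ p = a ^ p / b ^ p := Real.div_rpow ha hb.le p
    rw [h2] at key
    have h3 : b ^ p + p * b ^ (p-1) * (a - b) < b ^ p * (a ^ p / b ^ p) := by
      have h4 : b ^ (p - 1) = b ^ p / b := by
        rw [Real.rpow_sub hb, Real.rpow_one]
      calc b ^ p + p * b ^ (p-1) * (a - b)
          = b ^ p * (1 + p * (a / b - 1)) := by
            rw [h4]; field_simp
        _ < b ^ p * (a ^ p / b ^ p) := by
            exact (mul_lt_mul_iff_right₀ hbp).mpr key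
    calc b ^ p + p * b ^ (p-1) * (a - b) < b ^ p * (a ^ p / b ^ p) := h3
      _ = a ^ p := by field_simp

lemma tangent_le {a b p : ℝ} (ha : 0 ≤ a) (hb : 0 ≤ b) (hp : 1 < p) :
    b ^ p + p * b ^ (p-1) * (a - b) ≤ a ^ p := by
  rcases eq_or_ne a b with rfl | h
  · simp
  · exact (tangent ha hb hp h).le

lemma filter_sum_eq {n : ℕ} (f : Fin n → ℝ) (k : ℕ) :
    ∑ i ∈ univ.filter (fun i : Fin n => i.val < k), f i
      = ∑ i ∈ range k, (if h : i < n then f ⟨i, h⟩ else 0) := by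
  set F : ℕ → ℝ := fun i => if h : i < n then f ⟨i, h⟩ else 0 with hF
  have h1 : ∑ i ∈ univ.filter (fun i : Fin n => i.val < k), f i
      = ∑ i ∈ range n, (if i < k then F i else 0) := by
    rw [Finset.sum_filter, ← Fin.sum_univ_eq_sum_range (fun i => if i < k then F i else 0) n]
    apply Finset.sum_congr rfl
    intro i _
    simp [hF, i.isLt]
  have h2 : ∑ i ∈ range n, (if i < k then F i else 0)
      = ∑ i ∈ range (n ⊔ k), (if i < k then F i else 0) := by
    apply Finset.sum_subset (Finset.range_subset_range.2 le_sup_left)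
    intro i _ hi
    rw [Finset.mem_range, not_lt] at hi
    have : F i = 0 := dif_neg (by omega)
    simp [this]
  have h3 : ∑ i ∈ range k, F i
      = ∑ i ∈ range (n ⊔ k), (if i < k then F i else 0) := by
    rw [← Finset.sum_subset (Finset.range_subset_range.2 le_sup_right)
      (fun i _ hi => if_neg (by simpa using hi))]
    apply Finset.sum_congr rfl
    intro i hi
    rw [Finset.mem_range] at hi
    simp [hi]
  rw [h1, h2, ← h3]


/-- If `x, y ∈ ℝⁿ` have nonnegative entries arranged in non-increasing order and
`y` is weakly majorized by `x`, then `‖y‖_p ≤ ‖x‖_p` for every real `p > 1`, with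
equality iff `x = y`. -/
theorem stmt_5 {n : ℕ} (x y : Fin n → ℝ)
    (hx0 : ∀ i, 0 ≤ x i) (hy0 : ∀ i, 0 ≤ y i)
    (hx : ∀ i j : Fin n, i ≤ j → x j ≤ x i)
    (hy : ∀ i j : Fin n, i ≤ j → y j ≤ y i)
    (hmaj : ∀ k : ℕ, ∑ i ∈ univ.filter (fun i : Fin n => i.val < k), y i ≤
      ∑ i ∈ univ.filter (fun i : Fin n => i.val < k), x i)
    (p : ℝ) (hp : 1 < p) :
    (∑ i, y i ^ p) ^ (1 / p) ≤ (∑ i, x i ^ p) ^ (1 / p) ∧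
      ((∑ i, y i ^ p) ^ (1 / p) = (∑ i, x i ^ p) ^ (1 / p) ↔ x = y) := by
  set xe : ℕ → ℝ := fun i => if h : i < n then x ⟨i, h⟩ else 0 with hxe
  set ye : ℕ → ℝ := fun i => if h : i < n then y ⟨i, h⟩ else 0 with hye
  set c : ℕ → ℝ := fun i => p * ye i ^ (p - 1) with hc
  set d : ℕ → ℝ := fun i => xe i - ye i with hd
  have hp0 : 0 < p := lt_trans one_pos hp
  -- partial sums of d are nonnegative
  have hD : ∀ k, 0 ≤ ∑ i ∈ range k, d i := by
    intro k
    have := hmaj k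
    rw [filter_sum_eq x k, filter_sum_eq y k] at this
    simpa [hd, Finset.sum_sub_distrib] using this
  -- c is nonneg and antitone on range n
  have hcpos : ∀ i, i < n → 0 ≤ c i := fun i hi =>
    mul_nonneg hp0.le (Real.rpow_nonneg (by simp [hye, hi, hy0]) _)
  have hcmono : ∀ i j, i ≤ j → j < n → c j ≤ c i := by
    intro i j hij hj
    have hi : i < n := lt_of_le_of_lt hij hj
    have hyij : ye j ≤ ye i := by
      simp only [hye, dif_pos hi, dif_pos hj]
      exact hy ⟨i, hi⟩ ⟨j, hj⟩ hij
    exact mul_le_mul_of_nonneg_left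
      (Real.rpow_le_rpow (by simp [hye, hj, hy0]) hyij (by linarith)) hp0.le
  have hAbel : 0 ≤ ∑ i ∈ range n, c i * d i :=
    abel_nonneg n c d hcmono hcpos (fun k _ => hD k)
  -- termwise tangent inequality
  have htan : ∀ i ∈ range n, ye i ^ p + c i * d i ≤ xe i ^ p := by
    intro i hi
    rw [Finset.mem_range] at hi
    have := tangent_le (a := xe i) (b := ye i)
      (by simp [hxe, hi, hx0]) (by simp [hye, hi, hy0]) hp
    simpa [hc, hd, mul_assoc] using this
  -- rewrite the Fin sums as range sums
  have hxsum : ∑ i, x i ^ p = ∑ i ∈ range n, xe i ^ p := by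
    rw [← Fin.sum_univ_eq_sum_range (fun i => xe i ^ p) n]
    exact Finset.sum_congr rfl (fun i _ => by simp [hxe, i.isLt])
  have hysum : ∑ i, y i ^ p = ∑ i ∈ range n, ye i ^ p := by
    rw [← Fin.sum_univ_eq_sum_range (fun i => ye i ^ p) n]
    exact Finset.sum_congr rfl (fun i _ => by simp [hye, i.isLt])
  have hsumle : ∑ i, y i ^ p ≤ ∑ i, x i ^ p := by
    rw [hxsum, hysum]
    have h1 : ∑ i ∈ range n, (ye i ^ p + c i * d i) ≤ ∑ i ∈ range n, xe i ^ p :=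
      Finset.sum_le_sum htan
    rw [Finset.sum_add_distrib] at h1
    linarith
  have hT0 : 0 ≤ ∑ i, y i ^ p :=
    Finset.sum_nonneg (fun i _ => Real.rpow_nonneg (hy0 i) p)
  have hS0 : 0 ≤ ∑ i, x i ^ p := le_trans hT0 hsumle
  have hle : (∑ i, y i ^ p) ^ (1 / p) ≤ (∑ i, x i ^ p) ^ (1 / p) :=
    Real.rpow_le_rpow hT0 hsumle (by positivity)
  refine ⟨hle, ?_, ?_⟩
  · -- equality implies x = y
    intro heq
    have hsum_eq : ∑ i, y i ^ p = ∑ i, x i ^ p := by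
      rcases lt_or_eq_of_le hsumle with h | h
      · exfalso
        have := Real.rpow_lt_rpow hT0 h (by positivity : (0:ℝ) < 1 / p)
        exact absurd heq (ne_of_lt this)
      · exact h
    -- each tangent gap must vanish
    have hgap : ∑ i ∈ range n, (xe i ^ p - ye i ^ p - c i * d i) = 0 := by
      have h1 : ∑ i ∈ range n, (xe i ^ p - ye i ^ p - c i * d i)
          = ∑ i ∈ range n, xe i ^ p - ∑ i ∈ range n, ye i ^ p - ∑ i ∈ range n, c i * d i := by
        simp [Finset.sum_sub_distrib]
      have h2 : ∑ i ∈ range n, xe i ^ p - ∑ i ∈ range n, ye i ^ p = 0 := by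
        rw [← hxsum, ← hysum, hsum_eq]; ring
      have h3 : 0 ≤ ∑ i ∈ range n, (xe i ^ p - ye i ^ p - c i * d i) :=
        Finset.sum_nonneg (fun i hi => by have := htan i hi; linarith)
      have h4 : ∑ i ∈ range n, (xe i ^ p - ye i ^ p - c i * d i) ≤ 0 := by
        rw [h1, h2]; linarith
      linarith
    have hterm : ∀ i ∈ range n, xe i ^ p - ye i ^ p - c i * d i = 0 := by
      intro i hi
      have h3 : ∀ j ∈ range n, 0 ≤ xe j ^ p - ye j ^ p - c j * d j :=
        fun j hj => by have := htan j hj; linarith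
      exact (Finset.sum_eq_zero_iff_of_nonneg h3).1 hgap i hi
    funext i
    by_contra hne
    have hi : i.val < n := i.isLt
    have h5 := hterm i.val (Finset.mem_range.2 hi)
    have h6 : xe i.val = x i := by simp [hxe, hi]
    have h7 : ye i.val = y i := by simp [hye, hi]
    have h8 := tangent (a := x i) (b := y i) (hx0 i) (hy0 i) hp (fun h => hne h)
    rw [h6, h7] at h5
    have h9 : c i.val = p * y i ^ (p - 1) := by simp [hc, h7]
    have h10 : d i.val = x i - y i := by simp [hd, h6, h7]
    rw [h9, h10] at h5
    rw [mul_assoc] at h8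
    linarith
  · rintro rfl
    rfl
end

section
/- Let x, y ∈ ℝⁿ have nonnegative entries. Then x is weakly majorized by y if and only if there exists a doubly substochastic matrix A with x = Ay. -/
open Finset

/-- `WeaklyMajorizedBy x y` : for each `k`, the sum of the `k` largest entries of
`x` is at most the sum of the `k` largest entries of `y`; equivalently, the sum of
`x` over any subset is at most the sum of `y` over some subset of the same size. -/
def WeaklyMajorizedBy {n : ℕ} (x y : Fin n → ℝ) : Prop :=
  ∀ s : Finset (Fin n), ∃ t : Finset (Fin n), t.card = s.card ∧
    ∑ i ∈ s, x i ≤ ∑ i ∈ t, y i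

namespace WMaj

variable {n : ℕ}

/-- prefix sum of the first `m` coordinates -/
def pfx (x : Fin n → ℝ) (m : ℕ) : ℝ :=
  ∑ i ∈ Finset.univ.filter (fun i : Fin n => (i : ℕ) < m), x i

lemma filter_lt_succ {m : ℕ} (h : m < n) :
    (Finset.univ.filter (fun i : Fin n => (i : ℕ) < m + 1)) =
      insert ⟨m, h⟩ (Finset.univ.filter (fun i : Fin n => (i : ℕ) < m)) := by
  ext i
  simp only [mem_filter, mem_insert, mem_univ, true_and, Fin.ext_iff]
  omega

lemma filter_lt_of_ge {m : ℕ} (h : n ≤ m) :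
    (Finset.univ.filter (fun i : Fin n => (i : ℕ) < m)) = Finset.univ := by
  apply filter_true_of_mem
  intro i _
  exact lt_of_lt_of_le i.2 h

lemma pfx_succ (x : Fin n → ℝ) {m : ℕ} (h : m < n) :
    pfx x (m + 1) = pfx x m + x ⟨m, h⟩ := by
  rw [pfx, pfx, filter_lt_succ h, Finset.sum_insert (by simp)]
  ring

lemma pfx_of_ge (x : Fin n → ℝ) {m : ℕ} (h : n ≤ m) : pfx x m = ∑ i, x i := by
  rw [pfx, filter_lt_of_ge h]

lemma card_filter_lt {m : ℕ} (h : m ≤ n) :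
    (Finset.univ.filter (fun i : Fin n => (i : ℕ) < m)).card = m := by
  induction m with
  | zero => simp
  | succ m ih =>
      rw [filter_lt_succ (by omega), Finset.card_insert_of_notMem (by simp)]
      rw [ih (by omega)]

/-- master inequality: a `[0,1]`-weighted sum with total weight ≤ k is at most the
sum of the `k` largest entries of an antitone nonneg vector. -/
lemma weighted_sum_le_pfx (g : Fin n → ℝ) (hg : Antitone g) (hg0 : ∀ i, 0 ≤ g i)
    (c : Fin n → ℝ) (hc0 : ∀ i, 0 ≤ c i) (hc1 : ∀ i, c i ≤ 1)
    (k : ℕ) (hck : ∑ i, c i ≤ (k : ℝ)) :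
    ∑ i, c i * g i ≤ pfx g k := by
  by_cases hkn : n ≤ k
  · rw [pfx_of_ge g hkn]
    apply Finset.sum_le_sum
    intro i _
    nlinarith [hc0 i, hc1 i, hg0 i]
  · push_neg at hkn
    set a : Fin n := ⟨k, hkn⟩
    have key : ∀ i : Fin n, c i * g i - (if (i : ℕ) < k then g i else 0) ≤
        (c i - (if (i : ℕ) < k then 1 else 0)) * g a := by
      intro i
      by_cases hik : (i : ℕ) < k
      · simp only [hik, if_pos]
        have h1 : g a ≤ g i := hg (Fin.le_def.mpr (show (i:ℕ) ≤ k from le_of_lt hik))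
        nlinarith [hc1 i, hg0 a]
      · simp only [hik, if_neg, not_false_iff]
        have h1 : g i ≤ g a := hg (Fin.le_def.mpr (show k ≤ (i:ℕ) from by omega))
        nlinarith [hc0 i]
    have hsum := Finset.sum_le_sum (s := (Finset.univ : Finset (Fin n))) (fun i _ => key i)
    rw [Finset.sum_sub_distrib] at hsum
    have e1 : ∑ i : Fin n, (if (i : ℕ) < k then g i else 0) = pfx g k := by
      rw [pfx, Finset.sum_filter]
    have e2 : ∑ i : Fin n, (if (i : ℕ) < k then (1:ℝ) else 0) = (k : ℝ) := by
      rw [Finset.sum_boole]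
      rw [card_filter_lt (le_of_lt hkn)]
    rw [e1] at hsum
    have e3 : ∑ i : Fin n, (c i - if (i : ℕ) < k then (1:ℝ) else 0) * g a
        = (∑ i, c i - (k:ℝ)) * g a := by
      rw [← Finset.sum_mul, Finset.sum_sub_distrib, e2]
    rw [e3] at hsum
    nlinarith [hg0 a]

/-- sum over any finset is at most the prefix sum (top-|t|) of an antitone nonneg vector -/
lemma sum_le_pfx (g : Fin n → ℝ) (hg : Antitone g) (hg0 : ∀ i, 0 ≤ g i)
    (u : Finset (Fin n)) : ∑ i ∈ u, g i ≤ pfx g u.card := by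
  have := weighted_sum_le_pfx g hg hg0 (fun i => if i ∈ u then 1 else 0)
    (fun i => by positivity) (fun i => by split <;> norm_num) u.card
    (by rw [Finset.sum_boole]; simp [Finset.filter_mem_eq_inter])
  calc ∑ i ∈ u, g i = ∑ i : Fin n, (if i ∈ u then (1:ℝ) else 0) * g i := by
        rw [show ∑ i : Fin n, (if i ∈ u then (1:ℝ) else 0) * g i
            = ∑ i : Fin n, (if i ∈ u then g i else 0) from
          Finset.sum_congr rfl (fun i _ => by by_cases h : i ∈ u <;> simp [h])]
        simp [Finset.sum_ite_mem]
    _ ≤ pfx g u.card := this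

lemma exists_antitone_sort (x : Fin n → ℝ) :
    ∃ σ : Equiv.Perm (Fin n), Antitone (x ∘ σ) := by
  refine ⟨Tuple.sort (fun i => - x i), ?_⟩
  have h := Tuple.monotone_sort (fun i => - x i)
  intro a b hab
  have := h hab
  simp only [Function.comp_apply] at this ⊢
  linarith

lemma filter_lt_min (m : ℕ) :
    (Finset.univ.filter (fun i : Fin n => (i : ℕ) < m)) =
      (Finset.univ.filter (fun i : Fin n => (i : ℕ) < min m n)) := by
  ext i
  have := i.2
  simp only [mem_filter, mem_univ, true_and]
  omega

lemma card_filter_lt' (m : ℕ) :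
    (Finset.univ.filter (fun i : Fin n => (i : ℕ) < m)).card = min m n := by
  rw [filter_lt_min, card_filter_lt (min_le_right m n)]

lemma pfx_min (g : Fin n → ℝ) (m : ℕ) : pfx g (min m n) = pfx g m := by
  rcases le_total m n with h | h
  · rw [min_eq_left h]
  · rw [min_eq_right h, pfx_of_ge g h, pfx_of_ge g le_rfl]

/-- backward direction core -/
lemma wmaj_of_matrix (x y : Fin n → ℝ) (hy0 : ∀ i, 0 ≤ y i)
    (A : Matrix (Fin n) (Fin n) ℝ) (hA0 : ∀ i j, 0 ≤ A i j)
    (hAr : ∀ i, ∑ j, A i j ≤ 1) (hAc : ∀ j, ∑ i, A i j ≤ 1)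
    (hxA : x = A.mulVec y) : WeaklyMajorizedBy x y := by
  obtain ⟨τ, hτ⟩ := exists_antitone_sort y
  intro s
  set k := s.card with hk
  have hkn : k ≤ n := by
    simpa using Finset.card_le_univ s
  refine ⟨Finset.image τ (Finset.univ.filter (fun i : Fin n => (i : ℕ) < k)), ?_, ?_⟩
  · rw [Finset.card_image_of_injective _ τ.injective, card_filter_lt hkn]
  · have hg0 : ∀ i, 0 ≤ (y ∘ τ) i := fun i => hy0 _
    have step1 : ∑ i ∈ s, x i = ∑ j, (∑ i ∈ s, A i j) * y j := by
      rw [hxA]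
      simp only [Matrix.mulVec, dotProduct]
      rw [Finset.sum_comm]
      exact Finset.sum_congr rfl (fun j _ => by rw [Finset.sum_mul])
    have step2 : ∑ j, (∑ i ∈ s, A i j) * y j
        = ∑ l, (∑ i ∈ s, A i (τ l)) * (y ∘ τ) l :=
      (Equiv.sum_comp τ (fun j => (∑ i ∈ s, A i j) * y j)).symm
    have hc1 : ∀ l, (∑ i ∈ s, A i (τ l)) ≤ 1 := by
      intro l
      refine le_trans ?_ (hAc (τ l))
      exact Finset.sum_le_sum_of_subset_of_nonneg (Finset.subset_univ s)
        (fun i _ _ => hA0 i (τ l))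
    have hck : ∑ l, (∑ i ∈ s, A i (τ l)) ≤ (k : ℝ) := by
      rw [Equiv.sum_comp τ (fun j => ∑ i ∈ s, A i j), Finset.sum_comm]
      calc ∑ i ∈ s, ∑ j, A i j ≤ ∑ i ∈ s, 1 :=
            Finset.sum_le_sum (fun i _ => hAr i)
        _ = (k : ℝ) := by simp [hk]
    have main := weighted_sum_le_pfx (y ∘ τ) hτ hg0 (fun l => ∑ i ∈ s, A i (τ l))
      (fun l => Finset.sum_nonneg (fun i _ => hA0 i (τ l))) hc1 k hck
    rw [step1, step2]
    refine le_trans main ?_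
    rw [pfx, Finset.sum_image (fun a _ b _ h => τ.injective h)]
    exact le_rfl

/-- weak majorization gives sorted prefix domination -/
lemma pfx_le_of_wmaj (x y : Fin n → ℝ) (hy0 : ∀ i, 0 ≤ y i)
    (hw : WeaklyMajorizedBy x y) (σ τ : Equiv.Perm (Fin n))
    (hτ : Antitone (y ∘ τ)) (m : ℕ) : pfx (x ∘ σ) m ≤ pfx (y ∘ τ) m := by
  obtain ⟨t, htc, hts⟩ := hw (Finset.image σ (Finset.univ.filter (fun i : Fin n => (i : ℕ) < m)))
  have hsx : ∑ i ∈ Finset.image σ (Finset.univ.filter (fun i : Fin n => (i : ℕ) < m)), x i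
      = pfx (x ∘ σ) m := by
    rw [pfx, Finset.sum_image (fun a _ b _ h => σ.injective h)]
    rfl
  have htc' : t.card = min m n := by
    rw [htc, Finset.card_image_of_injective _ σ.injective, card_filter_lt']
  have h2 : ∑ i ∈ t, y i ≤ pfx (y ∘ τ) m := by
    have := sum_le_pfx (y ∘ τ) hτ (fun i => hy0 _) (Finset.image τ.symm t)
    rw [Finset.card_image_of_injective _ τ.symm.injective, htc'] at this
    rw [← pfx_min (y ∘ τ) m]
    refine le_trans (le_of_eq ?_) this
    rw [Finset.sum_image (fun a _ b _ h => τ.symm.injective h)]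
    exact Finset.sum_congr rfl (fun i _ => by simp)
  rw [← hsx]
  exact le_trans hts h2

lemma pfx_mono (g : Fin n → ℝ) (hg0 : ∀ i, 0 ≤ g i) {m m' : ℕ} (h : m ≤ m') :
    pfx g m ≤ pfx g m' :=
  Finset.sum_le_sum_of_subset_of_nonneg
    (fun i hi => by simp only [mem_filter, mem_univ, true_and] at hi ⊢; omega)
    (fun i _ _ => hg0 i)

lemma pfx_le_sum (g : Fin n → ℝ) (hg0 : ∀ i, 0 ≤ g i) (m : ℕ) :
    pfx g m ≤ ∑ i, g i := by
  rw [← pfx_of_ge g (le_refl n)]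
  rcases le_total m n with h | h
  · exact pfx_mono g hg0 h
  · rw [pfx_of_ge g le_rfl, pfx_of_ge g h]

lemma pfx_zero (g : Fin n → ℝ) : pfx g 0 = 0 := by
  simp [pfx]

/-- Step A: truncate `y` down to a vector with the same total sum as `x`. -/
lemma stepA (x y : Fin n → ℝ) (hx0 : ∀ i, 0 ≤ x i) (hy : Antitone y)
    (hy0 : ∀ i, 0 ≤ y i) (hpre : ∀ m, pfx x m ≤ pfx y m) :
    ∃ y' : Fin n → ℝ, Antitone y' ∧ (∀ i, 0 ≤ y' i) ∧ (∀ i, y' i ≤ y i) ∧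
      (∑ i, y' i = ∑ i, x i) ∧ (∀ m, pfx x m ≤ pfx y' m) := by
  set S : ℝ := ∑ i, x i with hS
  have hS0 : 0 ≤ S := Finset.sum_nonneg (fun i _ => hx0 i)
  set y' : Fin n → ℝ := fun i => min (y i) (max (S - pfx y (i : ℕ)) 0) with hy'
  have hkey : ∀ m, pfx y' m = min (pfx y m) S := by
    intro m
    induction m with
    | zero => rw [pfx_zero, pfx_zero]; rw [min_eq_left hS0]
    | succ m ih =>
        by_cases h : m < n
        · rw [pfx_succ _ h, pfx_succ _ h, ih]
          have hym : 0 ≤ y ⟨m, h⟩ := hy0 _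
          show min (pfx y m) S + min (y ⟨m, h⟩) (max (S - pfx y m) 0)
            = min (pfx y m + y ⟨m, h⟩) S
          rcases le_total S (pfx y m) with h1 | h1
          · rw [min_eq_right h1, max_eq_right (by linarith), min_eq_right hym,
              min_eq_right (by linarith)]
            ring
          · rw [min_eq_left h1, max_eq_left (by linarith)]
            rcases le_total (y ⟨m, h⟩) (S - pfx y m) with h2 | h2
            · rw [min_eq_left h2, min_eq_left (by linarith)]
            · rw [min_eq_right h2, min_eq_right (by linarith)]
              ring
        · push_neg at h
          rw [pfx_of_ge y' (by omega), pfx_of_ge y (by omega),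
            ← pfx_of_ge y' h, ← pfx_of_ge y h, ih]
  have hy'0 : ∀ i, 0 ≤ y' i := fun i => le_min (hy0 i) (le_max_right _ _)
  have hy'le : ∀ i, y' i ≤ y i := fun i => min_le_left _ _
  refine ⟨y', ?_, hy'0, hy'le, ?_, ?_⟩
  · intro a b hab
    refine min_le_min (hy hab) (max_le_max ?_ le_rfl)
    have : pfx y (a : ℕ) ≤ pfx y (b : ℕ) := pfx_mono y hy0 hab
    linarith
  · rw [← pfx_of_ge y' (le_refl n), hkey n, pfx_of_ge y (le_refl n)]
    refine min_eq_right ?_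
    have := hpre n
    rw [pfx_of_ge x (le_refl n), pfx_of_ge y (le_refl n)] at this
    exact this
  · intro m
    rw [hkey m]
    exact le_min (hpre m) (pfx_le_sum x hx0 m)

def IsSub (A : Matrix (Fin n) (Fin n) ℝ) : Prop :=
  (∀ i j, 0 ≤ A i j) ∧ (∀ i, ∑ j, A i j ≤ 1) ∧ (∀ j, ∑ i, A i j ≤ 1)

lemma isSub_one : IsSub (1 : Matrix (Fin n) (Fin n) ℝ) := by
  refine ⟨fun i j => ?_, fun i => ?_, fun j => ?_⟩
  · rw [Matrix.one_apply]; split <;> norm_num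
  · simp [Matrix.one_apply]
  · simp [Matrix.one_apply]

lemma isSub_mul {A B : Matrix (Fin n) (Fin n) ℝ} (hA : IsSub A) (hB : IsSub B) :
    IsSub (A * B) := by
  obtain ⟨hA0, hAr, hAc⟩ := hA
  obtain ⟨hB0, hBr, hBc⟩ := hB
  refine ⟨fun i j => ?_, fun i => ?_, fun j => ?_⟩
  · rw [Matrix.mul_apply]
    exact Finset.sum_nonneg (fun l _ => mul_nonneg (hA0 i l) (hB0 l j))
  · simp only [Matrix.mul_apply]
    rw [Finset.sum_comm]
    calc ∑ l, ∑ j, A i l * B l j = ∑ l, A i l * ∑ j, B l j := by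
          exact Finset.sum_congr rfl (fun l _ => (Finset.mul_sum _ _ _).symm)
      _ ≤ ∑ l, A i l * 1 := Finset.sum_le_sum (fun l _ =>
          mul_le_mul_of_nonneg_left (hBr l) (hA0 i l))
      _ ≤ 1 := by simpa using hAr i
  · simp only [Matrix.mul_apply]
    rw [Finset.sum_comm]
    calc ∑ l, ∑ i, A i l * B l j = ∑ l, (∑ i, A i l) * B l j := by
          exact Finset.sum_congr rfl (fun l _ => (Finset.sum_mul _ _ _).symm)
      _ ≤ ∑ l, 1 * B l j := Finset.sum_le_sum (fun l _ =>
          mul_le_mul_of_nonneg_right (hAc l) (hB0 l j))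
      _ ≤ 1 := by simpa using hBc j

/-- Step B: HLP-type core. -/
lemma stepB (x : Fin n → ℝ) (hx : Antitone x) :
    ∀ (d : ℕ) (y : Fin n → ℝ), Antitone y → (∑ i, x i = ∑ i, y i) →
      (∀ m, pfx x m ≤ pfx y m) →
      (Finset.univ.filter (fun i => x i ≠ y i)).card ≤ d →
      ∃ B : Matrix (Fin n) (Fin n) ℝ, IsSub B ∧ x = B.mulVec y := by
  intro d
  induction d with
  | zero =>
      intro y _ _ _ hcard
      have hxy : x = y := by
        funext i
        by_contra hne
        have : i ∈ Finset.univ.filter (fun i => x i ≠ y i) := by simp [hne]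
        rw [Finset.card_eq_zero.mp (Nat.le_zero.mp hcard)] at this
        exact absurd this (Finset.notMem_empty i)
      exact ⟨1, isSub_one, by rw [hxy, Matrix.one_mulVec]⟩
  | succ d ih =>
      intro y hy hsum hpre hcard
      by_cases hxy : x = y
      · exact ⟨1, isSub_one, by rw [hxy, Matrix.one_mulVec]⟩
      -- find j : the largest index with x j < y j
      have hSj : (Finset.univ.filter (fun i => x i < y i)).Nonempty := by
        by_contra hempty
        rw [Finset.not_nonempty_iff_eq_empty] at hempty
        have hle : ∀ i : Fin n, y i ≤ x i := by
          intro i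
          by_contra hlt
          have : i ∈ Finset.univ.filter (fun i => x i < y i) := by
            simp; linarith [lt_of_not_ge hlt]
          simp [hempty] at this
        obtain ⟨i0, hi0⟩ : ∃ i, x i ≠ y i := Function.ne_iff.mp hxy
        have : ∑ i, y i < ∑ i, x i :=
          Finset.sum_lt_sum (fun i _ => hle i)
            ⟨i0, Finset.mem_univ i0, lt_of_le_of_ne (hle i0) (Ne.symm hi0)⟩
        linarith [hsum]
      set j := (Finset.univ.filter (fun i => x i < y i)).max' hSj with hjdef
      have hj : x j < y j := by
        have := (Finset.univ.filter (fun i => x i < y i)).max'_mem hSj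
        exact (Finset.mem_filter.mp this).2
      have hjmax : ∀ l, j < l → ¬ (x l < y l) := by
        intro l hl hcon
        have : l ≤ j := Finset.le_max' _ l (by simp [hcon])
        exact absurd hl (not_lt.mpr this)
      -- find k : the smallest index > j with y k < x k
      have hSk : (Finset.univ.filter (fun i => j < i ∧ y i < x i)).Nonempty := by
        have h0 : ∑ l, (x l - y l) = 0 := by
          rw [Finset.sum_sub_distrib]; linarith [hsum]
        have hstrict : pfx x ((j : ℕ) + 1) < pfx y ((j : ℕ) + 1) := by
          rw [pfx_succ x j.isLt, pfx_succ y j.isLt]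
          have := hpre (j : ℕ)
          simp only [Fin.eta]
          linarith
        have split := Finset.sum_filter_add_sum_filter_not Finset.univ
          (fun l : Fin n => (l : ℕ) < (j : ℕ) + 1) (fun l => x l - y l)
        have e1 : ∑ l ∈ Finset.univ.filter (fun l : Fin n => (l : ℕ) < (j : ℕ) + 1),
            (x l - y l) < 0 := by
          rw [Finset.sum_sub_distrib]
          exact sub_neg.mpr hstrict
        have e2 : 0 < ∑ l ∈ Finset.univ.filter (fun l : Fin n => ¬ (l : ℕ) < (j : ℕ) + 1),
            (x l - y l) := by
          have hx0' := split
          rw [h0] at hx0'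
          linarith [e1]
        obtain ⟨l, hl, hlpos⟩ : ∃ l ∈ Finset.univ.filter
            (fun l : Fin n => ¬ (l : ℕ) < (j : ℕ) + 1), 0 < x l - y l := by
          by_contra hcon
          push_neg at hcon
          simp only [not_lt] at e2
          linarith [Finset.sum_nonpos (fun l hl => (hcon l hl : x l - y l ≤ 0)), e2]
        simp only [Finset.mem_filter, Finset.mem_univ, true_and, not_lt] at hl
        refine ⟨l, Finset.mem_filter.mpr ⟨Finset.mem_univ l, ?_, by linarith⟩⟩
        exact Fin.lt_def.mpr (by omega)
      set k := (Finset.univ.filter (fun i => j < i ∧ y i < x i)).min' hSk with hkdef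
      have hk : j < k ∧ y k < x k := by
        have := (Finset.univ.filter (fun i => j < i ∧ y i < x i)).min'_mem hSk
        exact (Finset.mem_filter.mp this).2
      have hkmin : ∀ l, j < l → l < k → x l = y l := by
        intro l hjl hlk
        have h1 : ¬ (x l < y l) := hjmax l hjl
        have h2 : ¬ (y l < x l) := by
          intro hcon
          have : k ≤ l := Finset.min'_le _ l (by simp [hjl, hcon])
          exact absurd hlk (not_lt.mpr this)
        have := not_lt.mp h1
        have := not_lt.mp h2
        linarith
      obtain ⟨hjk', hyxk⟩ := hk
      have hjk : j ≠ k := ne_of_lt hjk'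
      have hxkj : x k ≤ x j := hx (le_of_lt hjk')
      have hykj : y k < y j := by linarith
      set δ : ℝ := min (y j - x j) (x k - y k) with hδdef
      have hδ0 : 0 < δ := lt_min (by linarith) (by linarith)
      have hδj : δ ≤ y j - x j := min_le_left _ _
      have hδk : δ ≤ x k - y k := min_le_right _ _
      have hδjk : δ ≤ y j - y k := by linarith
      set μ : ℝ := δ / (y j - y k) with hμdef
      have hμ0 : 0 ≤ μ := div_nonneg (le_of_lt hδ0) (by linarith)
      have hμ1 : μ ≤ 1 := (div_le_one (by linarith)).mpr hδjk
      have hμδ : μ * (y j - y k) = δ := div_mul_cancel₀ _ (sub_ne_zero_of_ne (ne_of_gt hykj))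
      set y' : Fin n → ℝ :=
        fun i => y i + (if i = j then -δ else 0) + (if i = k then δ else 0) with hy'def
      have hy'j : y' j = y j - δ := by
        simp [hy'def, hjk]
        ring
      have hy'k : y' k = y k + δ := by
        simp [hy'def, Ne.symm hjk]
      have hy'o : ∀ i, i ≠ j → i ≠ k → y' i = y i := by
        intro i h1 h2
        simp only [hy'def, if_neg h1, if_neg h2]
        ring
      have hy'anti : Antitone y' := by
        intro a b hab
        rcases eq_or_lt_of_le hab with heq | hlt
        · exact le_of_eq (by rw [heq])
        by_cases hbj : b = j
        · have hjb : a < j := hbj ▸ hlt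
          have hak : a ≠ k := ne_of_lt (lt_trans hjb hjk')
          rw [hbj, hy'j, hy'o a (ne_of_lt hjb) hak]
          have := hy (le_of_lt hjb)
          linarith
        by_cases hbk : b = k
        · rcases lt_trichotomy a j with haj | haj | haj
          · rw [hbk, hy'k, hy'o a (ne_of_lt haj) (ne_of_lt (lt_trans haj hjk'))]
            have := hy (le_of_lt haj)
            linarith
          · rw [hbk, haj, hy'j, hy'k]
            linarith
          · have hak : a < k := hbk ▸ hlt
            rw [hbk, hy'k, hy'o a (ne_of_gt haj) (ne_of_lt hak)]
            have h1 := hkmin a haj hak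
            have h2 : x k ≤ x a := hx (le_of_lt hak)
            linarith
        by_cases haj : a = j
        · rw [haj, hy'j, hy'o b hbj hbk]
          have hjb : j < b := haj ▸ hlt
          rcases lt_trichotomy b k with h | h | h
          · have h1 := hkmin b hjb h
            have h2 : x b ≤ x j := hx (le_of_lt hjb)
            linarith
          · exact absurd h hbk
          · have h1 := hy (le_of_lt h)
            linarith
        by_cases hak : a = k
        · rw [hak, hy'k, hy'o b hbj hbk]
          have := hy (le_of_lt (hak ▸ hlt))
          linarith
        · rw [hy'o a haj hak, hy'o b hbj hbk]
          exact hy hab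
      have hy'sum : ∑ i, x i = ∑ i, y' i := by
        have : ∑ i, y' i = ∑ i, y i := by
          simp only [hy'def]
          rw [Finset.sum_add_distrib, Finset.sum_add_distrib,
            Finset.sum_ite_eq' Finset.univ j (fun _ => -δ),
            Finset.sum_ite_eq' Finset.univ k (fun _ => δ)]
          simp
        rw [this, hsum]
      have hy'pre : ∀ m, pfx x m ≤ pfx y' m := by
        intro m
        have hpfx : pfx y' m = pfx y m + (if (j : ℕ) < m then -δ else 0)
            + (if (k : ℕ) < m then δ else 0) := by
          simp only [pfx, hy'def]
          rw [Finset.sum_add_distrib, Finset.sum_add_distrib,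
            Finset.sum_ite_eq' _ j (fun _ => -δ),
            Finset.sum_ite_eq' _ k (fun _ => δ)]
          simp only [Finset.mem_filter, Finset.mem_univ, true_and]
        rw [hpfx]
        by_cases hjm : (j : ℕ) < m
        · by_cases hkm : (k : ℕ) < m
          · simp only [if_pos hjm, if_pos hkm]
            have := hpre m
            linarith
          · simp only [if_pos hjm, if_neg hkm]
            have hgap : δ ≤ pfx y m - pfx x m := by
              have e0 : pfx y m - pfx x m =
                  ∑ l ∈ Finset.univ.filter (fun l : Fin n => (l : ℕ) < m), (y l - x l) := by
                rw [Finset.sum_sub_distrib]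
                rfl
              have split := Finset.sum_filter_add_sum_filter_not
                (Finset.univ.filter (fun l : Fin n => (l : ℕ) < m))
                (fun l : Fin n => (l : ℕ) < (j : ℕ) + 1) (fun l => y l - x l)
              have e1 : (Finset.univ.filter (fun l : Fin n => (l : ℕ) < m)).filter
                  (fun l : Fin n => (l : ℕ) < (j : ℕ) + 1)
                  = Finset.univ.filter (fun l : Fin n => (l : ℕ) < (j : ℕ) + 1) := by
                ext i
                simp only [Finset.mem_filter, Finset.mem_univ, true_and]
                omega
              have e2 : ∑ l ∈ (Finset.univ.filter (fun l : Fin n => (l : ℕ) < m)).filter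
                  (fun l : Fin n => ¬ (l : ℕ) < (j : ℕ) + 1), (y l - x l) = 0 := by
                apply Finset.sum_eq_zero
                intro l hl
                simp only [Finset.mem_filter, Finset.mem_univ, true_and, not_lt] at hl
                have h1 : j < l := Fin.lt_def.mpr (by omega)
                have h2 : l < k := Fin.lt_def.mpr (by omega)
                rw [hkmin l h1 h2]
                ring
              have e3 : δ ≤ ∑ l ∈ Finset.univ.filter
                  (fun l : Fin n => (l : ℕ) < (j : ℕ) + 1), (y l - x l) := by
                rw [Finset.sum_sub_distrib]
                have hs : ∑ l ∈ Finset.univ.filter (fun l : Fin n => (l : ℕ) < (j : ℕ) + 1), y l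
                    = pfx y ((j : ℕ) + 1) := rfl
                have hs2 : ∑ l ∈ Finset.univ.filter (fun l : Fin n => (l : ℕ) < (j : ℕ) + 1), x l
                    = pfx x ((j : ℕ) + 1) := rfl
                rw [hs, hs2, pfx_succ y j.isLt, pfx_succ x j.isLt]
                simp only [Fin.eta]
                have := hpre (j : ℕ)
                linarith
              rw [e0, ← split, e1, e2, add_zero]
              exact e3
            linarith
        · have hkm : ¬ (k : ℕ) < m := by
            have : (j : ℕ) < (k : ℕ) := hjk'
            omega
          simp only [if_neg hjm, if_neg hkm]
          have := hpre m
          linarith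
      have hcard' : (Finset.univ.filter (fun i => x i ≠ y' i)).card ≤ d := by
        have hsub : (Finset.univ.filter (fun i => x i ≠ y' i)) ⊆
            (Finset.univ.filter (fun i => x i ≠ y i)) := by
          intro i hi
          simp only [Finset.mem_filter, Finset.mem_univ, true_and] at hi ⊢
          by_cases h1 : i = j
          · rw [h1]; exact ne_of_lt hj
          by_cases h2 : i = k
          · rw [h2]; exact ne_of_gt hyxk
          · rw [hy'o i h1 h2] at hi; exact hi
        have hmem : ∃ i ∈ (Finset.univ.filter (fun i => x i ≠ y i)),
            i ∉ (Finset.univ.filter (fun i => x i ≠ y' i)) := by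
          rcases le_total (y j - x j) (x k - y k) with h | h
          · refine ⟨j, by simp [ne_of_lt hj], ?_⟩
            intro hconmem
            apply (Finset.mem_filter.mp hconmem).2
            rw [hy'j, hδdef, min_eq_left h]
            ring
          · refine ⟨k, by simp [ne_of_gt hyxk], ?_⟩
            intro hconmem
            apply (Finset.mem_filter.mp hconmem).2
            rw [hy'k, hδdef, min_eq_right h]
            ring
        have hss := (Finset.ssubset_iff_of_subset hsub).mpr hmem
        have := Finset.card_lt_card hss
        omega
      -- the T-transform matrix
      set T : Matrix (Fin n) (Fin n) ℝ := fun i m =>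
        (if m = i then (1 - μ) else 0) + (if m = Equiv.swap j k i then μ else 0) with hTdef
      have hT0 : ∀ i m, 0 ≤ T i m := by
        intro i m
        apply add_nonneg <;> [skip; skip] <;> (split <;> linarith)
      have hTr : ∀ i, ∑ m, T i m = 1 := by
        intro i
        simp only [hTdef]
        rw [Finset.sum_add_distrib,
          Finset.sum_ite_eq' Finset.univ i (fun _ => (1 - μ : ℝ)),
          Finset.sum_ite_eq' Finset.univ (Equiv.swap j k i) (fun _ => (μ : ℝ))]
        simp
      have hTc : ∀ m, ∑ i, T i m = 1 := by
        intro m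
        simp only [hTdef]
        rw [Finset.sum_add_distrib]
        have e1 : ∑ i : Fin n, (if m = i then (1 - μ : ℝ) else 0) = 1 - μ := by
          rw [Finset.sum_ite_eq Finset.univ m (fun _ => (1 - μ : ℝ))]
          simp
        have e2 : ∑ i : Fin n, (if m = Equiv.swap j k i then (μ : ℝ) else 0) = μ := by
          rw [Fintype.sum_equiv (Equiv.swap j k)
            (fun i => if m = Equiv.swap j k i then (μ : ℝ) else 0)
            (fun i => if m = i then (μ : ℝ) else 0) (fun i => rfl),
            Finset.sum_ite_eq Finset.univ m (fun _ => (μ : ℝ))]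
          simp
        rw [e1, e2]
        ring
      have hTy : T.mulVec y = y' := by
        funext i
        simp only [Matrix.mulVec, dotProduct, hTdef, add_mul, ite_mul, zero_mul]
        rw [Finset.sum_add_distrib,
          Finset.sum_ite_eq' Finset.univ i (fun m => (1 - μ) * y m),
          Finset.sum_ite_eq' Finset.univ (Equiv.swap j k i) (fun m => μ * y m)]
        simp only [Finset.mem_univ, if_pos]
        by_cases hij : i = j
        · rw [hij, Equiv.swap_apply_left, hy'j]
          linear_combination - hμδ
        by_cases hik : i = k
        · rw [hik, Equiv.swap_apply_right, hy'k]
          linear_combination hμδ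
        · rw [Equiv.swap_apply_of_ne_of_ne hij hik, hy'o i hij hik]
          ring
      obtain ⟨B', hB', hxB'⟩ := ih y' hy'anti hy'sum hy'pre hcard'
      refine ⟨B' * T, isSub_mul hB'
        ⟨hT0, fun i => le_of_eq (hTr i), fun m => le_of_eq (hTc m)⟩, ?_⟩
      rw [← Matrix.mulVec_mulVec, hTy]
      exact hxB'

end WMaj

open WMaj

/-- For `x, y ∈ ℝⁿ` with nonnegative entries, `x` is weakly majorized by `y` iff
there is a doubly substochastic matrix `A` with `x = A y`. -/
theorem stmt_6 {n : ℕ} (x y : Fin n → ℝ)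
    (hx0 : ∀ i, 0 ≤ x i) (hy0 : ∀ i, 0 ≤ y i) :
    WeaklyMajorizedBy x y ↔
      ∃ A : Matrix (Fin n) (Fin n) ℝ,
        (∀ i j, 0 ≤ A i j) ∧ (∀ i, ∑ j, A i j ≤ 1) ∧ (∀ j, ∑ i, A i j ≤ 1) ∧
        x = A.mulVec y := by
  constructor
  · intro hw
    obtain ⟨σ, hσ⟩ := exists_antitone_sort x
    obtain ⟨τ, hτ⟩ := exists_antitone_sort y
    have hpre := pfx_le_of_wmaj x y hy0 hw σ τ hτ
    have hX0 : ∀ i, 0 ≤ (x ∘ σ) i := fun i => hx0 _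
    have hY0 : ∀ i, 0 ≤ (y ∘ τ) i := fun i => hy0 _
    obtain ⟨y'', hy''anti, hy''0, hy''le, hy''sum, hy''pre⟩ :=
      stepA (x ∘ σ) (y ∘ τ) hX0 hτ hY0 hpre
    obtain ⟨B, ⟨hB0, hBr, hBc⟩, hXB⟩ := stepB (x ∘ σ) hσ
      ((Finset.univ.filter (fun i => (x ∘ σ) i ≠ y'' i)).card) y''
      hy''anti hy''sum.symm hy''pre le_rfl
    set r : Fin n → ℝ := fun m => if (y ∘ τ) m = 0 then 0 else y'' m / (y ∘ τ) m with hrdef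
    have hr0 : ∀ m, 0 ≤ r m := by
      intro m
      simp only [hrdef]
      split
      · exact le_rfl
      · exact div_nonneg (hy''0 m) (hY0 m)
    have hr1 : ∀ m, r m ≤ 1 := by
      intro m
      simp only [hrdef]
      split
      · norm_num
      · rename_i h
        have hpos : 0 < (y ∘ τ) m := lt_of_le_of_ne (hY0 m) (Ne.symm h)
        exact (div_le_one hpos).mpr (hy''le m)
    have hry : ∀ m, y'' m = r m * (y ∘ τ) m := by
      intro m
      simp only [hrdef]
      split
      · rename_i h
        have h1 := hy''le m
        have h2 := hy''0 m
        rw [h] at h1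
        linarith [le_antisymm h1 h2]
      · rename_i h
        rw [div_mul_cancel₀ _ h]
    set B1 : Matrix (Fin n) (Fin n) ℝ := fun i m => B i m * r m with hB1def
    have hB10 : ∀ i m, 0 ≤ B1 i m := fun i m => mul_nonneg (hB0 i m) (hr0 m)
    have hB1r : ∀ i, ∑ m, B1 i m ≤ 1 := by
      intro i
      calc ∑ m, B1 i m ≤ ∑ m, B i m := Finset.sum_le_sum (fun m _ => by
            simpa using mul_le_mul_of_nonneg_left (hr1 m) (hB0 i m))
        _ ≤ 1 := hBr i
    have hB1c : ∀ m, ∑ i, B1 i m ≤ 1 := by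
      intro m
      simp only [hB1def]
      rw [← Finset.sum_mul]
      exact mul_le_one₀ (hBc m) (hr0 m) (hr1 m)
    have hXB1 : ∀ i, (x ∘ σ) i = ∑ m, B1 i m * (y ∘ τ) m := by
      intro i
      have := congrFun hXB i
      simp only [Matrix.mulVec, dotProduct] at this
      rw [this]
      refine Finset.sum_congr rfl (fun m _ => ?_)
      simp only [hB1def]
      rw [hry m]
      ring
    refine ⟨fun i m => B1 (σ.symm i) (τ.symm m), fun i m => hB10 _ _, fun i => ?_, fun m => ?_, ?_⟩
    · rw [Equiv.sum_comp τ.symm (fun m => B1 (σ.symm i) m)]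
      exact hB1r _
    · rw [Equiv.sum_comp σ.symm (fun i => B1 i (τ.symm m))]
      exact hB1c _
    · funext i
      simp only [Matrix.mulVec, dotProduct]
      rw [← Equiv.sum_comp τ (fun m => B1 (σ.symm i) (τ.symm m) * y m)]
      simp only [Equiv.symm_apply_apply]
      have := hXB1 (σ.symm i)
      simp only [Function.comp_apply, Equiv.apply_symm_apply] at this ⊢
      exact this
  · rintro ⟨A, hA0, hAr, hAc, hxA⟩
    exact wmaj_of_matrix x y hy0 A hA0 hAr hAc hxA
end

section
/- Every doubly substochastic matrix is a convex combination of weak-permutation matrices. -/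
open Finset

/-- A square 0-1 matrix with at most one nonzero entry in each row and column. -/
def IsWeakPermutation {n : ℕ} (P : Matrix (Fin n) (Fin n) ℝ) : Prop :=
  (∀ i j, P i j = 0 ∨ P i j = 1) ∧
  (∀ i j j', P i j ≠ 0 → P i j' ≠ 0 → j = j') ∧
  (∀ j i i', P i j ≠ 0 → P i' j ≠ 0 → i = i')

lemma permMatrix_apply' {m : Type*} [DecidableEq m] (σ : Equiv.Perm m) (i j : m) :
    σ.permMatrix ℝ i j = if σ i = j then 1 else 0 := by
  simp [Equiv.Perm.permMatrix, PEquiv.toMatrix_apply, Equiv.toPEquiv_apply]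

/-- Every doubly substochastic matrix is a convex combination of
weak-permutation matrices. -/
theorem stmt_7 {n : ℕ} (A : Matrix (Fin n) (Fin n) ℝ)
    (h0 : ∀ i j, 0 ≤ A i j) (hr : ∀ i, ∑ j, A i j ≤ 1) (hc : ∀ j, ∑ i, A i j ≤ 1) :
    ∃ (s : ℕ) (c : Fin s → ℝ) (P : Fin s → Matrix (Fin n) (Fin n) ℝ),
      (∀ i, 0 ≤ c i) ∧ (∑ i, c i = 1) ∧ (∀ i, IsWeakPermutation (P i)) ∧
      A = ∑ i, c i • P i := by
  classical
  -- Build a doubly stochastic matrix on `Fin n ⊕ Fin n`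
  set B : Matrix (Fin n ⊕ Fin n) (Fin n ⊕ Fin n) ℝ := fun p q =>
    match p, q with
    | Sum.inl i, Sum.inl j => A i j
    | Sum.inl i, Sum.inr j => if i = j then 1 - ∑ k, A i k else 0
    | Sum.inr i, Sum.inl j => if i = j then 1 - ∑ k, A k j else 0
    | Sum.inr i, Sum.inr j => A j i
    with hB
  have hBmem : B ∈ doublyStochastic ℝ (Fin n ⊕ Fin n) := by
    rw [mem_doublyStochastic_iff_sum]
    refine ⟨?_, ?_, ?_⟩
    · rintro (i | i) (j | j) <;> simp only [hB]
      · exact h0 i j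
      · split <;> simp [sub_nonneg, hr i]
      · split
        · linarith [hc j]
        · simp
      · exact h0 j i
    · rintro (i | i) <;>
        simp only [hB, Fintype.sum_sum_type, Finset.sum_ite_eq, Finset.mem_univ, if_true] <;> ring
    · rintro (j | j) <;>
        simp only [hB, Fintype.sum_sum_type, Finset.sum_ite_eq, Finset.sum_ite_eq',
          Finset.mem_univ, if_true] <;> ring
  obtain ⟨w, hw0, hw1, hwB⟩ := exists_eq_sum_perm_of_mem_doublyStochastic hBmem
  -- The restriction of a permutation matrix to the top-left block
  set Q : Equiv.Perm (Fin n ⊕ Fin n) → Matrix (Fin n) (Fin n) ℝ := fun σ i j =>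
    if σ (Sum.inl i) = Sum.inl j then 1 else 0 with hQ
  have hQweak : ∀ σ, IsWeakPermutation (Q σ) := by
    intro σ
    refine ⟨fun i j => ?_, fun i j j' hj hj' => ?_, fun j i i' hi hi' => ?_⟩
    · by_cases h : σ (Sum.inl i) = Sum.inl j <;> simp [hQ, h]
    · simp only [hQ, ne_eq, ite_eq_right_iff, not_forall] at hj hj'
      exact Sum.inl.inj (hj.1.symm.trans hj'.1)
    · simp only [hQ, ne_eq, ite_eq_right_iff, not_forall] at hi hi'
      have : σ (Sum.inl i) = σ (Sum.inl i') := hi.1.trans hi'.1.symm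
      exact Sum.inl.inj (σ.injective this)
  -- index by Fin (card of perms)
  obtain ⟨e⟩ : Nonempty (Fin (Fintype.card (Equiv.Perm (Fin n ⊕ Fin n))) ≃
      Equiv.Perm (Fin n ⊕ Fin n)) := ⟨(Fintype.equivFin _).symm⟩
  refine ⟨_, fun k => w (e k), fun k => Q (e k), fun k => hw0 _, ?_, fun k => hQweak _, ?_⟩
  · rw [Equiv.sum_comp e w]; exact hw1
  · rw [Equiv.sum_comp e (fun σ => w σ • Q σ)]
    ext i j
    have := congrFun (congrFun hwB (Sum.inl i)) (Sum.inl j)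
    simp only [Finset.sum_apply, Matrix.sum_apply, Matrix.smul_apply, smul_eq_mul] at this ⊢
    rw [show B (Sum.inl i) (Sum.inl j) = A i j from rfl] at this
    rw [← this]
    refine Finset.sum_congr rfl fun σ _ => ?_
    rw [permMatrix_apply', hQ]
end

section
/- For integers t ≥ s ≥ 1, the largest adjacency eigenvalue of S(K_{s+2,t+2}) is strictly greater than that of S(K_{s+1,t+3}). -/
open Matrix Finset

section Generic

variable {V : Type*} [Fintype V] [DecidableEq V] [Nonempty V]
  (G : SimpleGraph V) [DecidableRel G.Adj]


lemma adjEig_le_kthEig_zero (i : Fin (Fintype.card V)) : adjEig G i ≤ kthEig G 0 := by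
  have h : 0 < Fintype.card V := Fintype.card_pos
  rw [kthEig, dif_pos h]
  obtain ⟨k, rfl⟩ := (Tuple.sort (adjEig G)).surjective i
  refine Tuple.monotone_sort (adjEig G) ?_
  rw [Fin.le_def]
  have := k.isLt
  simp only [Fin.val_rev]
  omega

lemma kthEig_zero_is_eigenvalue :
    ∃ v : V → ℝ, v ≠ 0 ∧ G.adjMatrix ℝ *ᵥ v = kthEig G 0 • v := by
  have h : 0 < Fintype.card V := Fintype.card_pos
  rw [kthEig, dif_pos h]
  set hA := adjMatrix_isHermitian G
  set j : V := (Fintype.equivFin V).symm (Tuple.sort (adjEig G) (Fin.rev ⟨0, h⟩))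
  refine ⟨⇑(hA.eigenvectorBasis j), ?_, hA.mulVec_eigenvectorBasis j⟩
  have h0 := hA.eigenvectorBasis.toBasis.ne_zero j
  simpa using fun hz => h0 (by exact hz)

lemma eig_le_kthEig_zero {μ : ℝ} {v : V → ℝ} (hv : v ≠ 0)
    (h : G.adjMatrix ℝ *ᵥ v = μ • v) : μ ≤ kthEig G 0 := by
  have hA := adjMatrix_isHermitian G
  have hev : Module.End.HasEigenvalue (Matrix.toLin' (G.adjMatrix ℝ)) μ := by
    apply Module.End.hasEigenvalue_of_hasEigenvector (x := v)
    exact ⟨Module.End.mem_eigenspace_iff.mpr (by rw [Matrix.toLin'_apply, h]), hv⟩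
  have hsp : μ ∈ spectrum ℝ (G.adjMatrix ℝ) := by
    have := hev.mem_spectrum
    rwa [← AlgEquiv.spectrum_eq (Matrix.toLinAlgEquiv' (R := ℝ)) (G.adjMatrix ℝ)]
  rw [hA.spectrum_real_eq_range_eigenvalues] at hsp
  obtain ⟨i, hi⟩ := hsp
  have : μ = adjEig G (Fintype.equivFin V i) := by
    rw [← hi]; simp [adjEig]
  rw [this]
  exact adjEig_le_kthEig_zero G _
end Generic
/-- `SKab a b` : the complete bipartite graph `K_{a,b}` with one edge
(the edge between the first vertex on each side) subdivided by a new vertex. -/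
def SKab (a b : ℕ) : SimpleGraph (Fin a ⊕ Fin b ⊕ Unit) :=
  SimpleGraph.fromRel (fun u v =>
    match u, v with
    | Sum.inl i, Sum.inr (Sum.inl j) => ¬(i.val = 0 ∧ j.val = 0)
    | Sum.inl i, Sum.inr (Sum.inr _) => i.val = 0
    | Sum.inr (Sum.inl j), Sum.inr (Sum.inr _) => j.val = 0
    | _, _ => False)

noncomputable instance (a b : ℕ) : DecidableRel (SKab a b).Adj := Classical.decRel _

open Matrix

noncomputable def qmat (p q μ : ℝ) : Matrix (Fin 5) (Fin 5) ℝ :=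
  !![μ, 0, 0, -q, -1;
     0, μ, -1, -q, 0;
     0, -p, μ, 0, -1;
     -1, -p, 0, μ, 0;
     -1, 0, -1, 0, μ]

lemma qmat_det (p q μ : ℝ) :
    (qmat p q μ).det = μ^5 - (2+p+q+p*q)*μ^3 + (p+q+3*p*q)*μ - 2*p*q := by
  simp [qmat, Matrix.det_succ_row_zero, Fin.sum_univ_succ]
  simp [Fin.succAbove, Fin.lt_def]
  ring

lemma quintic_of_system (p q μ x1 x2 y1 y2 z : ℝ)
    (h1 : μ*x1 = q*y2+z) (h2 : μ*x2 = y1+q*y2) (h3 : μ*y1 = p*x2+z)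
    (h4 : μ*y2 = x1+p*x2) (h5 : μ*z = x1+y1)
    (hnz : ¬(x1=0 ∧ x2=0 ∧ y1=0 ∧ y2=0 ∧ z=0)) :
    μ^5 - (2+p+q+p*q)*μ^3 + (p+q+3*p*q)*μ - 2*p*q = 0 := by
  rw [← qmat_det]
  rw [← Matrix.exists_mulVec_eq_zero_iff]
  refine ⟨![x1,x2,y1,y2,z], ?_, ?_⟩
  · intro hz
    apply hnz
    refine ⟨congrFun hz 0, congrFun hz 1, congrFun hz 2, congrFun hz 3, congrFun hz 4⟩
  · funext i
    fin_cases i <;>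
      simp [qmat, Matrix.mulVec, dotProduct, Fin.sum_univ_succ] <;> linarith

lemma system_of_quintic (p q μ : ℝ)
    (hroot : μ^5 - (2+p+q+p*q)*μ^3 + (p+q+3*p*q)*μ - 2*p*q = 0) :
    ∃ x1 x2 y1 y2 z : ℝ, ¬(x1=0 ∧ x2=0 ∧ y1=0 ∧ y2=0 ∧ z=0) ∧
      μ*x1 = q*y2+z ∧ μ*x2 = y1+q*y2 ∧ μ*y1 = p*x2+z ∧ μ*y2 = x1+p*x2 ∧ μ*z = x1+y1 := by
  rw [← qmat_det] at hroot
  obtain ⟨w, hw, hmv⟩ := Matrix.exists_mulVec_eq_zero_iff.mpr hroot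
  refine ⟨w 0, w 1, w 2, w 3, w 4, ?_, ?_, ?_, ?_, ?_, ?_⟩
  · intro ⟨a0,a1,a2,a3,a4⟩
    apply hw; funext i; fin_cases i <;> assumption
  all_goals {
    have h0 := congrFun hmv 0
    have h1 := congrFun hmv 1
    have h2 := congrFun hmv 2
    have h3 := congrFun hmv 3
    have h4 := congrFun hmv 4
    simp [qmat, Matrix.mulVec, dotProduct, Fin.sum_univ_succ,
      show Fin.succ (2 : Fin 4) = (3:Fin 5) from rfl,
      show Fin.succ (Fin.succ (2 : Fin 3)) = (4:Fin 5) from rfl] at h0 h1 h2 h3 h4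
    linarith }


lemma skab_adj_ll (a b : ℕ) (i i' : Fin a) : ¬ (SKab a b).Adj (.inl i) (.inl i') := by
  simp [SKab, SimpleGraph.fromRel_adj]

lemma skab_adj_lr1 (a b : ℕ) (i : Fin a) (j : Fin b) :
    (SKab a b).Adj (.inl i) (.inr (.inl j)) ↔ ¬(i.val = 0 ∧ j.val = 0) := by
  simp [SKab, SimpleGraph.fromRel_adj]

lemma skab_adj_lr2 (a b : ℕ) (i : Fin a) (u : Unit) :
    (SKab a b).Adj (.inl i) (.inr (.inr u)) ↔ i.val = 0 := by
  simp [SKab, SimpleGraph.fromRel_adj]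

lemma skab_adj_r1r1 (a b : ℕ) (j j' : Fin b) :
    ¬ (SKab a b).Adj (.inr (.inl j)) (.inr (.inl j')) := by
  simp [SKab, SimpleGraph.fromRel_adj]

lemma skab_adj_r1r2 (a b : ℕ) (j : Fin b) (u : Unit) :
    (SKab a b).Adj (.inr (.inl j)) (.inr (.inr u)) ↔ j.val = 0 := by
  simp [SKab, SimpleGraph.fromRel_adj]

lemma skab_adj_r2r2 (a b : ℕ) (u u' : Unit) :
    ¬ (SKab a b).Adj (.inr (.inr u)) (.inr (.inr u')) := by
  simp [SKab, SimpleGraph.fromRel_adj]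

lemma sum_fin_ite {n : ℕ} (hn : 1 ≤ n) (c d : ℝ) :
    ∑ j : Fin n, (if j.val = 0 then c else d) = c + ((n:ℝ)-1)*d := by
  have h0 : (⟨0, hn⟩ : Fin n) ∈ Finset.univ := Finset.mem_univ _
  have : ∀ j : Fin n, (if j.val = 0 then c else d) = d + (if j = ⟨0, hn⟩ then c - d else 0) := by
    intro j
    by_cases h : j = ⟨0, hn⟩
    · subst h; simp
    · rw [if_neg h, if_neg (by simpa [Fin.ext_iff] using h), add_zero]
  rw [Finset.sum_congr rfl (fun j _ => this j), Finset.sum_add_distrib]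
  simp [Finset.sum_ite_eq', Finset.card_univ]
  ring

/-- the lifted class-constant vector -/
def lift5 (a b : ℕ) (x1 x2 y1 y2 z : ℝ) : (Fin a ⊕ Fin b ⊕ Unit) → ℝ :=
  fun w => match w with
  | .inl i => if i.val = 0 then x1 else x2
  | .inr (.inl j) => if j.val = 0 then y1 else y2
  | .inr (.inr _) => z

lemma skab_mulVec (a b : ℕ) (ha : 1 ≤ a) (hb : 1 ≤ b) (x1 x2 y1 y2 z : ℝ)
    (w : Fin a ⊕ Fin b ⊕ Unit) :
    ((SKab a b).adjMatrix ℝ *ᵥ lift5 a b x1 x2 y1 y2 z) w =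
      match w with
      | .inl i => if i.val = 0 then ((b:ℝ)-1)*y2 + z else y1 + ((b:ℝ)-1)*y2
      | .inr (.inl j) => if j.val = 0 then ((a:ℝ)-1)*x2 + z else x1 + ((a:ℝ)-1)*x2
      | .inr (.inr _) => x1 + y1 := by
  have expand : ∀ w', ((SKab a b).adjMatrix ℝ *ᵥ lift5 a b x1 x2 y1 y2 z) w' =
      (∑ i : Fin a, if (SKab a b).Adj w' (.inl i) then (if i.val = 0 then x1 else x2) else 0)
      + (∑ j : Fin b, if (SKab a b).Adj w' (.inr (.inl j)) then (if j.val = 0 then y1 else y2) else 0)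
      + (if (SKab a b).Adj w' (.inr (.inr ())) then z else 0) := by
    intro w'
    rw [Matrix.mulVec, dotProduct, Fintype.sum_sum_type, Fintype.sum_sum_type]
    simp [SimpleGraph.adjMatrix_apply, lift5, ite_mul, mul_comm]
    ring
  rw [expand]
  match w with
  | .inl i =>
    simp only [skab_adj_ll, if_false, Finset.sum_const_zero, skab_adj_lr1, skab_adj_lr2]
    by_cases hi : i.val = 0
    · have hsum : (∑ j : Fin b, if ¬(i.val = 0 ∧ j.val = 0) then (if j.val = 0 then y1 else y2) else 0)
          = 0 + ((b:ℝ)-1)*y2 := by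
        rw [← sum_fin_ite hb 0 y2]
        refine Finset.sum_congr rfl (fun j _ => ?_)
        by_cases h : j.val = 0 <;> simp [h, hi]
      rw [hsum, if_pos hi, if_pos hi]
      ring
    · have hsum : (∑ j : Fin b, if ¬(i.val = 0 ∧ j.val = 0) then (if j.val = 0 then y1 else y2) else 0)
          = y1 + ((b:ℝ)-1)*y2 := by
        rw [← sum_fin_ite hb y1 y2]
        refine Finset.sum_congr rfl (fun j _ => ?_)
        by_cases h : j.val = 0 <;> simp [h, hi]
      rw [hsum, if_neg hi, if_neg hi]
      ring
  | .inr (.inl j) =>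
    have hadj : ∀ i : Fin a, (SKab a b).Adj (.inr (.inl j)) (.inl i) ↔ ¬(i.val = 0 ∧ j.val = 0) := by
      intro i
      rw [SimpleGraph.adj_comm]
      exact skab_adj_lr1 a b i j
    simp only [skab_adj_r1r1, if_false, Finset.sum_const_zero, skab_adj_r1r2]
    have hs : (∑ i : Fin a, if (SKab a b).Adj (.inr (.inl j)) (.inl i) then (if i.val = 0 then x1 else x2) else 0)
        = ∑ i : Fin a, if ¬(i.val = 0 ∧ j.val = 0) then (if i.val = 0 then x1 else x2) else 0 :=
      Finset.sum_congr rfl (fun i _ => if_congr (hadj i) rfl rfl)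
    rw [hs]
    by_cases hj : j.val = 0
    · have hsum : (∑ i : Fin a, if ¬(i.val = 0 ∧ j.val = 0) then (if i.val = 0 then x1 else x2) else 0)
          = 0 + ((a:ℝ)-1)*x2 := by
        rw [← sum_fin_ite ha 0 x2]
        refine Finset.sum_congr rfl (fun i _ => ?_)
        by_cases h : i.val = 0 <;> simp [h, hj]
      rw [hsum, if_pos hj, if_pos hj]
      ring
    · have hsum : (∑ i : Fin a, if ¬(i.val = 0 ∧ j.val = 0) then (if i.val = 0 then x1 else x2) else 0)
          = x1 + ((a:ℝ)-1)*x2 := by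
        rw [← sum_fin_ite ha x1 x2]
        refine Finset.sum_congr rfl (fun i _ => ?_)
        by_cases h : i.val = 0 <;> simp [h, hj]
      rw [hsum, if_neg hj, if_neg hj]
      ring
  | .inr (.inr u) =>
    have hadjA : ∀ i : Fin a, (SKab a b).Adj (.inr (.inr u)) (.inl i) ↔ i.val = 0 := by
      intro i
      rw [SimpleGraph.adj_comm]
      exact skab_adj_lr2 a b i u
    have hadjB : ∀ j : Fin b, (SKab a b).Adj (.inr (.inr u)) (.inr (.inl j)) ↔ j.val = 0 := by
      intro j
      rw [SimpleGraph.adj_comm]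
      exact skab_adj_r1r2 a b j u
    simp only [skab_adj_r2r2, if_false]
    have hsA : (∑ i : Fin a, if (SKab a b).Adj (.inr (.inr u)) (.inl i) then (if i.val = 0 then x1 else x2) else 0)
        = ∑ i : Fin a, if i.val = 0 then (if i.val = 0 then x1 else x2) else 0 :=
      Finset.sum_congr rfl (fun i _ => if_congr (hadjA i) rfl rfl)
    have hsB : (∑ j : Fin b, if (SKab a b).Adj (.inr (.inr u)) (.inr (.inl j)) then (if j.val = 0 then y1 else y2) else 0)
        = ∑ j : Fin b, if j.val = 0 then (if j.val = 0 then y1 else y2) else 0 :=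
      Finset.sum_congr rfl (fun j _ => if_congr (hadjB j) rfl rfl)
    rw [hsA, hsB]
    have h1 : (∑ i : Fin a, if i.val = 0 then (if i.val = 0 then x1 else x2) else 0)
        = x1 + ((a:ℝ)-1)*0 := by
      rw [← sum_fin_ite ha x1 0]
      refine Finset.sum_congr rfl (fun i _ => ?_)
      by_cases h : i.val = 0 <;> simp [h]
    have h2 : (∑ j : Fin b, if j.val = 0 then (if j.val = 0 then y1 else y2) else 0)
        = y1 + ((b:ℝ)-1)*0 := by
      rw [← sum_fin_ite hb y1 0]
      refine Finset.sum_congr rfl (fun j _ => ?_)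
      by_cases h : j.val = 0 <;> simp [h]
    rw [h1, h2]
    ring

lemma skab_mulVec_expand (a b : ℕ) (v : (Fin a ⊕ Fin b ⊕ Unit) → ℝ) (w : Fin a ⊕ Fin b ⊕ Unit) :
    ((SKab a b).adjMatrix ℝ *ᵥ v) w =
      (∑ i : Fin a, if (SKab a b).Adj w (.inl i) then v (.inl i) else 0)
      + (∑ j : Fin b, if (SKab a b).Adj w (.inr (.inl j)) then v (.inr (.inl j)) else 0)
      + (if (SKab a b).Adj w (.inr (.inr ())) then v (.inr (.inr ())) else 0) := by
  rw [Matrix.mulVec, dotProduct, Fintype.sum_sum_type, Fintype.sum_sum_type]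
  simp [SimpleGraph.adjMatrix_apply, ite_mul, mul_comm]
  ring

lemma skab_eigen_of_root (a b : ℕ) (ha : 2 ≤ a) (hb : 2 ≤ b) (ρ : ℝ)
    (hroot : ρ^5 - (2+((a:ℝ)-1)+((b:ℝ)-1)+((a:ℝ)-1)*((b:ℝ)-1))*ρ^3
      + (((a:ℝ)-1)+((b:ℝ)-1)+3*((a:ℝ)-1)*((b:ℝ)-1))*ρ - 2*((a:ℝ)-1)*((b:ℝ)-1) = 0) :
    ∃ v : (Fin a ⊕ Fin b ⊕ Unit) → ℝ, v ≠ 0 ∧ (SKab a b).adjMatrix ℝ *ᵥ v = ρ • v := by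
  obtain ⟨x1, x2, y1, y2, z, hnz, h1, h2, h3, h4, h5⟩ :=
    system_of_quintic ((a:ℝ)-1) ((b:ℝ)-1) ρ (by linarith [hroot])
  refine ⟨lift5 a b x1 x2 y1 y2 z, ?_, ?_⟩
  · intro h0
    apply hnz
    have e1 := congrFun h0 (.inl ⟨0, by omega⟩)
    have e2 := congrFun h0 (.inl ⟨1, by omega⟩)
    have e3 := congrFun h0 (.inr (.inl ⟨0, by omega⟩))
    have e4 := congrFun h0 (.inr (.inl ⟨1, by omega⟩))
    have e5 := congrFun h0 (.inr (.inr ()))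
    simp [lift5] at e1 e2 e3 e4 e5
    exact ⟨e1, e2, e3, e4, e5⟩
  · funext w
    rw [skab_mulVec a b (by omega) (by omega)]
    match w with
    | .inl i =>
      by_cases hi : i.val = 0 <;> simp [hi, lift5, Pi.smul_apply] <;> linarith
    | .inr (.inl j) =>
      by_cases hj : j.val = 0 <;> simp [hj, lift5, Pi.smul_apply] <;> linarith
    | .inr (.inr u) =>
      simp [lift5, Pi.smul_apply]
      linarith

lemma skab_root_of_eigen (a b : ℕ) (ha : 2 ≤ a) (hb : 2 ≤ b) (μ : ℝ)
    (v : (Fin a ⊕ Fin b ⊕ Unit) → ℝ) (hv : v ≠ 0)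
    (heig : (SKab a b).adjMatrix ℝ *ᵥ v = μ • v) (hμ : μ ≠ 0) :
    μ^5 - (2+((a:ℝ)-1)+((b:ℝ)-1)+((a:ℝ)-1)*((b:ℝ)-1))*μ^3
      + (((a:ℝ)-1)+((b:ℝ)-1)+3*((a:ℝ)-1)*((b:ℝ)-1))*μ - 2*((a:ℝ)-1)*((b:ℝ)-1) = 0 := by
  have ha1 : 1 ≤ a := by omega
  have hb1 : 1 ≤ b := by omega
  set x1 := v (.inl ⟨0, by omega⟩) with hx1
  set x2 := v (.inl ⟨1, by omega⟩) with hx2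
  set y1 := v (.inr (.inl ⟨0, by omega⟩)) with hy1
  set y2 := v (.inr (.inl ⟨1, by omega⟩)) with hy2
  set z := v (.inr (.inr ())) with hz
  -- constancy on the A side
  have keyA : ∀ i : Fin a, i.val ≠ 0 →
      μ * v (.inl i) = ∑ j : Fin b, v (.inr (.inl j)) := by
    intro i hi
    have := congrFun heig (.inl i)
    rw [skab_mulVec_expand] at this
    simp only [Pi.smul_apply, smul_eq_mul] at this
    rw [← this]
    have e1 : (∑ i' : Fin a, if (SKab a b).Adj (.inl i) (.inl i') then v (.inl i') else 0) = 0 := by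
      apply Finset.sum_eq_zero; intro i' _; rw [if_neg (skab_adj_ll a b i i')]
    have e2 : (∑ j : Fin b, if (SKab a b).Adj (.inl i) (.inr (.inl j)) then v (.inr (.inl j)) else 0)
        = ∑ j : Fin b, v (.inr (.inl j)) := by
      apply Finset.sum_congr rfl; intro j _
      rw [if_pos ((skab_adj_lr1 a b i j).mpr (by tauto))]
    rw [e1, e2, if_neg (by rw [skab_adj_lr2]; exact hi)]
    ring
  have keyB : ∀ j : Fin b, j.val ≠ 0 →
      μ * v (.inr (.inl j)) = ∑ i : Fin a, v (.inl i) := by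
    intro j hj
    have := congrFun heig (.inr (.inl j))
    rw [skab_mulVec_expand] at this
    simp only [Pi.smul_apply, smul_eq_mul] at this
    rw [← this]
    have e1 : (∑ i : Fin a, if (SKab a b).Adj (.inr (.inl j)) (.inl i) then v (.inl i) else 0)
        = ∑ i : Fin a, v (.inl i) := by
      apply Finset.sum_congr rfl; intro i _
      rw [if_pos (((SKab a b).adj_comm _ _).mp ((skab_adj_lr1 a b i j).mpr (by tauto)))]
    have e2 : (∑ j' : Fin b, if (SKab a b).Adj (.inr (.inl j)) (.inr (.inl j')) then v (.inr (.inl j')) else 0) = 0 := by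
      apply Finset.sum_eq_zero; intro j' _; rw [if_neg (skab_adj_r1r1 a b j j')]
    rw [e1, e2, if_neg (by rw [skab_adj_r1r2]; exact hj)]
    ring
  have hconstA : ∀ i : Fin a, i.val ≠ 0 → v (.inl i) = x2 := by
    intro i hi
    have h1 := keyA i hi
    have h2 := keyA ⟨1, by omega⟩ (by simp)
    apply mul_left_cancel₀ hμ
    rw [h1, ← h2]
  have hconstB : ∀ j : Fin b, j.val ≠ 0 → v (.inr (.inl j)) = y2 := by
    intro j hj
    have h1 := keyB j hj
    have h2 := keyB ⟨1, by omega⟩ (by simp)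
    apply mul_left_cancel₀ hμ
    rw [h1, ← h2]
  have hvlift : v = lift5 a b x1 x2 y1 y2 z := by
    funext w
    match w with
    | .inl i =>
      by_cases hi : i.val = 0
      · have : i = ⟨0, by omega⟩ := by exact Fin.ext hi
        rw [this]; simp [lift5, hx1]
      · rw [hconstA i hi]; simp [lift5, hi]
    | .inr (.inl j) =>
      by_cases hj : j.val = 0
      · have : j = ⟨0, by omega⟩ := by exact Fin.ext hj
        rw [this]; simp [lift5, hy1]
      · rw [hconstB j hj]; simp [lift5, hj]
    | .inr (.inr u) => simp [lift5, hz]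
  rw [hvlift] at heig
  have hmv := fun w => (congrFun heig w).symm.trans (skab_mulVec a b ha1 hb1 x1 x2 y1 y2 z w)
  have e1 := hmv (.inl ⟨0, by omega⟩)
  have e2 := hmv (.inl ⟨1, by omega⟩)
  have e3 := hmv (.inr (.inl ⟨0, by omega⟩))
  have e4 := hmv (.inr (.inl ⟨1, by omega⟩))
  have e5 := hmv (.inr (.inr ()))
  simp [lift5, Pi.smul_apply] at e1 e2 e3 e4 e5
  apply quintic_of_system ((a:ℝ)-1) ((b:ℝ)-1) μ x1 x2 y1 y2 z (by linarith) (by linarith)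
    (by linarith) (by linarith) (by linarith)
  intro ⟨a1,a2,a3,a4,a5⟩
  apply hv
  rw [hvlift, a1, a2, a3, a4, a5]
  funext w
  match w with
  | .inl i => by_cases hi : i.val = 0 <;> simp [lift5, hi]
  | .inr (.inl j) => by_cases hj : j.val = 0 <;> simp [lift5, hj]
  | .inr (.inr u) => simp [lift5]

lemma aux_pos2 (c m x : ℝ) (hc : 0 < c) (hm : 0 < m) (hx : 2 ≤ x) :
    0 < (c + 3*m)*x - 2*m := by nlinarith

set_option maxHeartbeats 1000000 in
/-- For integers `t ≥ s ≥ 1`, `λ₁(S(K_{s+2,t+2})) > λ₁(S(K_{s+1,t+3}))`. -/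
theorem stmt_9 (s t : ℕ) (hs : 1 ≤ s) (hst : s ≤ t) :
    kthEig (SKab (s + 1) (t + 3)) 0 < kthEig (SKab (s + 2) (t + 2)) 0 := by
  haveI : Nonempty (Fin (s+1) ⊕ Fin (t+3) ⊕ Unit) := ⟨.inr (.inr ())⟩
  haveI : Nonempty (Fin (s+2) ⊕ Fin (t+2) ⊕ Unit) := ⟨.inr (.inr ())⟩
  have hS : (1:ℝ) ≤ (s:ℝ) := by exact_mod_cast hs
  have hT : (s:ℝ) ≤ (t:ℝ) := by exact_mod_cast hst
  set Ph : ℝ → ℝ := fun x =>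
    x^5 - (2+(s:ℝ)+((t:ℝ)+2)+(s:ℝ)*((t:ℝ)+2))*x^3
      + ((s:ℝ)+((t:ℝ)+2)+3*((s:ℝ)*((t:ℝ)+2)))*x - 2*((s:ℝ)*((t:ℝ)+2)) with hPh
  set Pg : ℝ → ℝ := fun x =>
    x^5 - (2+((s:ℝ)+1)+((t:ℝ)+1)+((s:ℝ)+1)*((t:ℝ)+1))*x^3
      + (((s:ℝ)+1)+((t:ℝ)+1)+3*(((s:ℝ)+1)*((t:ℝ)+1)))*x
      - 2*(((s:ℝ)+1)*((t:ℝ)+1)) with hPg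
  have hPhC : Continuous Ph := by rw [hPh]; continuity
  have hPgC : Continuous Pg := by rw [hPg]; continuity
  set lamH := kthEig (SKab (s + 1) (t + 3)) 0 with hlamH
  set lamG := kthEig (SKab (s + 2) (t + 2)) 0 with hlamG
  have hEigH : ∀ x : ℝ, Ph x = 0 → x ≤ lamH := by
    intro x hx
    simp only [hPh] at hx
    obtain ⟨v, hv, hev⟩ := skab_eigen_of_root (s+1) (t+3) (by omega) (by omega) x
      (by push_cast; linear_combination hx)
    exact eig_le_kthEig_zero _ hv hev
  have hEigG : ∀ x : ℝ, Pg x = 0 → x ≤ lamG := by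
    intro x hx
    simp only [hPg] at hx
    obtain ⟨v, hv, hev⟩ := skab_eigen_of_root (s+2) (t+2) (by omega) (by omega) x
      (by push_cast; linear_combination hx)
    exact eig_le_kthEig_zero _ hv hev
  -- lower bound for lamH : a root of Ph in (2, BH]
  set BH : ℝ := 2 + ((s:ℝ) + ((t:ℝ)+2)) + (s:ℝ)*((t:ℝ)+2) with hBH
  have h2BH : (2:ℝ) ≤ BH := by rw [hBH]; nlinarith
  have hPh2 : Ph 2 < 0 := by
    simp only [hPh]
    nlinarith
  have hPhBH : 0 < Ph BH := by
    have key : Ph BH = BH^3*(BH^2 - BH)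
        + (((s:ℝ)+((t:ℝ)+2)+3*((s:ℝ)*((t:ℝ)+2)))*BH - 2*((s:ℝ)*((t:ℝ)+2))) := by
      simp only [hPh, hBH]; ring
    rw [key]
    have h1 : (0:ℝ) ≤ BH^3 := by positivity
    have h2 : (0:ℝ) ≤ BH^2 - BH := by nlinarith
    have h3 : (0:ℝ) < ((s:ℝ)+((t:ℝ)+2)+3*((s:ℝ)*((t:ℝ)+2)))*BH - 2*((s:ℝ)*((t:ℝ)+2)) := by
      have e : ((s:ℝ)+((t:ℝ)+2)+3*((s:ℝ)*((t:ℝ)+2)))*BH - 2*((s:ℝ)*((t:ℝ)+2))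
          = (((s:ℝ)+((t:ℝ)+2)) + 3*((s:ℝ)*((t:ℝ)+2)))*BH - 2*((s:ℝ)*((t:ℝ)+2)) := by ring
      rw [e]
      exact aux_pos2 _ _ _ (by nlinarith) (by nlinarith) h2BH
    nlinarith
  obtain ⟨ρ, hρmem, hρ0⟩ := intermediate_value_Icc h2BH hPhC.continuousOn
    ⟨le_of_lt hPh2, le_of_lt hPhBH⟩
  have hρ2 : 2 < ρ := by
    rcases lt_or_eq_of_le hρmem.1 with h | h
    · exact h
    · exfalso; rw [← h] at hρ0; linarith
  have hlamH2 : 2 < lamH := lt_of_lt_of_le hρ2 (hEigH ρ hρ0)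
  -- lamH is a root of Ph
  obtain ⟨v, hv, hev⟩ := kthEig_zero_is_eigenvalue (SKab (s + 1) (t + 3))
  have hPhlamH : Ph lamH = 0 := by
    have h := skab_root_of_eigen (s+1) (t+3) (by omega) (by omega) lamH v hv hev
      (by intro h0; rw [h0] at hlamH2; linarith)
    simp only [hPh]
    push_cast at h
    linear_combination h
  -- upper bound lamH < BG
  set BG : ℝ := 2 + ((s:ℝ) + (t:ℝ) + 2) + ((s:ℝ)+1)*((t:ℝ)+1) with hBG
  have hlamHBG : lamH < BG := by
    have h5 : Ph lamH = 0 := hPhlamH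
    simp only [hPh] at h5
    have hl0 : (0:ℝ) < lamH := by linarith
    have hkey : lamH^3*((2 + ((s:ℝ) + ((t:ℝ)+2)) + (s:ℝ)*((t:ℝ)+2)) - lamH^2)
        = ((s:ℝ)+((t:ℝ)+2)+3*((s:ℝ)*((t:ℝ)+2)))*lamH - 2*((s:ℝ)*((t:ℝ)+2)) := by
      linear_combination -h5
    have hpos : (0:ℝ) < ((s:ℝ)+((t:ℝ)+2)+3*((s:ℝ)*((t:ℝ)+2)))*lamH - 2*((s:ℝ)*((t:ℝ)+2)) := by
      have e : ((s:ℝ)+((t:ℝ)+2)+3*((s:ℝ)*((t:ℝ)+2)))*lamH - 2*((s:ℝ)*((t:ℝ)+2))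
          = (((s:ℝ)+((t:ℝ)+2)) + 3*((s:ℝ)*((t:ℝ)+2)))*lamH - 2*((s:ℝ)*((t:ℝ)+2)) := by ring
      rw [e]
      exact aux_pos2 _ _ _ (by nlinarith) (by nlinarith) (by linarith)
    have hl3 : (0:ℝ) < lamH^3 := by positivity
    have hsq : lamH^2 < 2 + ((s:ℝ) + ((t:ℝ)+2)) + (s:ℝ)*((t:ℝ)+2) := by
      nlinarith
    rw [hBG]
    nlinarith
  have hPglamH : Pg lamH < 0 := by
    have key : Pg lamH = Ph lamH - ((t:ℝ)-(s:ℝ)+1)*((lamH-1)^2*(lamH+2)) := by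
      simp only [hPg, hPh]; ring
    rw [key, hPhlamH]
    have h1 : (0:ℝ) < (lamH-1)^2*(lamH+2) :=
      mul_pos (pow_pos (by linarith) 2) (by linarith)
    nlinarith
  have hPgBG : 0 < Pg BG := by
    have key : Pg BG = BG^3*(BG^2 - BG)
        + ((((s:ℝ)+1)+((t:ℝ)+1)+3*(((s:ℝ)+1)*((t:ℝ)+1)))*BG - 2*(((s:ℝ)+1)*((t:ℝ)+1))) := by
      simp only [hPg, hBG]; ring
    rw [key]
    have h1 : (0:ℝ) ≤ BG^3 := by positivity
    have h2 : (0:ℝ) ≤ BG^2 - BG := by nlinarith [hBG, hS, hT]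
    have h3 : (0:ℝ) < (((s:ℝ)+1)+((t:ℝ)+1)+3*(((s:ℝ)+1)*((t:ℝ)+1)))*BG - 2*(((s:ℝ)+1)*((t:ℝ)+1)) := by
      have hBG2 : (2:ℝ) ≤ BG := by rw [hBG]; nlinarith
      exact aux_pos2 _ _ _ (by nlinarith) (by nlinarith) hBG2
    nlinarith
  obtain ⟨σ, hσmem, hσ0⟩ := intermediate_value_Icc (le_of_lt hlamHBG) hPgC.continuousOn
    ⟨le_of_lt hPglamH, le_of_lt hPgBG⟩
  have hσgt : lamH < σ := by
    rcases lt_or_eq_of_le hσmem.1 with h | h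
    · exact h
    · exfalso; rw [← h] at hσ0; linarith
  exact lt_of_lt_of_le hσgt (hEigG σ hσ0)
end

section
/- For integers t ≥ s ≥ 1 with s + t = n − 5, the largest adjacency eigenvalue of S(K_{⌊(n−1)/2⌋,⌈(n−1)/2⌉}) is at least that of S(K_{s+2,t+2}), with equality if and only if (s+2, t+2) = (⌊(n−1)/2⌋, ⌈(n−1)/2⌉). -/
open Matrix Finset

set_option linter.unusedSectionVars false
set_option linter.unusedVariables false
set_option maxHeartbeats 1000000

open scoped RealInnerProductSpace

section Spectral

variable {V : Type*} [Fintype V] [DecidableEq V] [Nonempty V]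
  (G : SimpleGraph V) [DecidableRel G.Adj]

lemma card_pos' : 0 < Fintype.card V := Fintype.card_pos

/-- kthEig G 0 is an eigenvalue value. -/
lemma kthEig_zero_eq :
    kthEig G 0 = (adjMatrix_isHermitian G).eigenvalues
      ((Fintype.equivFin V).symm (Tuple.sort (adjEig G) (Fin.rev ⟨0, card_pos' (V := V)⟩))) := by
  rw [kthEig, dif_pos (card_pos' (V := V))]; rfl

lemma eigenvalues_le_kthEig_zero (v : V) :
    (adjMatrix_isHermitian G).eigenvalues v ≤ kthEig G 0 := by
  have h0 : (0 : ℕ) < Fintype.card V := card_pos' (V := V)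
  rw [kthEig, dif_pos h0]
  have hmono := Tuple.monotone_sort (adjEig G)
  set σ := Tuple.sort (adjEig G)
  have hv : (adjMatrix_isHermitian G).eigenvalues v
      = adjEig G (Fintype.equivFin V v) := by
    simp [adjEig]
  rw [hv]
  have : Fintype.equivFin V v = σ (σ.symm (Fintype.equivFin V v)) := by simp
  rw [this]
  have : σ.symm (Fintype.equivFin V v) ≤ Fin.rev ⟨0, h0⟩ := by
    rw [Fin.le_def, Fin.rev]
    simp only []
    omega
  exact hmono this

/-- There is an eigenvector for the top eigenvalue. -/
lemma exists_top_eigenvector :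
    ∃ y : V → ℝ, y ≠ 0 ∧ (G.adjMatrix ℝ) *ᵥ y = kthEig G 0 • y := by
  classical
  set hA := adjMatrix_isHermitian G
  set i := (Fintype.equivFin V).symm (Tuple.sort (adjEig G) (Fin.rev ⟨0, card_pos' (V := V)⟩))
  refine ⟨hA.eigenvectorBasis i, ?_, ?_⟩
  · have := hA.eigenvectorBasis.orthonormal.ne_zero i
    intro h
    apply this
    ext v
    exact congrFun h v
  · rw [kthEig_zero_eq]
    exact hA.mulVec_eigenvectorBasis i

end Spectral


private lemma sum_dot {ι V : Type*} [Fintype ι] [Fintype V] (f : ι → V → ℝ) (w : V → ℝ) :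
    (∑ i, f i) ⬝ᵥ w = ∑ i, (f i) ⬝ᵥ w := by
  simp only [dotProduct, Finset.sum_apply, Finset.sum_mul]
  rw [Finset.sum_comm]

private lemma dot_sum {ι V : Type*} [Fintype ι] [Fintype V] (w : V → ℝ) (f : ι → V → ℝ) :
    w ⬝ᵥ (∑ i, f i) = ∑ i, w ⬝ᵥ (f i) := by
  simp only [dotProduct, Finset.sum_apply, Finset.mul_sum]
  rw [Finset.sum_comm]

theorem rayleigh_le {V : Type*} [Fintype V] [DecidableEq V]
    (A : Matrix V V ℝ) (hA : A.IsHermitian) (lam : ℝ)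
    (hlam : ∀ v, hA.eigenvalues v ≤ lam) (x : V → ℝ) :
    x ⬝ᵥ (A *ᵥ x) ≤ lam * (x ⬝ᵥ x) := by
  classical
  set B := hA.eigenvectorBasis with hB
  set y : EuclideanSpace ℝ V := WithLp.toLp 2 x with hy
  set c : V → ℝ := fun i => B.repr y i with hc
  have hinner : ∀ z w : EuclideanSpace ℝ V, ⟪z, w⟫ = (z : V → ℝ) ⬝ᵥ (w : V → ℝ) := by
    intro z w
    simp [PiLp.inner_apply, RCLike.inner_apply, dotProduct, mul_comm]
  have horth : ∀ i j, (B i : V → ℝ) ⬝ᵥ (B j : V → ℝ) = if i = j then 1 else 0 := by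
    intro i j
    have h := B.orthonormal
    rw [orthonormal_iff_ite] at h
    rw [← hinner (B i) (B j)]
    exact h i j
  have hx : x = ∑ i, c i • (B i : V → ℝ) := by
    have h := congrArg WithLp.ofLp (B.sum_repr y)
    rw [WithLp.ofLp_sum] at h
    simp only [WithLp.ofLp_smul] at h
    exact h.symm
  have hAB : ∀ i, A *ᵥ (B i : V → ℝ) = hA.eigenvalues i • (B i : V → ℝ) :=
    fun i => hA.mulVec_eigenvectorBasis i
  have hAy : A *ᵥ x = ∑ i, (c i * hA.eigenvalues i) • (B i : V → ℝ) := by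
    conv_lhs => rw [hx]
    have h1 : A *ᵥ (∑ i, c i • (B i : V → ℝ))
        = ∑ i, A *ᵥ (c i • (B i : V → ℝ)) :=
      map_sum A.mulVecLin (fun i => c i • (B i : V → ℝ)) univ
    rw [h1]
    refine Finset.sum_congr rfl fun i _ => ?_
    rw [Matrix.mulVec_smul, hAB i, smul_smul]
  have hnum : x ⬝ᵥ (A *ᵥ x) = ∑ i, hA.eigenvalues i * (c i)^2 := by
    conv_lhs => rw [hAy]
    conv_lhs => rw [hx]
    rw [sum_dot]
    refine Finset.sum_congr rfl fun i _ => ?_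
    rw [smul_dotProduct, dot_sum]
    have : ∀ j, (B i : V → ℝ) ⬝ᵥ ((c j * hA.eigenvalues j) • (B j : V → ℝ))
        = (c j * hA.eigenvalues j) * if i = j then 1 else 0 := by
      intro j
      rw [dotProduct_smul, horth]
      simp [smul_eq_mul]
    simp only [this]
    rw [Finset.sum_eq_single i]
    · simp [smul_eq_mul]; ring
    · intro j _ hj
      simp [Ne.symm hj]
    · intro h
      exact absurd (Finset.mem_univ i) h
  have hden : x ⬝ᵥ x = ∑ i, (c i)^2 := by
    conv_lhs => rw [hx]
    rw [sum_dot]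
    refine Finset.sum_congr rfl fun i _ => ?_
    rw [smul_dotProduct, dot_sum]
    have : ∀ j, (B i : V → ℝ) ⬝ᵥ (c j • (B j : V → ℝ))
        = c j * if i = j then 1 else 0 := by
      intro j
      rw [dotProduct_smul, horth]
      simp [smul_eq_mul]
    simp only [this]
    rw [Finset.sum_eq_single i]
    · simp [smul_eq_mul]; ring
    · intro j _ hj
      simp [Ne.symm hj]
    · intro h
      exact absurd (Finset.mem_univ i) h
  rw [hnum, hden, Finset.mul_sum]
  apply Finset.sum_le_sum
  intro i _
  nlinarith [hlam i, sq_nonneg (c i)]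


section X
variable {V : Type*} [Fintype V] [DecidableEq V]
  (A : Matrix V V ℝ)

lemma dot_mulVec_symm (hA : A.IsHermitian) (x z : V → ℝ) :
    x ⬝ᵥ (A *ᵥ z) = (A *ᵥ x) ⬝ᵥ z := by
  have ht : Aᵀ = A := by
    have h := hA
    unfold Matrix.IsHermitian at h
    rw [Matrix.conjTranspose_eq_transpose_of_trivial] at h
    exact h
  simp only [Matrix.mulVec, dotProduct, Finset.mul_sum, Finset.sum_mul]
  rw [Finset.sum_comm]
  refine Finset.sum_congr rfl fun u _ => Finset.sum_congr rfl fun v _ => ?_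
  have h2 : A v u = A u v := by
    have := congrFun (congrFun ht u) v
    simpa [Matrix.transpose_apply] using this
  rw [h2]; ring

variable (hA : A.IsHermitian) (hnn : ∀ u v, 0 ≤ A u v)
  (lam : ℝ) (hlam0 : 0 ≤ lam)
  (heig : ∃ y : V → ℝ, y ≠ 0 ∧ A *ᵥ y = lam • y)

include hA hnn hlam0 heig in
theorem lam_lt_of_strict_dominant (x : V → ℝ) (hx : ∀ v, 0 < x v) (μ : ℝ)
    (hle : ∀ v, (A *ᵥ x) v < μ * x v) : lam < μ := by
  obtain ⟨y, hy0, hy⟩ := heig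
  set z : V → ℝ := fun v => |y v| with hzdef
  have hznn : ∀ v, 0 ≤ z v := fun v => abs_nonneg _
  have hzv : ∃ v, 0 < z v := by
    have : ∃ v, y v ≠ 0 := by
      by_contra h
      push_neg at h
      exact hy0 (funext fun v => h v)
    obtain ⟨v, hv⟩ := this
    exact ⟨v, abs_pos.mpr hv⟩
  obtain ⟨v0, hv0⟩ := hzv
  have hAz : ∀ v, lam * z v ≤ (A *ᵥ z) v := by
    intro v
    have h1 : |(A *ᵥ y) v| = lam * z v := by
      rw [hy]
      simp only [Pi.smul_apply, smul_eq_mul, abs_mul, abs_of_nonneg hlam0, hzdef]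
    rw [← h1]
    calc |(A *ᵥ y) v| = |∑ u, A v u * y u| := by rw [Matrix.mulVec, dotProduct]
      _ ≤ ∑ u, |A v u * y u| := Finset.abs_sum_le_sum_abs _ _
      _ = ∑ u, A v u * z u := by
          refine Finset.sum_congr rfl fun u _ => ?_
          rw [abs_mul, abs_of_nonneg (hnn v u)]
      _ = (A *ᵥ z) v := by rw [Matrix.mulVec, dotProduct]
  have hxz : 0 < x ⬝ᵥ z := by
    refine Finset.sum_pos' (fun v _ => mul_nonneg (hx v).le (hznn v)) ⟨v0, Finset.mem_univ v0, ?_⟩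
    exact mul_pos (hx v0) hv0
  have hchain : lam * (x ⬝ᵥ z) < μ * (x ⬝ᵥ z) := by
    calc lam * (x ⬝ᵥ z) = ∑ v, x v * (lam * z v) := by
          rw [dotProduct, Finset.mul_sum]; exact Finset.sum_congr rfl fun v _ => by ring
      _ ≤ ∑ v, x v * (A *ᵥ z) v :=
          Finset.sum_le_sum fun v _ => mul_le_mul_of_nonneg_left (hAz v) (hx v).le
      _ = x ⬝ᵥ (A *ᵥ z) := rfl
      _ = (A *ᵥ x) ⬝ᵥ z := dot_mulVec_symm A hA x z
      _ < ∑ v, (μ * x v) * z v := by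
          refine Finset.sum_lt_sum (fun v _ => mul_le_mul_of_nonneg_right (hle v).le (hznn v))
            ⟨v0, Finset.mem_univ v0, ?_⟩
          exact mul_lt_mul_of_pos_right (hle v0) hv0
      _ = μ * (x ⬝ᵥ z) := by
          rw [dotProduct, Finset.mul_sum]; exact Finset.sum_congr rfl fun v _ => by ring
  exact lt_of_mul_lt_mul_right hchain hxz.le

include hA in
theorem lt_lam_of_strict_subdominant
    (hray : ∀ x : V → ℝ, x ⬝ᵥ (A *ᵥ x) ≤ lam * (x ⬝ᵥ x))
    (x : V → ℝ) (hx : ∀ v, 0 ≤ x v) (μ : ℝ)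
    (hge : ∀ v, μ * x v ≤ (A *ᵥ x) v) (v0 : V) (h1 : 0 < x v0)
    (h2 : μ * x v0 < (A *ᵥ x) v0) : μ < lam := by
  have hxx : 0 < x ⬝ᵥ x := by
    refine Finset.sum_pos' (fun v _ => mul_nonneg (hx v) (hx v)) ⟨v0, Finset.mem_univ v0, ?_⟩
    exact mul_pos h1 h1
  have hchain : μ * (x ⬝ᵥ x) < lam * (x ⬝ᵥ x) := by
    calc μ * (x ⬝ᵥ x) = ∑ v, (μ * x v) * x v := by
          rw [dotProduct, Finset.mul_sum]; exact Finset.sum_congr rfl fun v _ => by ring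
      _ < ∑ v, x v * (A *ᵥ x) v := by
          refine Finset.sum_lt_sum (fun v _ => ?_) ⟨v0, Finset.mem_univ v0, ?_⟩
          · calc (μ * x v) * x v ≤ (A *ᵥ x) v * x v :=
                mul_le_mul_of_nonneg_right (hge v) (hx v)
              _ = x v * (A *ᵥ x) v := by ring
          · calc (μ * x v0) * x v0 < (A *ᵥ x) v0 * x v0 :=
                mul_lt_mul_of_pos_right h2 h1
              _ = x v0 * (A *ᵥ x) v0 := by ring
      _ = x ⬝ᵥ (A *ᵥ x) := rfl
      _ ≤ lam * (x ⬝ᵥ x) := hray x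
  exact lt_of_mul_lt_mul_right hchain hxx.le

end X

namespace SKabFacts

variable {a b : ℕ}

lemma adj_inl_inr (i : Fin a) (j : Fin b) :
    (SKab a b).Adj (Sum.inl i) (Sum.inr (Sum.inl j)) ↔ ¬(i.val = 0 ∧ j.val = 0) := by
  simp [SKab, SimpleGraph.fromRel_adj]

lemma adj_inl_w (i : Fin a) (u : Unit) :
    (SKab a b).Adj (Sum.inl i) (Sum.inr (Sum.inr u)) ↔ i.val = 0 := by
  simp [SKab, SimpleGraph.fromRel_adj]

lemma adj_inr_w (j : Fin b) (u : Unit) :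
    (SKab a b).Adj (Sum.inr (Sum.inl j)) (Sum.inr (Sum.inr u)) ↔ j.val = 0 := by
  simp [SKab, SimpleGraph.fromRel_adj]

lemma not_adj_inl_inl (i i' : Fin a) : ¬ (SKab a b).Adj (Sum.inl i) (Sum.inl i') := by
  simp [SKab, SimpleGraph.fromRel_adj]

lemma not_adj_inr_inr (j j' : Fin b) :
    ¬ (SKab a b).Adj (Sum.inr (Sum.inl j)) (Sum.inr (Sum.inl j')) := by
  simp [SKab, SimpleGraph.fromRel_adj]

lemma not_adj_w_w (u u' : Unit) :
    ¬ (SKab a b).Adj (Sum.inr (Sum.inr u)) (Sum.inr (Sum.inr u')) := by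
  simp [SKab, SimpleGraph.fromRel_adj]

end SKabFacts

namespace SKabFacts


lemma adj_inr_inl {a b : ℕ} (j : Fin b) (i : Fin a) :
    (SKab a b).Adj (Sum.inr (Sum.inl j)) (Sum.inl i) ↔ ¬(i.val = 0 ∧ j.val = 0) := by
  rw [SimpleGraph.adj_comm]; exact adj_inl_inr i j

lemma adj_w_inl {a b : ℕ} (u : Unit) (i : Fin a) :
    (SKab a b).Adj (Sum.inr (Sum.inr u) : Fin a ⊕ Fin b ⊕ Unit) (Sum.inl i) ↔ i.val = 0 := by
  rw [SimpleGraph.adj_comm]; exact adj_inl_w i u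

lemma adj_w_inr {a b : ℕ} (u : Unit) (j : Fin b) :
    (SKab a b).Adj (Sum.inr (Sum.inr u)) (Sum.inr (Sum.inl j)) ↔ j.val = 0 := by
  rw [SimpleGraph.adj_comm]; exact adj_inr_w j u

/-- A vector on the vertices of `SKab a b` that is constant on the five classes. -/
def lift (a b : ℕ) (w c1 cA c2 cB : ℝ) : Fin a ⊕ Fin b ⊕ Unit → ℝ :=
  Sum.elim (fun i => if (i : ℕ) = 0 then c1 else cA)
    (Sum.elim (fun j => if (j : ℕ) = 0 then c2 else cB) (fun _ => w))

lemma hsum {m : ℕ} (hm : 1 ≤ m) (c d : ℝ) :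
    (∑ i : Fin m, if (i : ℕ) = 0 then c else d) = c + ((m : ℝ) - 1) * d := by
  have h : (∑ i : Fin m, if (i : ℕ) = 0 then c else d)
      = ∑ i : Fin m, (d + if i = (⟨0, hm⟩ : Fin m) then c - d else 0) := by
    refine Finset.sum_congr rfl fun i _ => ?_
    by_cases hi : i = (⟨0, hm⟩ : Fin m)
    · have : (i : ℕ) = 0 := by rw [hi]
      simp [this, hi]
    · have : ¬ (i : ℕ) = 0 := by
        intro h0
        exact hi (Fin.ext h0)
      simp [this, hi]
  rw [h, Finset.sum_add_distrib, Finset.sum_const, Finset.sum_ite_eq' Finset.univ]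
  simp [Finset.card_univ, nsmul_eq_mul]
  ring

lemma mulVec_lift {a b : ℕ} (ha : 1 ≤ a) (hb : 1 ≤ b) (w c1 cA c2 cB : ℝ) :
    (SKab a b).adjMatrix ℝ *ᵥ lift a b w c1 cA c2 cB
      = lift a b (c1 + c2) (w + ((b:ℝ)-1)*cB) (c2 + ((b:ℝ)-1)*cB)
          (w + ((a:ℝ)-1)*cA) (c1 + ((a:ℝ)-1)*cA) := by
  funext v
  rw [show ((SKab a b).adjMatrix ℝ *ᵥ lift a b w c1 cA c2 cB) v
      = ∑ u, (if (SKab a b).Adj v u then (1:ℝ) else 0) * lift a b w c1 cA c2 cB u from by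
    simp [Matrix.mulVec, dotProduct, SimpleGraph.adjMatrix_apply]]
  rw [Fintype.sum_sum_type]
  conv_lhs => rw [Fintype.sum_sum_type]
  rcases v with i | j | u
  · -- v = inl i
    by_cases hi : (i : ℕ) = 0
    · have e1 : (∑ i' : Fin a, (if (SKab a b).Adj (Sum.inl i) (Sum.inl i') then (1:ℝ) else 0)
          * lift a b w c1 cA c2 cB (Sum.inl i')) = 0 := by
        refine Finset.sum_eq_zero fun i' _ => ?_
        simp [not_adj_inl_inl]
      have e2 : (∑ j : Fin b, (if (SKab a b).Adj (Sum.inl i) (Sum.inr (Sum.inl j)) then (1:ℝ) else 0)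
          * lift a b w c1 cA c2 cB (Sum.inr (Sum.inl j)))
          = ∑ j : Fin b, if (j : ℕ) = 0 then (0:ℝ) else cB := by
        refine Finset.sum_congr rfl fun j _ => ?_
        by_cases hj : (j : ℕ) = 0
        · simp [adj_inl_inr, hi, hj, lift]
        · simp [adj_inl_inr, hi, hj, lift]
      have e3 : (∑ u : Unit, (if (SKab a b).Adj (Sum.inl i) (Sum.inr (Sum.inr u)) then (1:ℝ) else 0)
          * lift a b w c1 cA c2 cB (Sum.inr (Sum.inr u))) = w := by
        simp [adj_inl_w, hi, lift]
      rw [e1, e2, e3, hsum hb]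
      simp [lift, hi]
      try ring
    · have e1 : (∑ i' : Fin a, (if (SKab a b).Adj (Sum.inl i) (Sum.inl i') then (1:ℝ) else 0)
          * lift a b w c1 cA c2 cB (Sum.inl i')) = 0 := by
        refine Finset.sum_eq_zero fun i' _ => ?_
        simp [not_adj_inl_inl]
      have e2 : (∑ j : Fin b, (if (SKab a b).Adj (Sum.inl i) (Sum.inr (Sum.inl j)) then (1:ℝ) else 0)
          * lift a b w c1 cA c2 cB (Sum.inr (Sum.inl j)))
          = ∑ j : Fin b, if (j : ℕ) = 0 then c2 else cB := by
        refine Finset.sum_congr rfl fun j _ => ?_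
        by_cases hj : (j : ℕ) = 0
        · simp [adj_inl_inr, hi, hj, lift]
        · simp [adj_inl_inr, hi, hj, lift]
      have e3 : (∑ u : Unit, (if (SKab a b).Adj (Sum.inl i) (Sum.inr (Sum.inr u)) then (1:ℝ) else 0)
          * lift a b w c1 cA c2 cB (Sum.inr (Sum.inr u))) = 0 := by
        simp [adj_inl_w, hi, lift]
      rw [e1, e2, e3, hsum hb]
      simp [lift, hi]
  · -- v = inr (inl j)
    by_cases hj : (j : ℕ) = 0
    · have e1 : (∑ i : Fin a, (if (SKab a b).Adj (Sum.inr (Sum.inl j)) (Sum.inl i) then (1:ℝ) else 0)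
          * lift a b w c1 cA c2 cB (Sum.inl i))
          = ∑ i : Fin a, if (i : ℕ) = 0 then (0:ℝ) else cA := by
        refine Finset.sum_congr rfl fun i _ => ?_
        by_cases hi : (i : ℕ) = 0
        · simp [adj_inr_inl, hi, hj, lift]
        · simp [adj_inr_inl, hi, hj, lift]
      have e2 : (∑ j' : Fin b, (if (SKab a b).Adj (Sum.inr (Sum.inl j)) (Sum.inr (Sum.inl j')) then (1:ℝ) else 0)
          * lift a b w c1 cA c2 cB (Sum.inr (Sum.inl j'))) = 0 := by
        refine Finset.sum_eq_zero fun j' _ => ?_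
        simp [not_adj_inr_inr]
      have e3 : (∑ u : Unit, (if (SKab a b).Adj (Sum.inr (Sum.inl j)) (Sum.inr (Sum.inr u)) then (1:ℝ) else 0)
          * lift a b w c1 cA c2 cB (Sum.inr (Sum.inr u))) = w := by
        simp [adj_inr_w, hj, lift]
      rw [e1, e2, e3, hsum ha]
      simp [lift, hj]
      try ring
    · have e1 : (∑ i : Fin a, (if (SKab a b).Adj (Sum.inr (Sum.inl j)) (Sum.inl i) then (1:ℝ) else 0)
          * lift a b w c1 cA c2 cB (Sum.inl i))
          = ∑ i : Fin a, if (i : ℕ) = 0 then c1 else cA := by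
        refine Finset.sum_congr rfl fun i _ => ?_
        by_cases hi : (i : ℕ) = 0
        · simp [adj_inr_inl, hi, hj, lift]
        · simp [adj_inr_inl, hi, hj, lift]
      have e2 : (∑ j' : Fin b, (if (SKab a b).Adj (Sum.inr (Sum.inl j)) (Sum.inr (Sum.inl j')) then (1:ℝ) else 0)
          * lift a b w c1 cA c2 cB (Sum.inr (Sum.inl j'))) = 0 := by
        refine Finset.sum_eq_zero fun j' _ => ?_
        simp [not_adj_inr_inr]
      have e3 : (∑ u : Unit, (if (SKab a b).Adj (Sum.inr (Sum.inl j)) (Sum.inr (Sum.inr u)) then (1:ℝ) else 0)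
          * lift a b w c1 cA c2 cB (Sum.inr (Sum.inr u))) = 0 := by
        simp [adj_inr_w, hj, lift]
      rw [e1, e2, e3, hsum ha]
      simp [lift, hj]
  · -- v = w
    have e1 : (∑ i : Fin a, (if (SKab a b).Adj (Sum.inr (Sum.inr u)) (Sum.inl i) then (1:ℝ) else 0)
        * lift a b w c1 cA c2 cB (Sum.inl i))
        = ∑ i : Fin a, if (i : ℕ) = 0 then c1 else (0:ℝ) := by
      refine Finset.sum_congr rfl fun i _ => ?_
      by_cases hi : (i : ℕ) = 0
      · simp [adj_w_inl, hi, lift]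
      · simp [adj_w_inl, hi, lift]
    have e2 : (∑ j : Fin b, (if (SKab a b).Adj (Sum.inr (Sum.inr u)) (Sum.inr (Sum.inl j)) then (1:ℝ) else 0)
        * lift a b w c1 cA c2 cB (Sum.inr (Sum.inl j)))
        = ∑ j : Fin b, if (j : ℕ) = 0 then c2 else (0:ℝ) := by
      refine Finset.sum_congr rfl fun j _ => ?_
      by_cases hj : (j : ℕ) = 0
      · simp [adj_w_inr, hj, lift]
      · simp [adj_w_inr, hj, lift]
    have e3 : (∑ u' : Unit, (if (SKab a b).Adj (Sum.inr (Sum.inr u)) (Sum.inr (Sum.inr u')) then (1:ℝ) else 0)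
        * lift a b w c1 cA c2 cB (Sum.inr (Sum.inr u'))) = 0 := by
      simp [not_adj_w_w]
    rw [e1, e2, e3, hsum ha, hsum hb]
    simp [lift]
    try ring

end SKabFacts


noncomputable def Pw (A B x : ℝ) : ℝ := x^4 - (A*B-1)*x^2 + (A-1)*(B-1)
noncomputable def Pa1 (A B x : ℝ) : ℝ := x^3 - B*(A-1)*x + (A-1)*(B-1)
noncomputable def PA (A B x : ℝ) : ℝ := x^2 + (B-1)*(x-1)
noncomputable def Pb1 (A B x : ℝ) : ℝ := x^3 - A*(B-1)*x + (A-1)*(B-1)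
noncomputable def PB (A B x : ℝ) : ℝ := x^2 + (A-1)*(x-1)
noncomputable def fpol (A B x : ℝ) : ℝ :=
  x^5 - (A*B+1)*x^3 + (3*A*B-2*A-2*B+1)*x - 2*(A*B-A-B+1)

-- identities
lemma idw (A B x : ℝ) : Pa1 A B x + Pb1 A B x = x * Pw A B x - fpol A B x := by
  unfold Pa1 Pb1 Pw fpol; ring
lemma ida1 (A B x : ℝ) : Pw A B x + (B-1) * PB A B x = x * Pa1 A B x := by
  unfold Pw PB Pa1; ring
lemma idA (A B x : ℝ) : Pb1 A B x + (B-1) * PB A B x = x * PA A B x := by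
  unfold Pb1 PB PA; ring
lemma idb1 (A B x : ℝ) : Pw A B x + (A-1) * PA A B x = x * Pb1 A B x := by
  unfold Pw PA Pb1; ring
lemma idB (A B x : ℝ) : Pa1 A B x + (A-1) * PA A B x = x * PB A B x := by
  unfold Pa1 PA PB; ring

-- positivity
lemma Pa1_pos {A B x : ℝ} (hA : 1 ≤ A) (hB : 1 ≤ B) (hx : 1 < x)
    (h : (A-1)*B < x^2) : 0 < Pa1 A B x := by
  unfold Pa1
  nlinarith [mul_pos (by linarith : (0:ℝ) < x) (by linarith : 0 < x^2 - (A-1)*B),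
    mul_nonneg (by linarith : (0:ℝ) ≤ A - 1) (by linarith : (0:ℝ) ≤ B - 1)]

lemma Pb1_pos {A B x : ℝ} (hA : 1 ≤ A) (hB : 1 ≤ B) (hx : 1 < x)
    (h : A*(B-1) < x^2) : 0 < Pb1 A B x := by
  unfold Pb1
  nlinarith [mul_pos (by linarith : (0:ℝ) < x) (by linarith : 0 < x^2 - A*(B-1)),
    mul_nonneg (by linarith : (0:ℝ) ≤ A - 1) (by linarith : (0:ℝ) ≤ B - 1)]

lemma PA_pos {A B x : ℝ} (hB : 1 ≤ B) (hx : 1 < x) : 0 < PA A B x := by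
  unfold PA
  nlinarith [mul_nonneg (by linarith : (0:ℝ) ≤ B - 1) (by linarith : (0:ℝ) ≤ x - 1)]

lemma PB_pos {A B x : ℝ} (hA : 1 ≤ A) (hx : 1 < x) : 0 < PB A B x := by
  unfold PB
  nlinarith [mul_nonneg (by linarith : (0:ℝ) ≤ A - 1) (by linarith : (0:ℝ) ≤ x - 1)]

lemma Pw_pos {A B x : ℝ} (hx : 1 < x) (ha1 : 0 < Pa1 A B x) (hb1 : 0 < Pb1 A B x)
    (hf : 0 ≤ fpol A B x) : 0 < Pw A B x := by
  have h := idw A B x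
  nlinarith

-- comparison of fpol at fixed sum
lemma fpol_diff {a b P Q x : ℝ} (hsum : a + b = P + Q) :
    fpol a b x = fpol P Q x + (P*Q - a*b) * ((x-1)^2 * (x+2)) := by
  unfold fpol
  linear_combination (2 - 2*x) * hsum

namespace SKabFacts

lemma lift_pred {a b : ℕ} (P : ℝ → Prop) {w c1 cA c2 cB : ℝ}
    (h0 : P w) (h1 : P c1) (h2 : P cA) (h3 : P c2) (h4 : P cB) :
    ∀ v, P (lift a b w c1 cA c2 cB v) := by
  intro v
  rcases v with i | j | u
  · by_cases hi : (i : ℕ) = 0 <;> simp [lift, hi] <;> assumption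
  · by_cases hj : (j : ℕ) = 0 <;> simp [lift, hj] <;> assumption
  · simpa [lift] using h0

lemma lift_rel {a b : ℕ} (R : ℝ → ℝ → Prop) {w c1 cA c2 cB w' c1' cA' c2' cB' : ℝ}
    (h0 : R w w') (h1 : R c1 c1') (h2 : R cA cA') (h3 : R c2 c2') (h4 : R cB cB') :
    ∀ v, R (lift a b w c1 cA c2 cB v) (lift a b w' c1' cA' c2' cB' v) := by
  intro v
  rcases v with i | j | u
  · by_cases hi : (i : ℕ) = 0 <;> simp [lift, hi] <;> assumption
  · by_cases hj : (j : ℕ) = 0 <;> simp [lift, hj] <;> assumption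
  · simpa [lift] using h0

lemma dot_lift {a b : ℕ} (ha : 1 ≤ a) (hb : 1 ≤ b) (w c1 cA c2 cB w' c1' cA' c2' cB' : ℝ) :
    lift a b w c1 cA c2 cB ⬝ᵥ lift a b w' c1' cA' c2' cB'
      = w*w' + c1*c1' + ((a:ℝ)-1)*(cA*cA') + c2*c2' + ((b:ℝ)-1)*(cB*cB') := by
  rw [dotProduct, Fintype.sum_sum_type]
  conv_lhs => rw [Fintype.sum_sum_type]
  have e1 : (∑ i : Fin a, lift a b w c1 cA c2 cB (Sum.inl i)
        * lift a b w' c1' cA' c2' cB' (Sum.inl i))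
      = ∑ i : Fin a, if (i : ℕ) = 0 then c1*c1' else cA*cA' := by
    refine Finset.sum_congr rfl fun i _ => ?_
    by_cases hi : (i : ℕ) = 0 <;> simp [lift, hi]
  have e2 : (∑ j : Fin b, lift a b w c1 cA c2 cB (Sum.inr (Sum.inl j))
        * lift a b w' c1' cA' c2' cB' (Sum.inr (Sum.inl j)))
      = ∑ j : Fin b, if (j : ℕ) = 0 then c2*c2' else cB*cB' := by
    refine Finset.sum_congr rfl fun j _ => ?_
    by_cases hj : (j : ℕ) = 0 <;> simp [lift, hj]
  have e3 : (∑ u : Unit, lift a b w c1 cA c2 cB (Sum.inr (Sum.inr u))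
        * lift a b w' c1' cA' c2' cB' (Sum.inr (Sum.inr u))) = w * w' := by
    simp [lift]
  rw [e1, e2, e3, hsum ha, hsum hb]
  ring

end SKabFacts

section GraphLevel

variable {V : Type*} [Fintype V] [DecidableEq V] [Nonempty V]
  (G : SimpleGraph V) [DecidableRel G.Adj]

lemma adjMatrix_nonneg : ∀ u v : V, 0 ≤ (G.adjMatrix ℝ) u v := by
  intro u v
  rw [SimpleGraph.adjMatrix_apply]
  split <;> norm_num

lemma rayleigh_kthEig (x : V → ℝ) :
    x ⬝ᵥ ((G.adjMatrix ℝ) *ᵥ x) ≤ kthEig G 0 * (x ⬝ᵥ x) :=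
  rayleigh_le _ (adjMatrix_isHermitian G) _ (fun v => eigenvalues_le_kthEig_zero G v) x

lemma kthEig_zero_nonneg : 0 ≤ kthEig G 0 := by
  obtain ⟨v0⟩ := ‹Nonempty V›
  have h := rayleigh_kthEig G (Pi.single v0 1)
  have hAx : (Pi.single v0 1 : V → ℝ) ⬝ᵥ ((G.adjMatrix ℝ) *ᵥ Pi.single v0 1) = 0 := by
    rw [dotProduct]
    refine Finset.sum_eq_zero fun v _ => ?_
    by_cases hv : v = v0
    · subst hv
      have : ((G.adjMatrix ℝ) *ᵥ Pi.single v 1) v = (G.adjMatrix ℝ) v v := by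
        rw [Matrix.mulVec, dotProduct]
        rw [Finset.sum_eq_single v]
        · simp
        · intro u _ hu
          simp [Pi.single_apply, hu.symm]
        · intro h; exact absurd (Finset.mem_univ v) h
      rw [this]
      simp [SimpleGraph.adjMatrix_apply]
    · simp [Pi.single_apply, hv]
  have hxx : (Pi.single v0 1 : V → ℝ) ⬝ᵥ (Pi.single v0 1 : V → ℝ) = 1 := by
    rw [dotProduct]
    rw [Finset.sum_eq_single v0]
    · simp
    · intro u _ hu
      simp [Pi.single_apply, hu]
    · intro h; exact absurd (Finset.mem_univ v0) h
  rw [hAx] at h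
  rw [hxx, mul_one] at h
  exact h

end GraphLevel

section Key

open SKabFacts

variable {a b : ℕ}

/-- If `fpol a b μ > 0` (with threshold conditions), then `λ₁(SKab a b) < μ`. -/
theorem kthEig_lt_of_fpol_pos (ha : 1 ≤ a) (hb : 1 ≤ b) {μ : ℝ}
    (hμ1 : 1 < μ) (h1 : ((a:ℝ)-1)*(b:ℝ) < μ^2) (h2 : (a:ℝ)*((b:ℝ)-1) < μ^2)
    (hf : 0 < fpol a b μ) : kthEig (SKab a b) 0 < μ := by
  haveI : Nonempty (Fin a ⊕ Fin b ⊕ Unit) := ⟨Sum.inr (Sum.inr ())⟩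
  have haR : (1:ℝ) ≤ a := by exact_mod_cast ha
  have hbR : (1:ℝ) ≤ b := by exact_mod_cast hb
  -- choose ν < μ with the open conditions
  have hev : ∀ᶠ ν in nhds μ, 1 < ν ∧ ((a:ℝ)-1)*(b:ℝ) < ν^2 ∧ (a:ℝ)*((b:ℝ)-1) < ν^2
      ∧ 0 < fpol a b ν := by
    have c1 : ∀ᶠ ν in nhds μ, 1 < ν := eventually_gt_nhds hμ1
    have csq : ContinuousAt (fun x : ℝ => x^2) μ := by fun_prop
    have c2 : ∀ᶠ ν in nhds μ, ((a:ℝ)-1)*(b:ℝ) < ν^2 :=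
      ContinuousAt.eventually_lt continuousAt_const csq h1
    have c3 : ∀ᶠ ν in nhds μ, (a:ℝ)*((b:ℝ)-1) < ν^2 :=
      ContinuousAt.eventually_lt continuousAt_const csq h2
    have cf : ContinuousAt (fun x : ℝ => fpol a b x) μ := by unfold fpol; fun_prop
    have c4 : ∀ᶠ ν in nhds μ, 0 < fpol a b ν :=
      ContinuousAt.eventually_lt continuousAt_const cf hf
    exact ((c1.and c2).and (c3.and c4)).mono (by tauto)
  obtain ⟨ν, hνμ, hν1, hνa, hνb, hνf⟩ :
      ∃ ν, ν < μ ∧ (1 < ν ∧ ((a:ℝ)-1)*(b:ℝ) < ν^2 ∧ (a:ℝ)*((b:ℝ)-1) < ν^2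
        ∧ 0 < fpol a b ν) := by
    obtain ⟨ν, h1', h2'⟩ := hev.exists_lt
    exact ⟨ν, h1', h2'.1, h2'.2.1, h2'.2.2.1, h2'.2.2.2⟩
  have hν0 : (0:ℝ) < ν := by linarith
  -- positivity of the components at ν
  have ha1 : 0 < Pa1 a b ν := Pa1_pos haR hbR hν1 hνa
  have hb1 : 0 < Pb1 a b ν := Pb1_pos haR hbR hν1 hνb
  have hA' : 0 < PA a b ν := PA_pos hbR hν1
  have hB' : 0 < PB a b ν := PB_pos haR hν1
  have hw : 0 < Pw a b ν := Pw_pos hν1 ha1 hb1 hνf.le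
  set x := lift a b (Pw a b ν) (Pa1 a b ν) (PA a b ν) (Pb1 a b ν) (PB a b ν) with hxdef
  have hxpos : ∀ v, 0 < x v := lift_pred (fun t => 0 < t) hw ha1 hA' hb1 hB'
  have hAx : (SKab a b).adjMatrix ℝ *ᵥ x
      = lift a b (Pa1 a b ν + Pb1 a b ν) (Pw a b ν + ((b:ℝ)-1)*(PB a b ν))
          (Pb1 a b ν + ((b:ℝ)-1)*(PB a b ν)) (Pw a b ν + ((a:ℝ)-1)*(PA a b ν))
          (Pa1 a b ν + ((a:ℝ)-1)*(PA a b ν)) := mulVec_lift ha hb _ _ _ _ _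
  have hle : ∀ v, ((SKab a b).adjMatrix ℝ *ᵥ x) v < μ * x v := by
    rw [hAx]
    refine lift_rel (fun s t => s < μ * t) ?_ ?_ ?_ ?_ ?_
    · have := idw a b ν
      nlinarith [mul_lt_mul_of_pos_right hνμ hw]
    · rw [ida1]
      exact mul_lt_mul_of_pos_right hνμ ha1
    · rw [idA]
      exact mul_lt_mul_of_pos_right hνμ hA'
    · rw [idb1]
      exact mul_lt_mul_of_pos_right hνμ hb1
    · rw [idB]
      exact mul_lt_mul_of_pos_right hνμ hB'
  exact lam_lt_of_strict_dominant _ (adjMatrix_isHermitian (SKab a b))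
    (adjMatrix_nonneg (SKab a b)) _ (kthEig_zero_nonneg (SKab a b))
    (exists_top_eigenvector (SKab a b)) x hxpos μ hle

/-- With threshold conditions, `λ₁(SKab a b)` is a root of `fpol`. -/
theorem fpol_kthEig_eq_zero (ha : 1 ≤ a) (hb : 1 ≤ b)
    (hμ1 : 1 < kthEig (SKab a b) 0)
    (h1 : ((a:ℝ)-1)*(b:ℝ) < (kthEig (SKab a b) 0)^2)
    (h2 : (a:ℝ)*((b:ℝ)-1) < (kthEig (SKab a b) 0)^2) :
    fpol a b (kthEig (SKab a b) 0) = 0 := by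
  haveI : Nonempty (Fin a ⊕ Fin b ⊕ Unit) := ⟨Sum.inr (Sum.inr ())⟩
  have haR : (1:ℝ) ≤ a := by exact_mod_cast ha
  have hbR : (1:ℝ) ≤ b := by exact_mod_cast hb
  set μ := kthEig (SKab a b) 0 with hμdef
  by_contra hne
  rcases lt_or_gt_of_ne hne with hneg | hpos
  · -- fpol μ < 0 : build a subdominant certificate, contradiction
    have hμ0 : (0:ℝ) < μ := by linarith
    have ha1 : 0 < Pa1 a b μ := Pa1_pos haR hbR hμ1 h1
    have hb1 : 0 < Pb1 a b μ := Pb1_pos haR hbR hμ1 h2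
    have hA' : 0 < PA a b μ := PA_pos hbR hμ1
    have hB' : 0 < PB a b μ := PB_pos haR hμ1
    set W : ℝ := max (Pw a b μ) ((Pa1 a b μ + Pb1 a b μ)/(2*μ)) with hWdef
    have hWpos : 0 < W := lt_max_of_lt_right (by positivity)
    have hWge : Pw a b μ ≤ W := le_max_left _ _
    have hWlt : μ * W < Pa1 a b μ + Pb1 a b μ := by
      have hid := idw a b μ
      rcases max_cases (Pw a b μ) ((Pa1 a b μ + Pb1 a b μ)/(2*μ)) with ⟨he, _⟩ | ⟨he, _⟩ <;>
        rw [hWdef, he]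
      · nlinarith
      · rw [mul_div_assoc']
        rw [div_lt_iff₀ (by positivity)]
        nlinarith
    set x := lift a b W (Pa1 a b μ) (PA a b μ) (Pb1 a b μ) (PB a b μ) with hxdef
    have hxnn : ∀ v, 0 ≤ x v :=
      lift_pred (fun t => 0 ≤ t) hWpos.le ha1.le hA'.le hb1.le hB'.le
    have hAx : (SKab a b).adjMatrix ℝ *ᵥ x
        = lift a b (Pa1 a b μ + Pb1 a b μ) (W + ((b:ℝ)-1)*(PB a b μ))
            (Pb1 a b μ + ((b:ℝ)-1)*(PB a b μ)) (W + ((a:ℝ)-1)*(PA a b μ))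
            (Pa1 a b μ + ((a:ℝ)-1)*(PA a b μ)) := mulVec_lift ha hb _ _ _ _ _
    have hge : ∀ v, μ * x v ≤ ((SKab a b).adjMatrix ℝ *ᵥ x) v := by
      rw [hAx]
      refine lift_rel (fun s t => μ * s ≤ t) ?_ ?_ ?_ ?_ ?_
      · exact hWlt.le
      · have := ida1 a b μ
        nlinarith
      · rw [idA]
      · have := idb1 a b μ
        nlinarith
      · rw [idB]
    have hstrict : μ * x (Sum.inr (Sum.inr ())) < ((SKab a b).adjMatrix ℝ *ᵥ x) (Sum.inr (Sum.inr ())) := by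
      rw [hAx]
      show μ * W < Pa1 a b μ + Pb1 a b μ
      exact hWlt
    have hxw : 0 < x (Sum.inr (Sum.inr ())) := hWpos
    have := lt_lam_of_strict_subdominant ((SKab a b).adjMatrix ℝ)
      (adjMatrix_isHermitian (SKab a b)) _
      (rayleigh_kthEig (SKab a b)) x hxnn μ hge _ hxw hstrict
    exact lt_irrefl _ this
  · exact lt_irrefl _ (kthEig_lt_of_fpol_pos ha hb hμ1 h1 h2 hpos)

end Key

section LowerBound

open SKabFacts

theorem kthEig_balanced_lower (p q : ℕ) (hp : 1 ≤ p) (hq : 1 ≤ q) :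
    2*((p:ℝ)*(q:ℝ)-1)/((p:ℝ)+(q:ℝ)) ≤ kthEig (SKab p q) 0 := by
  haveI : Nonempty (Fin p ⊕ Fin q ⊕ Unit) := ⟨Sum.inr (Sum.inr ())⟩
  have hpR : (1:ℝ) ≤ p := by exact_mod_cast hp
  have hqR : (1:ℝ) ≤ q := by exact_mod_cast hq
  set P := (p:ℝ); set Q := (q:ℝ)
  set x := lift p q 0 Q Q P P with hxdef
  have h := rayleigh_kthEig (SKab p q) x
  rw [hxdef, mulVec_lift hp hq, dot_lift hp hq, dot_lift hp hq] at h
  set lam := kthEig (SKab p q) 0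
  have hxx : 0*0 + Q*Q + (P-1)*(Q*Q) + P*P + (Q-1)*(P*P) = P*Q*(P+Q) := by ring
  have hPQpos : 0 < P*Q := by nlinarith
  have hPQ : 0 < P + Q := by linarith
  rw [div_le_iff₀ hPQ]
  have key : 2*(P*Q-1) * (P*Q) ≤ (lam * (P+Q)) * (P*Q) := by nlinarith [h]
  have := le_of_mul_le_mul_right key hPQpos
  linarith

lemma lower_sq {P Q lam : ℝ} (hP : 3 ≤ P) (hQ : Q = P ∨ Q = P + 1)
    (h : 2*(P*Q-1)/(P+Q) ≤ lam) : 1 < lam ∧ P*Q - 9/4 < lam^2 := by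
  have hPQ : 0 < P + Q := by rcases hQ with h' | h' <;> nlinarith
  rw [div_le_iff₀ hPQ] at h
  rcases hQ with h' | h' <;> rw [h'] at h ⊢
  · constructor
    · nlinarith
    · have h1 : P*P - 1 ≤ lam * P := by nlinarith
      have hlam : 0 < lam := by nlinarith
      have h2 : (P*P-1)^2 ≤ (lam*P)^2 :=
        pow_le_pow_left₀ (by nlinarith) h1 2
      nlinarith [sq_nonneg P, sq_nonneg (P*P-1)]
  · constructor
    · nlinarith [mul_nonneg (by linarith : (0:ℝ) ≤ 2*P+1) (by linarith : (0:ℝ) ≤ 1)]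
    · have h1 : 2*(P*(P+1)) - 2 ≤ lam * (2*P+1) := by nlinarith
      have hlam : 0 < lam := by nlinarith
      have h2 : (2*(P*(P+1)) - 2)^2 ≤ (lam*(2*P+1))^2 :=
        pow_le_pow_left₀ (by nlinarith) h1 2
      nlinarith [sq_nonneg P, sq_nonneg (2*P+1)]

lemma unbal_thresholds {P Q A B : ℝ} (hP : 3 ≤ P) (hPQ : P ≤ Q) (hQ2 : Q ≤ P+1)
    (hA : 3 ≤ A) (hAP : A ≤ P - 1) (hsum : A + B = P + Q) :
    (A-1)*B ≤ P*Q-3 ∧ A*(B-1) ≤ P*Q-3 := by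
  have hB : B = P + Q - A := by linarith
  subst hB
  constructor
  · nlinarith [mul_nonneg (by linarith : (0:ℝ) ≤ P-1-A) (by linarith : (0:ℝ) ≤ Q+2-A)]
  · nlinarith [mul_nonneg (by linarith : (0:ℝ) ≤ P-1-A) (by linarith : (0:ℝ) ≤ Q-A)]

end LowerBound


/-- For integers `t ≥ s ≥ 1` with `s + t = n - 5`,
`λ₁(S(K_{⌊(n-1)/2⌋,⌈(n-1)/2⌉})) ≥ λ₁(S(K_{s+2,t+2}))`, with equality iff
`(s+2, t+2) = (⌊(n-1)/2⌋, ⌈(n-1)/2⌉)`.  (Note `⌈(n-1)/2⌉ = n/2` in `ℕ`.) -/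
theorem stmt_10 (s t n : ℕ) (hs : 1 ≤ s) (hst : s ≤ t) (hn : s + t + 5 = n) :
    kthEig (SKab (s + 2) (t + 2)) 0 ≤ kthEig (SKab ((n - 1) / 2) (n / 2)) 0 ∧
    (kthEig (SKab (s + 2) (t + 2)) 0 = kthEig (SKab ((n - 1) / 2) (n / 2)) 0 ↔
      s + 2 = (n - 1) / 2 ∧ t + 2 = n / 2) := by
  by_cases hbal : s + 2 = (n - 1) / 2 ∧ t + 2 = n / 2
  · rw [hbal.1, hbal.2]
    exact ⟨le_rfl, iff_of_true rfl ⟨rfl, rfl⟩⟩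
  · -- unbalanced case: strict inequality
    set p := (n - 1) / 2 with hpdef
    set q := n / 2 with hqdef
    have hnat : p + q = n - 1 ∧ 3 ≤ p ∧ p ≤ q ∧ (q = p ∨ q = p + 1)
        ∧ (s + 2) + (t + 2) = n - 1 ∧ s + 2 < p ∧ 3 ≤ s + 2 := by
      constructor; · omega
      constructor; · omega
      constructor; · omega
      constructor; · omega
      constructor; · omega
      constructor; · omega
      omega
    obtain ⟨hpq, hp3, hple, hqcase, hab, hlt, ha3⟩ := hnat
    -- real versions
    have hp3R : (3:ℝ) ≤ (p:ℝ) := by exact_mod_cast hp3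
    have hpleR : (p:ℝ) ≤ (q:ℝ) := by exact_mod_cast hple
    have hqcaseR : (q:ℝ) = (p:ℝ) ∨ (q:ℝ) = (p:ℝ) + 1 := by
      rcases hqcase with h | h
      · left; exact_mod_cast h
      · right; exact_mod_cast h
    have hq2R : (q:ℝ) ≤ (p:ℝ) + 1 := by rcases hqcaseR with h | h <;> linarith
    have ha3R : (3:ℝ) ≤ ((s+2 : ℕ):ℝ) := by exact_mod_cast ha3
    have hltR : ((s+2:ℕ):ℝ) ≤ (p:ℝ) - 1 := by
      have : (s+2:ℕ) + 1 ≤ p := hlt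
      have := (Nat.cast_le (α := ℝ)).mpr this
      push_cast at this ⊢
      linarith
    have hsumR : ((s+2:ℕ):ℝ) + ((t+2:ℕ):ℝ) = (p:ℝ) + (q:ℝ) := by
      have h1 : (s+2) + (t+2) = p + q := by omega
      exact_mod_cast h1
    -- the top eigenvalue of the balanced graph
    set μ := kthEig (SKab p q) 0 with hμdef
    have hlow : 2*((p:ℝ)*(q:ℝ)-1)/((p:ℝ)+(q:ℝ)) ≤ μ :=
      kthEig_balanced_lower p q (by omega) (by omega)
    obtain ⟨hμ1, hμsq⟩ := lower_sq hp3R hqcaseR hlow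
    -- balanced thresholds
    have hbth1 : ((p:ℝ)-1)*(q:ℝ) < μ^2 := by nlinarith
    have hbth2 : (p:ℝ)*((q:ℝ)-1) < μ^2 := by nlinarith
    have hroot : fpol p q μ = 0 :=
      fpol_kthEig_eq_zero (by omega) (by omega) hμ1 hbth1 hbth2
    -- unbalanced data
    obtain ⟨hth1, hth2⟩ := unbal_thresholds hp3R hpleR hq2R ha3R hltR hsumR
    have hprod : 0 < (p:ℝ)*(q:ℝ) - ((s+2:ℕ):ℝ)*((t+2:ℕ):ℝ) := by
      have hB : ((t+2:ℕ):ℝ) = (p:ℝ) + (q:ℝ) - ((s+2:ℕ):ℝ) := by linarith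
      rw [hB]
      have h1 : (0:ℝ) < (p:ℝ) - ((s+2:ℕ):ℝ) := by linarith
      have h2 : (0:ℝ) < (q:ℝ) - ((s+2:ℕ):ℝ) := by linarith
      nlinarith
    have hfab : 0 < fpol (s+2 : ℕ) (t+2 : ℕ) μ := by
      rw [fpol_diff hsumR, hroot]
      have h1 : 0 < (μ-1)^2 * (μ+2) := by nlinarith [sq_nonneg (μ-1)]
      nlinarith
    have hstrict : kthEig (SKab (s+2) (t+2)) 0 < μ :=
      kthEig_lt_of_fpol_pos (by omega) (by omega) hμ1 (by nlinarith) (by nlinarith) hfab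
    refine ⟨hstrict.le, ?_⟩
    constructor
    · intro heq
      exact absurd heq (ne_of_lt hstrict)
    · intro hc
      exact absurd hc hbal
end

section
/- The characteristic polynomial of the adjacency matrix of S(K_{s+2,t+2}) equals x^{s+t}·(x⁵ − (2s+2t+st+5)x³ + (4s+4t+3st+5)x − 2s − 2t − 2st − 2). -/
open Matrix Polynomial

abbrev VV (s t : ℕ) := Fin (s+2) ⊕ Fin (t+2) ⊕ Unit

def cls {s t : ℕ} : VV s t → Fin 5
  | Sum.inl i => if i.val = 0 then 0 else 1
  | Sum.inr (Sum.inl j) => if j.val = 0 then 2 else 3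
  | Sum.inr (Sum.inr _) => 4

def Smat : Matrix (Fin 5) (Fin 5) ℝ :=
  !![0,0,0,1,1; 0,0,1,1,0; 0,1,0,0,1; 1,1,0,0,0; 1,0,1,0,0]

def Cm (s t : ℕ) : Matrix (VV s t) (Fin 5) ℝ := fun u k => if cls u = k then 1 else 0
def Dm (s t : ℕ) : Matrix (Fin 5) (VV s t) ℝ := fun k v => Smat k (cls v)

lemma evalcp {m : Type*} [Fintype m] [DecidableEq m] (M : Matrix m m ℝ) (x : ℝ) :
    M.charpoly.eval x = det (x • (1 : Matrix m m ℝ) - M) := by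
  rw [Matrix.charpoly, ← coe_evalRingHom, RingHom.map_det]
  congr 1
  ext i j
  by_cases h : i = j
  · subst h; simp [charmatrix_apply_eq, Matrix.one_apply]
  · simp [charmatrix_apply_ne _ _ _ h, Matrix.one_apply, h]

lemma smat_ev : ∀ k l : Fin 5, Smat k l = !![0,0,0,1,1; 0,0,1,1,0; 0,1,0,0,1; 1,1,0,0,0; 1,0,1,0,0] k l := fun _ _ => rfl

lemma adj_eq_smat (s t : ℕ) (u v : VV (s) (t)) :
    (SKab (s+2) (t+2)).adjMatrix ℝ u v = Smat (cls u) (cls v) := by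
  rcases u with i | j | _ <;> rcases v with i' | j' | _ <;>
    rw [SimpleGraph.adjMatrix_apply] <;> simp only [SKab, SimpleGraph.fromRel_adj, ne_eq, cls]
  · by_cases h : i.val = 0 <;> by_cases h' : i'.val = 0 <;>
      simp_all [Smat, Matrix.vecHead, Matrix.vecTail] <;> omega
  · by_cases h : i.val = 0 <;> by_cases h' : j'.val = 0 <;> simp_all [Smat, Matrix.vecHead, Matrix.vecTail]
  · by_cases h : i.val = 0 <;> simp_all [Smat, Matrix.vecHead, Matrix.vecTail]
  · by_cases h : j.val = 0 <;> by_cases h' : i'.val = 0 <;> simp_all [Smat, Matrix.vecHead, Matrix.vecTail]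
  · by_cases h : j.val = 0 <;> by_cases h' : j'.val = 0 <;>
      simp_all [Smat, Matrix.vecHead, Matrix.vecTail] <;> omega
  · by_cases h : j.val = 0 <;> simp_all [Smat, Matrix.vecHead, Matrix.vecTail]
  · by_cases h : i'.val = 0 <;> simp_all [Smat, Matrix.vecHead, Matrix.vecTail]
  · by_cases h : j'.val = 0 <;> simp_all [Smat, Matrix.vecHead, Matrix.vecTail]
  · simp_all [Smat, Matrix.vecHead, Matrix.vecTail]

lemma A_factor (s t : ℕ) :
    (SKab (s+2) (t+2)).adjMatrix ℝ = Cm s t * Dm s t := by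
  ext u v
  rw [adj_eq_smat, Matrix.mul_apply]
  simp [Cm, Dm, ite_mul, Finset.sum_ite_eq]

lemma sumFin (n : ℕ) (a b : ℝ) :
    (∑ i : Fin (n+1), (if i.val = 0 then a else b)) = a + n * b := by
  rw [Fin.sum_univ_succ]
  simp [Fin.val_succ, mul_comm]

def B5 (s t : ℕ) : Matrix (Fin 5) (Fin 5) ℝ :=
  !![0,0,0,(t:ℝ)+1,1; 0,0,1,(t:ℝ)+1,0; 0,(s:ℝ)+1,0,0,1; 1,(s:ℝ)+1,0,0,0; 1,0,1,0,0]

lemma DC_eq (s t : ℕ) : Dm s t * Cm s t = B5 s t := by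
  ext k l
  rw [Matrix.mul_apply, Fintype.sum_sum_type, Fintype.sum_sum_type]
  have h1 : (∑ i : Fin (s+2), Dm s t k (Sum.inl i) * Cm s t (Sum.inl i) l)
      = (Smat k 0 * (if (0:Fin 5) = l then 1 else 0))
        + (s+1) * (Smat k 1 * (if (1:Fin 5) = l then 1 else 0)) := by
    have : ∀ i : Fin (s+2), Dm s t k (Sum.inl i) * Cm s t (Sum.inl i) l
        = if i.val = 0 then (Smat k 0 * (if (0:Fin 5) = l then 1 else 0))
          else (Smat k 1 * (if (1:Fin 5) = l then 1 else 0)) := by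
      intro i; by_cases h : i.val = 0 <;> simp [Dm, Cm, cls, h, eq_comm]
    rw [Finset.sum_congr rfl (fun i _ => this i), sumFin (s+1)]
    push_cast; ring
  have h2 : (∑ j : Fin (t+2), Dm s t k (Sum.inr (Sum.inl j)) * Cm s t (Sum.inr (Sum.inl j)) l)
      = (Smat k 2 * (if (2:Fin 5) = l then 1 else 0))
        + (t+1) * (Smat k 3 * (if (3:Fin 5) = l then 1 else 0)) := by
    have : ∀ j : Fin (t+2), Dm s t k (Sum.inr (Sum.inl j)) * Cm s t (Sum.inr (Sum.inl j)) l
        = if j.val = 0 then (Smat k 2 * (if (2:Fin 5) = l then 1 else 0))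
          else (Smat k 3 * (if (3:Fin 5) = l then 1 else 0)) := by
      intro j; by_cases h : j.val = 0 <;> simp [Dm, Cm, cls, h, eq_comm]
    rw [Finset.sum_congr rfl (fun j _ => this j), sumFin (t+1)]
    push_cast; ring
  have h3 : (∑ u : Unit, Dm s t k (Sum.inr (Sum.inr u)) * Cm s t (Sum.inr (Sum.inr u)) l)
      = Smat k 4 * (if (4:Fin 5) = l then 1 else 0) := by
    simp [Dm, Cm, cls, eq_comm]
  rw [h1, h2, h3]
  fin_cases k <;> fin_cases l <;>
    simp [Smat, B5, Matrix.vecHead, Matrix.vecTail] <;> ring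

set_option maxHeartbeats 2000000 in
lemma det5 (s t : ℕ) (x : ℝ) :
    det (x • (1 : Matrix (Fin 5) (Fin 5) ℝ) - B5 s t) =
      x^5 - (2*(s:ℝ) + 2*t + s*t + 5) * x^3 + (4*(s:ℝ) + 4*t + 3*s*t + 5) * x
        - (2*(s:ℝ) + 2*t + 2*s*t + 2) := by
  have h : x • (1 : Matrix (Fin 5) (Fin 5) ℝ) - B5 s t =
      !![x,0,0,-((t:ℝ)+1),-1; 0,x,-1,-((t:ℝ)+1),0; 0,-((s:ℝ)+1),x,0,-1;
        -1,-((s:ℝ)+1),0,x,0; -1,0,-1,0,x] := by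
    ext i j
    fin_cases i <;> fin_cases j <;>
      simp [B5, Matrix.one_apply, Matrix.vecHead, Matrix.vecTail]
  rw [h]
  simp only [Matrix.det_succ_row_zero, Matrix.submatrix_apply, Matrix.submatrix_submatrix,
    Matrix.det_unique, Fin.sum_univ_succ, Finset.univ_unique, Finset.sum_singleton,
    Function.comp_apply, Fin.zero_succAbove, Fin.succ_succAbove_zero, Fin.succ_succAbove_succ,
    Fin.val_zero, Fin.val_succ, Fin.val_eq_zero,
    Fin.default_eq_zero, Matrix.cons_val_zero, Matrix.cons_val_succ, Matrix.cons_val',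
    Matrix.head_cons, Matrix.of_apply, Matrix.cons_val_one, Matrix.head_fin_const,
    pow_succ, pow_zero]
  ring

lemma cardVV (s t : ℕ) : Fintype.card (VV s t) = s + t + 5 := by
  simp [Fintype.card_sum]; omega

lemma key (s t : ℕ) (x : ℝ) (hx : x ≠ 0) :
    eval x (((SKab (s + 2) (t + 2)).adjMatrix ℝ).charpoly) =
      x ^ (s + t) * (x^5 - (2*(s:ℝ) + 2*t + s*t + 5) * x^3
        + (4*(s:ℝ) + 4*t + 3*s*t + 5) * x - (2*(s:ℝ) + 2*t + 2*s*t + 2)) := by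
  rw [evalcp, A_factor]
  have e1 : x • (1 : Matrix (VV s t) (VV s t) ℝ) - Cm s t * Dm s t
      = x • ((1 : Matrix (VV s t) (VV s t) ℝ) - (x⁻¹ • Cm s t) * Dm s t) := by
    rw [smul_sub, Matrix.smul_mul, smul_smul, mul_inv_cancel₀ hx, one_smul]
  have e2 : x • (1 : Matrix (Fin 5) (Fin 5) ℝ) - B5 s t
      = x • ((1 : Matrix (Fin 5) (Fin 5) ℝ) - x⁻¹ • (Dm s t * Cm s t)) := by
    rw [smul_sub, smul_smul, mul_inv_cancel₀ hx, one_smul, DC_eq]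
  have d5 : x ^ 5 * det ((1 : Matrix (Fin 5) (Fin 5) ℝ) - x⁻¹ • (Dm s t * Cm s t))
      = x^5 - (2*(s:ℝ) + 2*t + s*t + 5) * x^3
        + (4*(s:ℝ) + 4*t + 3*s*t + 5) * x - (2*(s:ℝ) + 2*t + 2*s*t + 2) := by
    rw [← det5 s t x, e2, Matrix.det_smul]
    simp [Fintype.card_fin]
  rw [e1, Matrix.det_smul, Matrix.det_one_sub_mul_comm, Matrix.mul_smul, cardVV]
  rw [← d5, pow_add, pow_add]
  ring


/-- The characteristic polynomial of the adjacency matrix of `S(K_{s+2,t+2})` is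
`x^(s+t) (x⁵ - (2s+2t+st+5)x³ + (4s+4t+3st+5)x - 2s-2t-2st-2)`. -/
theorem stmt_11 (s t : ℕ) (hs : 1 ≤ s) (ht : 1 ≤ t) :
    ((SKab (s + 2) (t + 2)).adjMatrix ℝ).charpoly =
      X ^ (s + t) *
        (X ^ 5 - C (2 * (s : ℝ) + 2 * t + s * t + 5) * X ^ 3 +
          C (4 * (s : ℝ) + 4 * t + 3 * s * t + 5) * X -
          C (2 * (s : ℝ) + 2 * t + 2 * s * t + 2)) := by
  set p := ((SKab (s + 2) (t + 2)).adjMatrix ℝ).charpoly -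
      (X ^ (s + t) *
        (X ^ 5 - C (2 * (s : ℝ) + 2 * t + s * t + 5) * X ^ 3 +
          C (4 * (s : ℝ) + 4 * t + 3 * s * t + 5) * X -
          C (2 * (s : ℝ) + 2 * t + 2 * s * t + 2))) with hp
  have hroot : ∀ x : ℝ, x ≠ 0 → IsRoot p x := by
    intro x hx
    have := key s t x hx
    simp only [hp, IsRoot, eval_sub, eval_mul, eval_pow, eval_add, eval_C, eval_X, this]
    ring
  have hinf : Set.Infinite {x : ℝ | IsRoot p x} := by
    apply Set.Infinite.mono (s := ({0}ᶜ : Set ℝ))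
    · exact fun x hx => hroot x hx
    · exact Set.Finite.infinite_compl (Set.finite_singleton 0)
  have := Polynomial.eq_zero_of_infinite_isRoot p hinf
  have := sub_eq_zero.mp this
  exact this
end

section
/- If G is a bipartite graph whose adjacency matrix has rank 4, then G is a blow-up of one of the graphs 2P₂ ∪ K₁, P₄ ∪ K₁, or P₅ ∪ K₁. -/
open Matrix

/-- `G` is a blow-up of `H`: each vertex of `H` is replaced by an (possibly
empty) independent set, with complete bipartite joins across edges of `H`. -/
def IsBlowupOf {V W : Type*} (G : SimpleGraph V) (H : SimpleGraph W) : Prop :=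
  ∃ φ : V → W, ∀ u v, G.Adj u v ↔ H.Adj (φ u) (φ v)

/-- `2P₂ ∪ K₁` : two disjoint edges plus an isolated vertex. -/
def twoP2K1 : SimpleGraph (Fin 5) :=
  SimpleGraph.fromRel (fun i j => (i.val, j.val) ∈ [(0, 1), (2, 3)])

/-- `P₄ ∪ K₁` : a path on 4 vertices plus an isolated vertex. -/
def p4K1 : SimpleGraph (Fin 5) :=
  SimpleGraph.fromRel (fun i j => (i.val, j.val) ∈ [(0, 1), (1, 2), (2, 3)])

/-- `P₅ ∪ K₁` : a path on 5 vertices plus an isolated vertex. -/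
def p5K1 : SimpleGraph (Fin 6) :=
  SimpleGraph.fromRel (fun i j => (i.val, j.val) ∈ [(0, 1), (1, 2), (2, 3), (3, 4)])

instance p5K1.decAdj : DecidableRel p5K1.Adj := fun i j =>
  decidable_of_iff' _ (SimpleGraph.fromRel_adj _ i j)

private lemma master {V : Type*} [Fintype V] [DecidableEq V] (G : SimpleGraph V)
    [DecidableRel G.Adj] (κ : V → Fin 2) (hκ : ∀ p q, G.Adj p q → κ p ≠ κ q)
    (u v : V → ℝ)
    (hu : ∀ y, u y = 0 ∨ u y = 1) (hv : ∀ y, v y = 0 ∨ v y = 1)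
    (hdisj : ∀ y, u y = 0 ∨ v y = 0)
    (hrow : ∀ x, κ x = 0 →
      (∀ y, (G.adjMatrix ℝ) x y = u y) ∨ (∀ y, (G.adjMatrix ℝ) x y = v y) ∨
      (∀ y, (G.adjMatrix ℝ) x y = 0) ∨ (∀ y, (G.adjMatrix ℝ) x y = u y + v y)) :
    IsBlowupOf G p5K1 := by
  classical
  have hadj : ∀ x y, G.Adj x y ↔ (G.adjMatrix ℝ) x y = 1 := by
    intro x y; by_cases h : G.Adj x y <;> simp [h]
  have htwo : ∀ i : Fin 2, i ≠ 0 → i = 1 := by decide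
  set φ : V → Fin 6 := fun w =>
    if κ w = 0 then
      (if ∀ y, (G.adjMatrix ℝ) w y = u y then 0
       else if ∀ y, (G.adjMatrix ℝ) w y = v y then 4
       else if ∀ y, (G.adjMatrix ℝ) w y = 0 then 5 else 2)
    else (if u w = 1 then 1 else if v w = 1 then 3 else 5) with hφ
  have hφ0 : ∀ w, κ w = 0 → φ w = 0 ∨ φ w = 2 ∨ φ w = 4 ∨ φ w = 5 := by
    intro w hw
    simp only [hφ]
    split_ifs <;> first | decide | exact absurd hw ‹¬κ w = 0›
  have hφ1 : ∀ w, κ w ≠ 0 → φ w = 1 ∨ φ w = 3 ∨ φ w = 5 := by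
    intro w hw
    simp only [hφ]
    split_ifs <;> first | decide | exact absurd ‹κ w = 0› hw
  have key : ∀ x y, κ x = 0 → κ y ≠ 0 → (G.Adj x y ↔ p5K1.Adj (φ x) (φ y)) := by
    intro x y hx hy
    have hyval : (φ y = 1 ∧ u y = 1) ∨ (φ y = 3 ∧ u y = 0 ∧ v y = 1) ∨
        (φ y = 5 ∧ u y = 0 ∧ v y = 0) := by
      by_cases d1 : u y = 1
      · exact Or.inl ⟨by simp only [hφ]; rw [if_neg hy, if_pos d1], d1⟩
      · have hu0 : u y = 0 := (hu y).resolve_right d1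
        by_cases d2 : v y = 1
        · exact Or.inr (Or.inl ⟨by simp only [hφ]; rw [if_neg hy, if_neg d1, if_pos d2], hu0, d2⟩)
        · exact Or.inr (Or.inr ⟨by simp only [hφ]; rw [if_neg hy, if_neg d1, if_neg d2], hu0,
            (hv y).resolve_right d2⟩)
    by_cases c1 : ∀ z, (G.adjMatrix ℝ) x z = u z
    · have hφx : φ x = 0 := by simp only [hφ]; rw [if_pos hx, if_pos c1]
      rw [hφx]
      rcases hyval with ⟨h1, h2⟩ | ⟨h1, h2, h3⟩ | ⟨h1, h2, h3⟩ <;> rw [h1]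
      · have hAdj : G.Adj x y := (hadj x y).2 (by rw [c1 y, h2])
        simp [hAdj, show p5K1.Adj 0 1 from by decide]
      · have hn : ¬ G.Adj x y := fun h => by
          have h' := (hadj x y).1 h; rw [c1 y, h2] at h'; norm_num at h'
        simp [hn, show ¬ p5K1.Adj 0 3 from by decide]
      · have hn : ¬ G.Adj x y := fun h => by
          have h' := (hadj x y).1 h; rw [c1 y, h2] at h'; norm_num at h'
        simp [hn, show ¬ p5K1.Adj 0 5 from by decide]
    · by_cases c2 : ∀ z, (G.adjMatrix ℝ) x z = v z
      · have hφx : φ x = 4 := by simp only [hφ]; rw [if_pos hx, if_neg c1, if_pos c2]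
        rw [hφx]
        rcases hyval with ⟨h1, h2⟩ | ⟨h1, h2, h3⟩ | ⟨h1, h2, h3⟩ <;> rw [h1]
        · have hv0 : v y = 0 := (hdisj y).resolve_left (by rw [h2]; norm_num)
          have hn : ¬ G.Adj x y := fun h => by
            have h' := (hadj x y).1 h; rw [c2 y, hv0] at h'; norm_num at h'
          simp [hn, show ¬ p5K1.Adj 4 1 from by decide]
        · have hAdj : G.Adj x y := (hadj x y).2 (by rw [c2 y, h3])
          simp [hAdj, show p5K1.Adj 4 3 from by decide]
        · have hn : ¬ G.Adj x y := fun h => by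
            have h' := (hadj x y).1 h; rw [c2 y, h3] at h'; norm_num at h'
          simp [hn, show ¬ p5K1.Adj 4 5 from by decide]
      · by_cases c3 : ∀ z, (G.adjMatrix ℝ) x z = 0
        · have hφx : φ x = 5 := by simp only [hφ]; rw [if_pos hx, if_neg c1, if_neg c2, if_pos c3]
          rw [hφx]
          have hn : ¬ G.Adj x y := fun h => by
            have h' := (hadj x y).1 h; rw [c3 y] at h'; norm_num at h'
          rcases hyval with ⟨h1, _⟩ | ⟨h1, _, _⟩ | ⟨h1, _, _⟩ <;> rw [h1]
          · simp [hn, show ¬ p5K1.Adj 5 1 from by decide]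
          · simp [hn, show ¬ p5K1.Adj 5 3 from by decide]
          · simp [hn, show ¬ p5K1.Adj 5 5 from by decide]
        · have c4 : ∀ z, (G.adjMatrix ℝ) x z = u z + v z := by
            rcases hrow x hx with h | h | h | h
            · exact absurd h c1
            · exact absurd h c2
            · exact absurd h c3
            · exact h
          have hφx : φ x = 2 := by simp only [hφ]; rw [if_pos hx, if_neg c1, if_neg c2, if_neg c3]
          rw [hφx]
          rcases hyval with ⟨h1, h2⟩ | ⟨h1, h2, h3⟩ | ⟨h1, h2, h3⟩ <;> rw [h1]
          · have hv0 : v y = 0 := (hdisj y).resolve_left (by rw [h2]; norm_num)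
            have hAdj : G.Adj x y := (hadj x y).2 (by rw [c4 y, h2, hv0]; ring)
            simp [hAdj, show p5K1.Adj 2 1 from by decide]
          · have hAdj : G.Adj x y := (hadj x y).2 (by rw [c4 y, h2, h3]; ring)
            simp [hAdj, show p5K1.Adj 2 3 from by decide]
          · have hn : ¬ G.Adj x y := fun h => by
              have h' := (hadj x y).1 h; rw [c4 y, h2, h3] at h'; norm_num at h'
            simp [hn, show ¬ p5K1.Adj 2 5 from by decide]
  refine ⟨φ, ?_⟩
  intro w₁ w₂
  by_cases h1 : κ w₁ = 0 <;> by_cases h2 : κ w₂ = 0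
  · have hn : ¬ G.Adj w₁ w₂ := fun h => hκ _ _ h (h1.trans h2.symm)
    have hr : ¬ p5K1.Adj (φ w₁) (φ w₂) := by
      rcases hφ0 w₁ h1 with e | e | e | e <;> rcases hφ0 w₂ h2 with f | f | f | f <;>
        rw [e, f] <;> decide
    exact iff_of_false hn hr
  · exact key w₁ w₂ h1 h2
  · exact (G.adj_comm w₁ w₂).trans ((key w₂ w₁ h2 h1).trans (p5K1.adj_comm (φ w₂) (φ w₁)))
  · have hn : ¬ G.Adj w₁ w₂ := fun h => hκ _ _ h ((htwo _ h1).trans (htwo _ h2).symm)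
    have hr : ¬ p5K1.Adj (φ w₁) (φ w₂) := by
      rcases hφ1 w₁ h1 with e | e | e <;> rcases hφ1 w₂ h2 with f | f | f <;>
        rw [e, f] <;> decide
    exact iff_of_false hn hr

private lemma M2 {V : Type*} [Fintype V] [DecidableEq V] (G : SimpleGraph V)
    [DecidableRel G.Adj] (κ : V → Fin 2) (hκ : ∀ p q, G.Adj p q → κ p ≠ κ q)
    (u v : V → ℝ) (hu : ∀ y, u y = 0 ∨ u y = 1) (hv : ∀ y, v y = 0 ∨ v y = 1)
    (hdisj : ∀ y, u y = 0 ∨ v y = 0)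
    (hwu : ∃ y, u y = 1) (hwv : ∃ y, v y = 1)
    (hcomb : ∀ x, κ x = 0 → ∃ s t : ℝ, ∀ y, (G.adjMatrix ℝ) x y = s * u y + t * v y) :
    IsBlowupOf G p5K1 := by
  classical
  obtain ⟨yu, hyu⟩ := hwu
  obtain ⟨yv, hyv⟩ := hwv
  have hvyu : v yu = 0 := (hdisj yu).resolve_left (by rw [hyu]; norm_num)
  have huyv : u yv = 0 := (hdisj yv).resolve_right (by rw [hyv]; norm_num)
  have h01 : ∀ x y, (G.adjMatrix ℝ) x y = 0 ∨ (G.adjMatrix ℝ) x y = 1 := by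
    intro x y; by_cases h : G.Adj x y <;> simp [h]
  refine master G κ hκ u v hu hv hdisj ?_
  intro x hx
  obtain ⟨s, t, hst⟩ := hcomb x hx
  have hs : s = (G.adjMatrix ℝ) x yu := by rw [hst yu, hyu, hvyu]; ring
  have ht : t = (G.adjMatrix ℝ) x yv := by rw [hst yv, hyv, huyv]; ring
  have hs01 : s = 0 ∨ s = 1 := hs ▸ h01 x yu
  have ht01 : t = 0 ∨ t = 1 := ht ▸ h01 x yv
  rcases hs01 with hs0 | hs1 <;> rcases ht01 with ht0 | ht1
  · exact Or.inr (Or.inr (Or.inl fun y => by rw [hst y, hs0, ht0]; ring))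
  · exact Or.inr (Or.inl fun y => by rw [hst y, hs0, ht1]; ring)
  · exact Or.inl fun y => by rw [hst y, hs1, ht0]; ring
  · exact Or.inr (Or.inr (Or.inr fun y => by rw [hst y, hs1, ht1]; ring))

theorem stmt_16' {V : Type*} [Fintype V] [DecidableEq V] (G : SimpleGraph V)
    [DecidableRel G.Adj] (hbip : G.Colorable 2)
    (hrk : (G.adjMatrix ℝ).rank = 4) :
    IsBlowupOf G p5K1 := by
  classical
  obtain ⟨c⟩ := hbip
  have hκ : ∀ p q, G.Adj p q → (c p : Fin 2) ≠ c q := fun p q h => c.valid h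
  have h01 : ∀ x y, (G.adjMatrix ℝ) x y = 0 ∨ (G.adjMatrix ℝ) x y = 1 := by
    intro x y; by_cases h : G.Adj x y <;> simp [h]
  have hsymm : ∀ x y, (G.adjMatrix ℝ) x y = (G.adjMatrix ℝ) y x := by
    intro x y
    by_cases h : G.Adj x y
    · simp [h, h.symm]
    · have h' : ¬ G.Adj y x := fun hh => h hh.symm
      simp [h, h']
  have hzero : ∀ x y, (c x : Fin 2) = c y → (G.adjMatrix ℝ) x y = 0 := by
    intro x y hxy
    have : ¬ G.Adj x y := fun h => hκ x y h hxy
    simp [this]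
  have htwo : ∀ i : Fin 2, i ≠ 0 → i = 1 := by decide
  set S0 : Submodule ℝ (V → ℝ) :=
      Submodule.span ℝ ((fun x => (G.adjMatrix ℝ) x) '' {x | (c x : Fin 2) = 0}) with hS0d
  set S1 : Submodule ℝ (V → ℝ) :=
      Submodule.span ℝ ((fun x => (G.adjMatrix ℝ) x) '' {x | ¬ (c x : Fin 2) = 0}) with hS1d
  have hsplit : Submodule.span ℝ (Set.range (G.adjMatrix ℝ)) = S0 ⊔ S1 := by
    rw [hS0d, hS1d, ← Submodule.span_union]
    congr 1
    ext f
    simp only [Set.mem_range, Set.mem_union, Set.mem_image, Set.mem_setOf_eq]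
    constructor
    · rintro ⟨x, rfl⟩
      by_cases hx : (c x : Fin 2) = 0
      · exact Or.inl ⟨x, hx, rfl⟩
      · exact Or.inr ⟨x, hx, rfl⟩
    · rintro (⟨x, -, rfl⟩ | ⟨x, -, rfl⟩) <;> exact ⟨x, rfl⟩
  have h4 : Module.finrank ℝ ↥(S0 ⊔ S1) = 4 := by
    rw [← hsplit]
    rw [Matrix.rank_eq_finrank_span_cols, Matrix.col, SimpleGraph.transpose_adjMatrix] at hrk
    exact hrk
  let Z0 : Submodule ℝ (V → ℝ) :=
    { carrier := {f | ∀ w, (c w : Fin 2) = 0 → f w = 0}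
      add_mem' := fun hf hg w hw => by
        simp only [Pi.add_apply, hf w hw, hg w hw, add_zero]
      zero_mem' := fun w _ => rfl
      smul_mem' := fun r f hf w hw => by
        simp only [Pi.smul_apply, hf w hw, smul_eq_mul, mul_zero] }
  let Z1 : Submodule ℝ (V → ℝ) :=
    { carrier := {f | ∀ w, ¬ (c w : Fin 2) = 0 → f w = 0}
      add_mem' := fun hf hg w hw => by
        simp only [Pi.add_apply, hf w hw, hg w hw, add_zero]
      zero_mem' := fun w _ => rfl
      smul_mem' := fun r f hf w hw => by
        simp only [Pi.smul_apply, hf w hw, smul_eq_mul, mul_zero] }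
  have hZ0 : S0 ≤ Z0 := by
    rw [hS0d, Submodule.span_le]
    rintro f ⟨x, hx, rfl⟩
    show ∀ w, (c w : Fin 2) = 0 → (G.adjMatrix ℝ) x w = 0
    exact fun w hw => hzero x w ((show (c x : Fin 2) = 0 from hx).trans hw.symm)
  have hZ1 : S1 ≤ Z1 := by
    rw [hS1d, Submodule.span_le]
    rintro f ⟨x, hx, rfl⟩
    show ∀ w, ¬ (c w : Fin 2) = 0 → (G.adjMatrix ℝ) x w = 0
    exact fun w hw => hzero x w ((htwo _ hx).trans (htwo _ hw).symm)
  have hinf : S0 ⊓ S1 = ⊥ := by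
    refine le_antisymm ?_ bot_le
    intro f hf
    obtain ⟨hf0, hf1⟩ := Submodule.mem_inf.1 hf
    have hf' : f = 0 := funext fun w => by
      by_cases hw : (c w : Fin 2) = 0
      · exact hZ0 hf0 w hw
      · exact hZ1 hf1 w hw
    rw [Submodule.mem_bot]
    exact hf'
  have hsum : Module.finrank ℝ S0 + Module.finrank ℝ S1 = 4 := by
    have hh := Submodule.finrank_sup_add_finrank_inf_eq S0 S1
    rw [hinf, finrank_bot, add_zero, h4] at hh
    exact hh.symm
  set M : Matrix V V ℝ :=
      Matrix.of (fun x w => if (c x : Fin 2) = 0 then (G.adjMatrix ℝ) x w else 0) with hMd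
  have hMrow0 : ∀ x, (c x : Fin 2) = 0 → M x = (G.adjMatrix ℝ) x := by
    intro x hx; funext w; simp [hMd, hx]
  have hMrow1 : ∀ x, ¬ (c x : Fin 2) = 0 → M x = 0 := by
    intro x hx; funext w; simp [hMd, hx]
  have hMcol0 : ∀ w, (c w : Fin 2) = 0 → Mᵀ w = 0 := by
    intro w hw; funext x
    by_cases hx : (c x : Fin 2) = 0
    · simp only [hMd, Matrix.transpose_apply, Matrix.of_apply, if_pos hx, Pi.zero_apply]
      exact hzero x w (hx.trans hw.symm)
    · simp only [hMd, Matrix.transpose_apply, Matrix.of_apply, if_neg hx, Pi.zero_apply]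
  have hMcol1 : ∀ w, ¬ (c w : Fin 2) = 0 → Mᵀ w = (G.adjMatrix ℝ) w := by
    intro w hw; funext x
    by_cases hx : (c x : Fin 2) = 0
    · simp only [hMd, Matrix.transpose_apply, Matrix.of_apply, if_pos hx]
      exact hsymm x w
    · simp only [hMd, Matrix.transpose_apply, Matrix.of_apply, if_neg hx]
      exact (hzero w x ((htwo _ hw).trans (htwo _ hx).symm)).symm
  have hrowspan : Submodule.span ℝ (Set.range M) = S0 := by
    apply le_antisymm
    · rw [Submodule.span_le]
      rintro f ⟨x, rfl⟩
      by_cases hx : (c x : Fin 2) = 0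
      · rw [hMrow0 x hx, hS0d]
        exact Submodule.subset_span ⟨x, hx, rfl⟩
      · rw [hMrow1 x hx]
        exact Submodule.zero_mem S0
    · rw [hS0d, Submodule.span_le]
      rintro f ⟨x, hx, rfl⟩
      show (G.adjMatrix ℝ) x ∈ (Submodule.span ℝ (Set.range M) : Set (V → ℝ))
      rw [← hMrow0 x hx]
      exact Submodule.subset_span ⟨x, rfl⟩
  have hcolspan : Submodule.span ℝ (Set.range Mᵀ) = S1 := by
    apply le_antisymm
    · rw [Submodule.span_le]
      rintro f ⟨w, rfl⟩
      by_cases hw : (c w : Fin 2) = 0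
      · rw [hMcol0 w hw]
        exact Submodule.zero_mem S1
      · rw [hMcol1 w hw, hS1d]
        exact Submodule.subset_span ⟨w, hw, rfl⟩
    · rw [hS1d, Submodule.span_le]
      rintro f ⟨w, hw, rfl⟩
      show (G.adjMatrix ℝ) w ∈ (Submodule.span ℝ (Set.range Mᵀ) : Set (V → ℝ))
      rw [← hMcol1 w hw]
      exact Submodule.subset_span ⟨w, rfl⟩
  have hfr01 : Module.finrank ℝ S0 = Module.finrank ℝ S1 := by
    have e1 : M.rank = Module.finrank ℝ S1 := by
      rw [Matrix.rank_eq_finrank_span_cols, Matrix.col, hcolspan]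
    have e0 : Mᵀ.rank = Module.finrank ℝ S0 := by
      rw [Matrix.rank_eq_finrank_span_cols, Matrix.col_transpose, Matrix.row, hrowspan]
    rw [← e0, ← e1, Matrix.rank_transpose]
  have hd0 : Module.finrank ℝ S0 = 2 := by omega
  have hex1 : ∃ x, (c x : Fin 2) = 0 ∧ (G.adjMatrix ℝ) x ≠ 0 := by
    by_contra h
    push_neg at h
    have hbb : S0 = ⊥ := by
      rw [hS0d, Submodule.span_eq_bot]
      rintro f ⟨x, hx, rfl⟩
      exact h x hx
    rw [hbb, finrank_bot] at hd0
    norm_num at hd0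
  obtain ⟨x₁, hx₁, ha0⟩ := hex1
  have hex2 : ∃ x, (c x : Fin 2) = 0 ∧
      (G.adjMatrix ℝ) x ∉ Submodule.span ℝ {(G.adjMatrix ℝ) x₁} := by
    by_contra h
    push_neg at h
    have hle : S0 ≤ Submodule.span ℝ {(G.adjMatrix ℝ) x₁} := by
      rw [hS0d, Submodule.span_le]
      rintro f ⟨x, hx, rfl⟩
      exact h x hx
    have h1' : Module.finrank ℝ (Submodule.span ℝ {(G.adjMatrix ℝ) x₁}) = 1 :=
      finrank_span_singleton ha0
    have hmo := Submodule.finrank_mono hle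
    rw [hd0, h1'] at hmo
    omega
  obtain ⟨x₂, hx₂, hb0⟩ := hex2
  have hbne : (G.adjMatrix ℝ) x₂ ≠ 0 := fun h =>
    hb0 (by rw [h]; exact Submodule.zero_mem _)
  have hind : LinearIndependent ℝ ![(G.adjMatrix ℝ) x₁, (G.adjMatrix ℝ) x₂] := by
    rw [linearIndependent_fin2]
    constructor
    · simpa using hbne
    · intro s hs
      simp only [Matrix.cons_val_one, Matrix.head_cons, Matrix.cons_val_zero] at hs
      have hs0 : s ≠ 0 := by
        intro h; rw [h, zero_smul] at hs; exact ha0 hs.symm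
      apply hb0
      rw [Submodule.mem_span_singleton]
      exact ⟨s⁻¹, by rw [← hs, smul_smul, inv_mul_cancel₀ hs0, one_smul]⟩
  have hrange2 : Set.range ![(G.adjMatrix ℝ) x₁, (G.adjMatrix ℝ) x₂] =
      {(G.adjMatrix ℝ) x₁, (G.adjMatrix ℝ) x₂} := by
    ext f
    simp only [Set.mem_range, Set.mem_insert_iff, Set.mem_singleton_iff, Fin.exists_fin_two,
      Matrix.cons_val_zero, Matrix.cons_val_one, Matrix.head_cons]
    constructor
    · rintro (rfl | rfl)
      · exact Or.inl rfl
      · exact Or.inr rfl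
    · rintro (rfl | rfl)
      · exact Or.inl rfl
      · exact Or.inr rfl
  have hfr2 : Module.finrank ℝ
      (Submodule.span ℝ {(G.adjMatrix ℝ) x₁, (G.adjMatrix ℝ) x₂}) = 2 := by
    rw [← hrange2, finrank_span_eq_card hind]
    simp
  have hS0ab : Submodule.span ℝ {(G.adjMatrix ℝ) x₁, (G.adjMatrix ℝ) x₂} = S0 := by
    apply Submodule.eq_of_le_of_finrank_le
    · rw [hS0d, Submodule.span_le]
      rintro f hf
      simp only [Set.mem_insert_iff, Set.mem_singleton_iff] at hf
      rcases hf with rfl | rfl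
      · exact Submodule.subset_span ⟨x₁, hx₁, rfl⟩
      · exact Submodule.subset_span ⟨x₂, hx₂, rfl⟩
    · rw [hd0, hfr2]
  have hmem : ∀ x, (c x : Fin 2) = 0 → ∃ s t : ℝ,
      ∀ y, (G.adjMatrix ℝ) x y = s * (G.adjMatrix ℝ) x₁ y + t * (G.adjMatrix ℝ) x₂ y := by
    intro x hx
    have hx' : (G.adjMatrix ℝ) x ∈
        Submodule.span ℝ {(G.adjMatrix ℝ) x₁, (G.adjMatrix ℝ) x₂} := by
      rw [hS0ab, hS0d]
      exact Submodule.subset_span ⟨x, hx, rfl⟩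
    obtain ⟨s, t, hst⟩ := Submodule.mem_span_pair.1 hx'
    refine ⟨s, t, fun y => ?_⟩
    have hy := congrFun hst y
    simpa [Pi.add_apply, Pi.smul_apply, smul_eq_mul] using hy.symm
  set a : V → ℝ := (G.adjMatrix ℝ) x₁ with had
  set b : V → ℝ := (G.adjMatrix ℝ) x₂ with hbd
  have ha01 : ∀ y, a y = 0 ∨ a y = 1 := fun y => h01 x₁ y
  have hb01 : ∀ y, b y = 0 ∨ b y = 1 := fun y => h01 x₂ y
  have hane : ∃ y, a y = 1 := by
    obtain ⟨y, hy⟩ := Function.ne_iff.1 ha0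
    simp only [Pi.zero_apply] at hy
    exact ⟨y, (ha01 y).resolve_left hy⟩
  have hbne1 : ∃ y, b y = 1 := by
    obtain ⟨y, hy⟩ := Function.ne_iff.1 hbne
    simp only [Pi.zero_apply] at hy
    exact ⟨y, (hb01 y).resolve_left hy⟩
  have habne : ∃ y, a y ≠ b y := by
    have hne : a ≠ b := fun h =>
      hb0 (by rw [← h]; exact Submodule.mem_span_singleton_self a)
    exact Function.ne_iff.1 hne
  by_cases hall : ∀ x, (c x : Fin 2) = 0 →
      (∀ y, (G.adjMatrix ℝ) x y = 0) ∨ (∀ y, (G.adjMatrix ℝ) x y = a y) ∨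
      (∀ y, (G.adjMatrix ℝ) x y = b y)
  · set u' : V → ℝ :=
      fun z => if (c z : Fin 2) = 0 ∧ (∀ y, (G.adjMatrix ℝ) z y = a y) then 1 else 0 with hu'd
    set v' : V → ℝ :=
      fun z => if (c z : Fin 2) = 0 ∧ (∀ y, (G.adjMatrix ℝ) z y = b y) then 1 else 0 with hv'd
    refine M2 G (fun w => if (c w : Fin 2) = 0 then 1 else 0) ?_ u' v' ?_ ?_ ?_ ?_ ?_ ?_
    · intro p q h
      have hpq := hκ p q h
      by_cases hp : (c p : Fin 2) = 0 <;> by_cases hq : (c q : Fin 2) = 0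
      · exact absurd (hp.trans hq.symm) hpq
      · simp [hp, hq]
      · simp [hp, hq]
      · exact absurd ((htwo _ hp).trans (htwo _ hq).symm) hpq
    · intro y; simp only [hu'd]; split_ifs <;> simp
    · intro y; simp only [hv'd]; split_ifs <;> simp
    · intro z
      by_cases h1 : (c z : Fin 2) = 0 ∧ (∀ y, (G.adjMatrix ℝ) z y = a y)
      · right
        simp only [hv'd]
        rw [if_neg]
        rintro ⟨-, h2⟩
        obtain ⟨y, hy⟩ := habne
        exact hy ((h1.2 y).symm.trans (h2 y))
      · left
        simp only [hu'd]
        rw [if_neg h1]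
    · exact ⟨x₁, by simp [hu'd, hx₁, had]⟩
    · exact ⟨x₂, by simp [hv'd, hx₂, hbd]⟩
    · intro w hw
      have hw' : ¬ (c w : Fin 2) = 0 := by
        intro h; simp [h] at hw
      refine ⟨a w, b w, fun z => ?_⟩
      by_cases hz : (c z : Fin 2) = 0
      · rcases hall z hz with h0 | hA | hB
        · have hu0 : u' z = 0 := by
            simp only [hu'd]; rw [if_neg]; rintro ⟨-, hp⟩
            obtain ⟨y, hy⟩ := hane
            have hc := (hp y).symm.trans (h0 y)
            rw [hy] at hc; norm_num at hc
          have hv0 : v' z = 0 := by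
            simp only [hv'd]; rw [if_neg]; rintro ⟨-, hp⟩
            obtain ⟨y, hy⟩ := hbne1
            have hc := (hp y).symm.trans (h0 y)
            rw [hy] at hc; norm_num at hc
          rw [hsymm w z, h0 w, hu0, hv0]; ring
        · have hu1 : u' z = 1 := by simp only [hu'd]; rw [if_pos ⟨hz, hA⟩]
          have hv0 : v' z = 0 := by
            simp only [hv'd]; rw [if_neg]; rintro ⟨-, hp⟩
            obtain ⟨y, hy⟩ := habne
            exact hy ((hA y).symm.trans (hp y))
          rw [hsymm w z, hA w, hu1, hv0]; ring
        · have hu0 : u' z = 0 := by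
            simp only [hu'd]; rw [if_neg]; rintro ⟨-, hp⟩
            obtain ⟨y, hy⟩ := habne
            exact hy ((hp y).symm.trans (hB y))
          have hv1 : v' z = 1 := by simp only [hv'd]; rw [if_pos ⟨hz, hB⟩]
          rw [hsymm w z, hB w, hu0, hv1]; ring
      · have h0 : (G.adjMatrix ℝ) w z = 0 := hzero w z ((htwo _ hw').trans (htwo _ hz).symm)
        have hu0 : u' z = 0 := by simp only [hu'd]; rw [if_neg (fun h => hz h.1)]
        have hv0 : v' z = 0 := by simp only [hv'd]; rw [if_neg (fun h => hz h.1)]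
        rw [h0, hu0, hv0]; ring
  · push_neg at hall
    obtain ⟨x₀, hx₀, ⟨y₀, hy₀⟩, hna, hnb⟩ := hall
    obtain ⟨s₀, t₀, hc0⟩ := hmem x₀ hx₀
    have hα : s₀ ≠ 0 := by
      intro h
      obtain ⟨yb, hyb⟩ := hbne1
      have hval : (G.adjMatrix ℝ) x₀ yb = t₀ := by rw [hc0 yb, h, hyb]; ring
      rcases h01 x₀ yb with h' | h' <;> rw [hval] at h'
      · exact hy₀ (by rw [hc0 y₀, h, h']; ring)
      · obtain ⟨y, hy⟩ := hnb
        exact hy (by rw [hc0 y, h, h']; ring)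
    have hβ : t₀ ≠ 0 := by
      intro h
      obtain ⟨ya, hya⟩ := hane
      have hval : (G.adjMatrix ℝ) x₀ ya = s₀ := by rw [hc0 ya, h, hya]; ring
      rcases h01 x₀ ya with h' | h' <;> rw [hval] at h'
      · exact hy₀ (by rw [hc0 y₀, h, h']; ring)
      · obtain ⟨y, hy⟩ := hna
        exact hy (by rw [hc0 y, h, h']; ring)
    have hwv : ∃ y, (G.adjMatrix ℝ) x₀ y = 1 := by
      refine ⟨y₀, ?_⟩
      rcases h01 x₀ y₀ with h' | h'
      · exact absurd h' hy₀
      · exact h'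
    by_cases hEab : ∃ y, a y = 1 ∧ b y = 1
    · obtain ⟨ys, hys1, hys2⟩ := hEab
      have hsum' : (G.adjMatrix ℝ) x₀ ys = s₀ + t₀ := by rw [hc0 ys, hys1, hys2]; ring
      by_cases hEa : ∃ y, a y = 1 ∧ b y = 0
      · obtain ⟨ya, hya1, hya2⟩ := hEa
        have hαval : (G.adjMatrix ℝ) x₀ ya = s₀ := by rw [hc0 ya, hya1, hya2]; ring
        have hα1 : s₀ = 1 := by
          rcases h01 x₀ ya with h' | h' <;> rw [hαval] at h'
          · exact absurd h' hα
          · exact h'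
        have hβm1 : t₀ = -1 := by
          rcases h01 x₀ ys with h' | h' <;> rw [hsum', hα1] at h'
          · linarith
          · exact absurd (by linarith) hβ
        have hveq : ∀ y, (G.adjMatrix ℝ) x₀ y = a y - b y := fun y => by
          rw [hc0 y, hα1, hβm1]; ring
        have hdisj' : ∀ y, b y = 0 ∨ (G.adjMatrix ℝ) x₀ y = 0 := by
          intro y
          rcases hb01 y with h' | h'
          · exact Or.inl h'
          · right
            rcases ha01 y with h'' | h''
            · exfalso
              have hv := hveq y
              rw [h', h''] at hv
              rcases h01 x₀ y with hh' | hh' <;> rw [hv] at hh' <;> norm_num at hh'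
            · rw [hveq y, h', h'']; ring
        refine M2 G (fun w => (c w : Fin 2)) hκ b ((G.adjMatrix ℝ) x₀) hb01 (h01 x₀)
          hdisj' hbne1 hwv ?_
        intro x hx
        obtain ⟨γ, δ, hγδ⟩ := hmem x hx
        exact ⟨γ + δ, γ, fun y => by rw [hγδ y, hveq y]; ring⟩
      · have hEb : ∃ y, a y = 0 ∧ b y = 1 := by
          by_contra hEb
          obtain ⟨y, hy⟩ := habne
          rcases ha01 y with h' | h' <;> rcases hb01 y with h'' | h''
          · exact hy (h'.trans h''.symm)
          · exact hEb ⟨y, h', h''⟩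
          · exact hEa ⟨y, h', h''⟩
          · exact hy (h'.trans h''.symm)
        obtain ⟨yb, hyb1, hyb2⟩ := hEb
        have hβval : (G.adjMatrix ℝ) x₀ yb = t₀ := by rw [hc0 yb, hyb1, hyb2]; ring
        have hβ1 : t₀ = 1 := by
          rcases h01 x₀ yb with h' | h' <;> rw [hβval] at h'
          · exact absurd h' hβ
          · exact h'
        have hαm1 : s₀ = -1 := by
          rcases h01 x₀ ys with h' | h' <;> rw [hsum', hβ1] at h'
          · linarith
          · exact absurd (by linarith) hα
        have hveq : ∀ y, (G.adjMatrix ℝ) x₀ y = b y - a y := fun y => by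
          rw [hc0 y, hβ1, hαm1]; ring
        have hdisj' : ∀ y, a y = 0 ∨ (G.adjMatrix ℝ) x₀ y = 0 := by
          intro y
          rcases ha01 y with h' | h'
          · exact Or.inl h'
          · right
            rcases hb01 y with h'' | h''
            · exfalso
              have hv := hveq y
              rw [h', h''] at hv
              rcases h01 x₀ y with hh' | hh' <;> rw [hv] at hh' <;> norm_num at hh'
            · rw [hveq y, h', h'']; ring
        refine M2 G (fun w => (c w : Fin 2)) hκ a ((G.adjMatrix ℝ) x₀) ha01 (h01 x₀)
          hdisj' hane hwv ?_
        intro x hx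
        obtain ⟨γ, δ, hγδ⟩ := hmem x hx
        exact ⟨γ + δ, δ, fun y => by rw [hγδ y, hveq y]; ring⟩
    · have hd : ∀ y, a y = 0 ∨ b y = 0 := by
        intro y
        rcases ha01 y with h' | h'
        · exact Or.inl h'
        · rcases hb01 y with h'' | h''
          · exact Or.inr h''
          · exact absurd (⟨y, h', h''⟩ : ∃ y, a y = 1 ∧ b y = 1) hEab
      exact M2 G (fun w => (c w : Fin 2)) hκ a b ha01 hb01 hd hane hbne1 hmem

/-- If `G` is a bipartite graph whose adjacency matrix has rank 4, then `G` is a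
blow-up of `2P₂ ∪ K₁`, `P₄ ∪ K₁`, or `P₅ ∪ K₁`. -/
theorem stmt_16 {V : Type*} [Fintype V] [DecidableEq V] (G : SimpleGraph V)
    [DecidableRel G.Adj] (hbip : G.Colorable 2)
    (hrk : (G.adjMatrix ℝ).rank = 4) :
    IsBlowupOf G twoP2K1 ∨ IsBlowupOf G p4K1 ∨ IsBlowupOf G p5K1 := by
  exact Or.inr (Or.inr (stmt_16' G hbip hrk))
end

section
/- (Stanley) If G is a graph with m edges, then its largest adjacency eigenvalue satisfies λ₁ ≤ (√(8m+1) − 1)/2. -/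
open Matrix Finset

/-- Stanley's key inequality, for an eigenvector whose max-absolute-value coordinate
is positive. -/
lemma stanley_key_pos {V : Type*} [Fintype V] [DecidableEq V] (G : SimpleGraph V)
    [DecidableRel G.Adj] (μ : ℝ) (x : V → ℝ) (v : V)
    (hmax : ∀ u, |x u| ≤ x v) (hpos : 0 < x v)
    (hμ : G.adjMatrix ℝ *ᵥ x = μ • x) :
    μ ^ 2 + μ ≤ 2 * G.edgeFinset.card := by
  have hxle : ∀ u, x u ≤ x v := fun u => (le_abs_self _).trans (hmax u)
  have h1 : μ * x v = ∑ u ∈ G.neighborFinset v, x u := by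
    have := congrFun hμ v
    rw [SimpleGraph.adjMatrix_mulVec_apply] at this
    simpa [mul_comm] using this.symm
  -- μ ≤ deg v
  have hdeg : μ * x v ≤ (G.degree v : ℝ) * x v := by
    rw [h1]
    calc ∑ u ∈ G.neighborFinset v, x u ≤ ∑ u ∈ G.neighborFinset v, x v :=
          Finset.sum_le_sum fun u _ => hxle u
      _ = (G.degree v : ℝ) * x v := by
          rw [Finset.sum_const, nsmul_eq_mul, SimpleGraph.card_neighborFinset_eq_degree]
  have hμd : μ ≤ (G.degree v : ℝ) := le_of_mul_le_mul_right hdeg hpos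
  -- μ² ≤ ∑_{j~v} deg j
  have h2 : μ ^ 2 * x v = ∑ u ∈ G.neighborFinset v, ∑ w ∈ G.neighborFinset u, x w := by
    have hμu : ∀ u, μ * x u = ∑ w ∈ G.neighborFinset u, x w := by
      intro u
      have := congrFun hμ u
      rw [SimpleGraph.adjMatrix_mulVec_apply] at this
      simpa [mul_comm] using this.symm
    calc μ ^ 2 * x v = μ * (μ * x v) := by ring
      _ = μ * ∑ u ∈ G.neighborFinset v, x u := by rw [h1]
      _ = ∑ u ∈ G.neighborFinset v, μ * x u := Finset.mul_sum _ _ _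
      _ = _ := Finset.sum_congr rfl fun u _ => hμu u
  have h3 : μ ^ 2 * x v ≤ (∑ u ∈ G.neighborFinset v, (G.degree u : ℝ)) * x v := by
    rw [h2, Finset.sum_mul]
    refine Finset.sum_le_sum fun u _ => ?_
    calc ∑ w ∈ G.neighborFinset u, x w ≤ ∑ w ∈ G.neighborFinset u, x v :=
          Finset.sum_le_sum fun w _ => hxle w
      _ = (G.degree u : ℝ) * x v := by
          rw [Finset.sum_const, nsmul_eq_mul, SimpleGraph.card_neighborFinset_eq_degree]
  have hμ2 : μ ^ 2 ≤ ∑ u ∈ G.neighborFinset v, (G.degree u : ℝ) :=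
    le_of_mul_le_mul_right h3 hpos
  -- ∑_{j~v} deg j ≤ 2m - deg v
  have hsum : (∑ u ∈ G.neighborFinset v, (G.degree u : ℝ)) + (G.degree v : ℝ)
      ≤ 2 * G.edgeFinset.card := by
    have hv : v ∉ G.neighborFinset v := by simp
    have hsub : G.neighborFinset v ⊆ Finset.univ.erase v := by
      intro u hu
      simp only [Finset.mem_erase, Finset.mem_univ, and_true]
      intro h; subst h; exact hv hu
    have hle : (∑ u ∈ G.neighborFinset v, (G.degree u : ℝ)) ≤
        ∑ u ∈ Finset.univ.erase v, (G.degree u : ℝ) :=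
      Finset.sum_le_sum_of_subset_of_nonneg hsub (by intros; positivity)
    have htot : (∑ u ∈ Finset.univ.erase v, (G.degree u : ℝ)) + (G.degree v : ℝ)
        = 2 * G.edgeFinset.card := by
      rw [Finset.sum_erase_add _ _ (Finset.mem_univ v)]
      exact_mod_cast congrArg (Nat.cast : ℕ → ℝ) G.sum_degrees_eq_twice_card_edges
    linarith
  linarith

/-- Stanley's key inequality for any real eigenvalue of the adjacency matrix. -/
lemma stanley_key {V : Type*} [Fintype V] [DecidableEq V] (G : SimpleGraph V)
    [DecidableRel G.Adj] (μ : ℝ) (x : V → ℝ) (hx : x ≠ 0)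
    (hμ : G.adjMatrix ℝ *ᵥ x = μ • x) :
    μ ^ 2 + μ ≤ 2 * G.edgeFinset.card := by
  obtain ⟨u₀, hu₀⟩ : ∃ u, x u ≠ 0 := by
    by_contra h; push_neg at h; exact hx (funext h)
  obtain ⟨v, -, hmax⟩ := Finset.exists_max_image Finset.univ (fun u => |x u|)
    ⟨u₀, Finset.mem_univ u₀⟩
  have hmax' : ∀ u, |x u| ≤ |x v| := fun u => hmax u (Finset.mem_univ u)
  have hvpos : 0 < |x v| := lt_of_lt_of_le (abs_pos.mpr hu₀) (hmax' u₀)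
  rcases lt_or_ge 0 (x v) with hpos | hneg
  · exact stanley_key_pos G μ x v (fun u => (hmax' u).trans_eq (abs_of_pos hpos)) hpos hμ
  · have hvne : x v ≠ 0 := fun h => by simp [h] at hvpos
    have hneg' : 0 < -x v := by
      rcases hneg.lt_or_eq with h | h
      · linarith
      · exact absurd h.symm hvne.symm
    refine stanley_key_pos G μ (-x) v (fun u => ?_) (by simpa using hneg') ?_
    · simpa using (hmax' u).trans_eq (abs_of_neg (by linarith))
    · rw [mulVec_neg, hμ, smul_neg]

/-- (Stanley) If `G` has `m` edges, then `λ₁ ≤ (√(8m+1) - 1)/2`. -/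
theorem stmt_18 {V : Type*} [Fintype V] [DecidableEq V] (G : SimpleGraph V)
    [DecidableRel G.Adj] :
    kthEig G 0 ≤ (Real.sqrt (8 * (G.edgeFinset.card : ℝ) + 1) - 1) / 2 := by
  set m : ℝ := (G.edgeFinset.card : ℝ) with hm
  have hm0 : 0 ≤ m := Nat.cast_nonneg _
  have hs1 : 1 ≤ Real.sqrt (8 * m + 1) := by
    nlinarith [Real.sq_sqrt (show (0:ℝ) ≤ 8 * m + 1 by linarith),
      Real.sqrt_nonneg (8 * m + 1)]
  unfold kthEig
  split_ifs with h
  · set μ := adjEig G (Tuple.sort (adjEig G) (Fin.rev ⟨0, h⟩)) with hμdef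
    have hA := adjMatrix_isHermitian G
    -- μ is an eigenvalue of the adjacency matrix
    obtain ⟨i, hi⟩ : ∃ i : V, hA.eigenvalues i = μ :=
      ⟨(Fintype.equivFin V).symm (Tuple.sort (adjEig G) (Fin.rev ⟨0, h⟩)), rfl⟩
    have hvec := hA.mulVec_eigenvectorBasis i
    have hne : (hA.eigenvectorBasis i : V → ℝ) ≠ 0 := by
      have := hA.eigenvectorBasis.orthonormal.ne_zero i
      intro hz
      apply this
      ext u
      exact congrFun hz u
    have key := stanley_key G μ (hA.eigenvectorBasis i) hne (by rw [← hi]; exact hvec)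
    -- conclude
    rcases le_or_gt μ 0 with hμ0 | hμ0
    · linarith
    · have hsq := Real.sq_sqrt (show (0:ℝ) ≤ 8 * m + 1 by linarith)
      nlinarith [Real.sqrt_nonneg (8 * m + 1), key, hμ0]
  · linarith
end
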